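/- arXiv:1409.1024 — 7 statements merged into one kernel-verified Lean document; each statement's English description precedes it below -/
import Mathlib

section
/- Let f be continuous with xf(x)>0 for x≠0, f asymptotic at 0 to an odd increasing C¹ function φ which is regularly varying at 0 of index β>1. Let F(x)=∫_x^1 du/f(u) and Φ(x)=∫_x^1 du/φ(u) for x>0. Then lim_{x→0⁺} Φ(x)/F(x)=1 and lim_{t→∞} Φ⁻¹(t)/F⁻¹(t)=1. -/
/-!
The first limit is `1 / f ~ 1 / φ` integrated: since `Φ → ∞` at `0⁺`, the integral over any
fixed `[δ, 1]` is negligible.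

For the inverses, regular variation with index `β > 1` gives `φ (2x) ≥ K φ x` near `0` for some
`K > 2`, whence `Φ x = O(x / φ x)`. Together with `Φ x - Φ (l x) ≥ (l - 1) x / φ (l x)` this shows
`Φ (l x) ≤ c Φ x` for some `c < 1` whenever `l > 1`. Hence `Φ (Φ⁻¹ t) / Φ (F⁻¹ t) → 1` forces
`Φ⁻¹ t / F⁻¹ t → 1`, and `Φ (Φ⁻¹ t) = t = F (F⁻¹ t)` reduces that ratio to the first limit.
-/

open Real Filter MeasureTheory Set Topology Asymptotics

theorem MeasureTheory.LocallyIntegrableOn.intervalIntegrable_of_pos {E : Type*}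
    [NormedAddCommGroup E] {u : ℝ → E} (hu : LocallyIntegrableOn u (Ioi 0)) {a b : ℝ}
    (ha : 0 < a) (hb : 0 < b) : IntervalIntegrable u volume a b :=
  (hu.integrableOn_compact_subset (fun _ hx => (lt_min ha hb).trans_le hx.1)
    isCompact_uIcc).intervalIntegrable

theorem MeasureTheory.LocallyIntegrableOn.integral_add_adjacent_intervals_of_pos {E : Type*}
    [NormedAddCommGroup E] [NormedSpace ℝ E] {u : ℝ → E} (hu : LocallyIntegrableOn u (Ioi 0))
    {a b c : ℝ} (ha : 0 < a) (hb : 0 < b) (hc : 0 < c) :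
    (∫ t in a..b, u t) + ∫ t in b..c, u t = ∫ t in a..c, u t :=
  intervalIntegral.integral_add_adjacent_intervals (hu.intervalIntegrable_of_pos ha hb)
    (hu.intervalIntegrable_of_pos hb hc)

theorem isLittleO_integral_nhdsGT_of_isLittleO {E : Type*} [NormedAddCommGroup E]
    [NormedSpace ℝ E] {u : ℝ → E} {v : ℝ → ℝ}
    (hu : LocallyIntegrableOn u (Ioi 0)) (hv : LocallyIntegrableOn v (Ioi 0))
    (hv0 : ∀ x, 0 < x → 0 ≤ v x)
    (htop : Tendsto (fun x => ∫ t in x..1, v t) (𝓝[>] 0) atTop)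
    (huv : u =o[𝓝[>] 0] v) :
    (fun x => ∫ t in x..1, u t) =o[𝓝[>] 0] fun x => ∫ t in x..1, v t := by
  refine isLittleO_iff.2 fun ε hε => ?_
  obtain ⟨δ, hδ, hsmall⟩ := mem_nhdsGT_iff_exists_Ioc_subset.1 (huv.def (half_pos hε))
  filter_upwards [Ioo_mem_nhdsGT hδ, (htop.const_mul_atTop (half_pos hε)).eventually_ge_atTop
    (‖∫ t in δ..1, u t‖ - ε / 2 * ∫ t in δ..1, v t)] with x hx hfar
  have hnear : ‖∫ t in x..δ, u t‖ ≤ ε / 2 * ∫ t in x..δ, v t := by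
    rw [← intervalIntegral.integral_const_mul]
    refine intervalIntegral.norm_integral_le_of_norm_le hx.2.le
      (ae_of_all _ fun t ht => ?_) ((hv.intervalIntegrable_of_pos hx.1 hδ).const_mul _)
    have ht0 : 0 < t := hx.1.trans ht.1
    simpa [abs_of_nonneg (hv0 t ht0)] using hsmall ⟨ht0, ht.2⟩
  have hvsplit := hv.integral_add_adjacent_intervals_of_pos hx.1 hδ one_pos
  calc ‖∫ t in x..1, u t‖ ≤ ‖∫ t in x..δ, u t‖ + ‖∫ t in δ..1, u t‖ := by
        rw [← hu.integral_add_adjacent_intervals_of_pos hx.1 hδ one_pos]; exact norm_add_le _ _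
    _ ≤ ε * ∫ t in x..1, v t := by linear_combination hnear + hfar + ε / 2 * hvsplit
    _ ≤ ε * ‖∫ t in x..1, v t‖ := by gcongr; exact le_abs_self _

theorem isEquivalent_integral_nhdsGT {u v : ℝ → ℝ}
    (hu : LocallyIntegrableOn u (Ioi 0)) (hv : LocallyIntegrableOn v (Ioi 0))
    (hv0 : ∀ x, 0 < x → 0 ≤ v x)
    (htop : Tendsto (fun x => ∫ t in x..1, v t) (𝓝[>] 0) atTop)
    (huv : u ~[𝓝[>] 0] v) :
    (fun x => ∫ t in x..1, u t) ~[𝓝[>] 0] fun x => ∫ t in x..1, v t := by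
  refine (isLittleO_integral_nhdsGT_of_isLittleO (hu.sub hv) hv hv0 htop huv).congr' ?_
    EventuallyEq.rfl
  filter_upwards [self_mem_nhdsWithin] with x hx
  exact intervalIntegral.integral_sub (hu.intervalIntegrable_of_pos hx one_pos)
    (hv.intervalIntegrable_of_pos hx one_pos)

section PositiveMonotone

variable {φ : ℝ → ℝ}

theorem locallyIntegrableOn_one_div_of_monotoneOn (hpos : ∀ x, 0 < x → 0 < φ x)
    (hmono : MonotoneOn φ (Ioi 0)) : LocallyIntegrableOn (fun u => 1 / φ u) (Ioi 0) :=
  (locallyIntegrableOn_iff isOpen_Ioi.isLocallyClosed).2 fun _ hk hkc =>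
    AntitoneOn.integrableOn_isCompact hkc fun _ hx _ hy hxy =>
      one_div_le_one_div_of_le (hpos _ (hk hx)) (hmono (hk hx) (hk hy) hxy)

theorem integral_one_div_le_of_monotoneOn (hpos : ∀ x, 0 < x → 0 < φ x)
    (hmono : MonotoneOn φ (Ioi 0)) {a b : ℝ} (ha : 0 < a) (hab : a ≤ b) :
    ∫ u in a..b, 1 / φ u ≤ (b - a) / φ a := by
  have hb : 0 < b := ha.trans_le hab
  calc ∫ u in a..b, 1 / φ u ≤ ∫ _ in a..b, 1 / φ a :=
        intervalIntegral.integral_mono_on hab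
          ((locallyIntegrableOn_one_div_of_monotoneOn hpos hmono).intervalIntegrable_of_pos ha hb)
          intervalIntegrable_const fun u hu =>
            one_div_le_one_div_of_le (hpos a ha) (hmono ha (ha.trans_le hu.1) hu.1)
    _ = (b - a) / φ a := by rw [intervalIntegral.integral_const, smul_eq_mul, mul_one_div]

theorem div_le_integral_one_div_of_monotoneOn (hpos : ∀ x, 0 < x → 0 < φ x)
    (hmono : MonotoneOn φ (Ioi 0)) {a b : ℝ} (ha : 0 < a) (hab : a ≤ b) :
    (b - a) / φ b ≤ ∫ u in a..b, 1 / φ u := by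
  have hb : 0 < b := ha.trans_le hab
  calc (b - a) / φ b = ∫ _ in a..b, 1 / φ b := by
        rw [intervalIntegral.integral_const, smul_eq_mul, mul_one_div]
    _ ≤ ∫ u in a..b, 1 / φ u :=
        intervalIntegral.integral_mono_on hab intervalIntegrable_const
          ((locallyIntegrableOn_one_div_of_monotoneOn hpos hmono).intervalIntegrable_of_pos ha hb)
          fun u hu => one_div_le_one_div_of_le (hpos u (ha.trans_le hu.1))
            (hmono (ha.trans_le hu.1) hb hu.2)

/-- The paper's `F` and `Φ` are `invIntegral f` and `invIntegral φ`. -/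
noncomputable def invIntegral (g : ℝ → ℝ) (x : ℝ) : ℝ := ∫ u in x..1, 1 / g u

theorem antitoneOn_invIntegral (hpos : ∀ x, 0 < x → 0 < φ x)
    (hmono : MonotoneOn φ (Ioi 0)) : AntitoneOn (invIntegral φ) (Ioi 0) := by
  intro a ha b hb hab
  have hsplit := (locallyIntegrableOn_one_div_of_monotoneOn hpos hmono
    ).integral_add_adjacent_intervals_of_pos ha hb one_pos
  have hnonneg : 0 ≤ (b - a) / φ b := div_nonneg (sub_nonneg.2 hab) (hpos b hb).le
  have := div_le_integral_one_div_of_monotoneOn hpos hmono ha hab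
  simp only [invIntegral]
  linarith

theorem integral_one_div_two_mul_le_of_doubling (hpos : ∀ x, 0 < x → 0 < φ x)
    (hmono : MonotoneOn φ (Ioi 0)) {K δ : ℝ} (hK : 0 < K)
    (hdouble : ∀ v ∈ Ioc 0 δ, K * φ v ≤ φ (2 * v)) {y : ℝ} (hy : 0 < y) (hyδ : y ≤ δ) :
    ∫ u in 2 * y..2 * δ, 1 / φ u ≤ 2 / K * ∫ u in y..δ, 1 / φ u := by
  have hδ : 0 < δ := hy.trans_le hyδ
  have hint₂ : LocallyIntegrableOn (fun v => 1 / φ (2 * v)) (Ioi 0) :=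
    locallyIntegrableOn_one_div_of_monotoneOn (fun x hx => hpos _ (by positivity))
      fun a ha b hb hab => hmono (by simpa using ha) (by simpa using hb) (by linarith)
  rw [← intervalIntegral.smul_integral_comp_mul_left, smul_eq_mul]
  calc 2 * ∫ v in y..δ, 1 / φ (2 * v) ≤ 2 * ∫ v in y..δ, K⁻¹ * (1 / φ v) := by
        gcongr
        refine intervalIntegral.integral_mono_on hyδ (hint₂.intervalIntegrable_of_pos hy hδ)
          (((locallyIntegrableOn_one_div_of_monotoneOn hpos hmono).intervalIntegrable_of_pos
            hy hδ).const_mul _) fun v hv => ?_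
        have hv0 : 0 < v := hy.trans_le hv.1
        calc 1 / φ (2 * v) ≤ 1 / (K * φ v) :=
              one_div_le_one_div_of_le (by have := hpos v hv0; positivity)
                (hdouble v ⟨hv0, hv.2⟩)
          _ = K⁻¹ * (1 / φ v) := by ring
    _ = 2 / K * ∫ u in y..δ, 1 / φ u := by rw [intervalIntegral.integral_const_mul]; ring

/-- With `J = ∫_y^{2δ} 1/φ`, splitting at `2y` and rescaling gives `J ≤ y / φ y + (2 / K) J`. -/
theorem integral_one_div_le_of_doubling (hpos : ∀ x, 0 < x → 0 < φ x)
    (hmono : MonotoneOn φ (Ioi 0)) {K δ : ℝ} (hK : 2 < K)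
    (hdouble : ∀ v ∈ Ioc 0 δ, K * φ v ≤ φ (2 * v)) {y : ℝ} (hy : 0 < y) (hyδ : y ≤ δ) :
    ∫ u in y..2 * δ, 1 / φ u ≤ K / (K - 2) * (y / φ y) := by
  have hδ : 0 < δ := hy.trans_le hyδ
  have hK0 : 0 < K := by linarith
  have hint := locallyIntegrableOn_one_div_of_monotoneOn hpos hmono
  have hscaled := integral_one_div_two_mul_le_of_doubling hpos hmono hK0 hdouble hy hyδ
  have hhead := integral_one_div_le_of_monotoneOn hpos hmono hy (by linarith : y ≤ 2 * y)
  rw [show 2 * y - y = y by ring] at hhead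
  have htail : 0 ≤ ∫ u in δ..2 * δ, 1 / φ u :=
    intervalIntegral.integral_nonneg (by linarith) fun u hu =>
      (one_div_pos.2 (hpos u (hδ.trans_le hu.1))).le
  have hsplit₁ := hint.integral_add_adjacent_intervals_of_pos hy hδ (by positivity : 0 < 2 * δ)
  have hsplit₂ := hint.integral_add_adjacent_intervals_of_pos hy (by positivity : 0 < 2 * y)
    (by positivity : 0 < 2 * δ)
  have hKJ : K * ∫ u in y..2 * δ, 1 / φ u ≤ K * (y / φ y) + 2 * ∫ u in y..2 * δ, 1 / φ u := by
    have hscaledK := mul_le_mul_of_nonneg_left hscaled hK0.le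
    rw [← mul_assoc, mul_div_cancel₀ _ hK0.ne'] at hscaledK
    nlinarith [mul_le_mul_of_nonneg_left hhead hK0.le]
  rw [div_mul_eq_mul_div, le_div_iff₀ (by linarith)]
  linarith

theorem isBigO_invIntegral_of_doubling (hpos : ∀ x, 0 < x → 0 < φ x)
    (hmono : MonotoneOn φ (Ioi 0)) {K : ℝ} (hK : 2 < K)
    (hdouble : ∀ᶠ x in 𝓝[>] 0, K * φ x ≤ φ (2 * x))
    (htop : Tendsto (invIntegral φ) (𝓝[>] 0) atTop) :
    invIntegral φ =O[𝓝[>] 0] fun x => x / φ x := by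
  obtain ⟨δ, hδ : 0 < δ, hdδ⟩ := mem_nhdsGT_iff_exists_Ioc_subset.1 hdouble
  refine IsBigO.of_bound (2 * (K / (K - 2))) ?_
  filter_upwards [Ioc_mem_nhdsGT hδ, htop.eventually_ge_atTop (2 * invIntegral φ (2 * δ)),
    htop.eventually_ge_atTop 0] with x hx hfar hnonneg
  have hsplit := (locallyIntegrableOn_one_div_of_monotoneOn hpos hmono
    ).integral_add_adjacent_intervals_of_pos hx.1 (by positivity : 0 < 2 * δ) one_pos
  have hnear := integral_one_div_le_of_doubling hpos hmono hK (fun v hv => hdδ hv) hx.1 hx.2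
  rw [Real.norm_of_nonneg hnonneg, Real.norm_of_nonneg (div_pos hx.1 (hpos x hx.1)).le]
  simp only [invIntegral] at *
  linarith

theorem invIntegral_mul_le_of_isBigO (hpos : ∀ x, 0 < x → 0 < φ x)
    (hmono : MonotoneOn φ (Ioi 0)) (hO : invIntegral φ =O[𝓝[>] 0] fun x => x / φ x)
    {l : ℝ} (hl : 1 < l) (hφl : (fun x => φ (l * x)) =O[𝓝[>] 0] φ) :
    ∃ c < 1, ∀ᶠ x in 𝓝[>] 0, invIntegral φ (l * x) ≤ c * invIntegral φ x := by
  obtain ⟨C, hC, hCbound⟩ := hO.exists_pos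
  obtain ⟨M, hM, hMbound⟩ := hφl.exists_pos
  have hgain : 0 < (l - 1) / (M * C) := div_pos (sub_pos.2 hl) (mul_pos hM hC)
  refine ⟨1 - (l - 1) / (M * C), by linarith, ?_⟩
  filter_upwards [hCbound.bound, hMbound.bound, self_mem_nhdsWithin]
    with x hΦx hφlx (hx : 0 < x)
  have hlx : 0 < l * x := by positivity
  rw [Real.norm_of_nonneg (hpos _ hlx).le, Real.norm_of_nonneg (hpos x hx).le] at hφlx
  rw [Real.norm_of_nonneg (div_pos hx (hpos x hx)).le, Real.norm_eq_abs] at hΦx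
  have hsplit := (locallyIntegrableOn_one_div_of_monotoneOn hpos hmono
    ).integral_add_adjacent_intervals_of_pos hx hlx one_pos
  have hstep : (l - 1) / (M * C) * invIntegral φ x ≤ ∫ u in x..l * x, 1 / φ u :=
    calc (l - 1) / (M * C) * invIntegral φ x ≤ (l - 1) / (M * C) * (C * (x / φ x)) :=
          mul_le_mul_of_nonneg_left ((le_abs_self _).trans hΦx) hgain.le
      _ = (l * x - x) / (M * φ x) := by field_simp
      _ ≤ (l * x - x) / φ (l * x) :=
          div_le_div_of_nonneg_left (by nlinarith) (hpos _ hlx) hφlx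
      _ ≤ ∫ u in x..l * x, 1 / φ u :=
          div_le_integral_one_div_of_monotoneOn hpos hmono hx (by nlinarith)
  simp only [invIntegral] at *
  linarith

end PositiveMonotone

def IsRegularlyVaryingAtZero (φ : ℝ → ℝ) (β : ℝ) : Prop :=
  ∀ l : ℝ, 0 < l → Tendsto (fun x => φ (l * x) / φ x) (𝓝[>] 0) (𝓝 (l ^ β))

namespace IsRegularlyVaryingAtZero

variable {φ : ℝ → ℝ} {β : ℝ}

theorem eventually_mul_le_comp_two_mul (h : IsRegularlyVaryingAtZero φ β)
    (hpos : ∀ x, 0 < x → 0 < φ x) {K : ℝ} (hK : K < 2 ^ β) :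
    ∀ᶠ x in 𝓝[>] 0, K * φ x ≤ φ (2 * x) := by
  filter_upwards [(h 2 two_pos).eventually (eventually_gt_nhds hK), self_mem_nhdsWithin]
    with x hx (hx0 : 0 < x)
  exact ((lt_div_iff₀ (hpos x hx0)).1 hx).le

theorem isBigO_comp_mul (h : IsRegularlyVaryingAtZero φ β) (hpos : ∀ x, 0 < x → 0 < φ x)
    {l : ℝ} (hl : 0 < l) : (fun x => φ (l * x)) =O[𝓝[>] 0] φ :=
  isBigO_of_div_tendsto_nhds (eventually_nhdsWithin_of_forall fun x hx h0 =>
    absurd h0 (hpos x hx).ne') _ (h l hl)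

theorem invIntegral_mul_le (h : IsRegularlyVaryingAtZero φ β) (hβ : 1 < β)
    (hpos : ∀ x, 0 < x → 0 < φ x) (hmono : MonotoneOn φ (Ioi 0))
    (htop : Tendsto (invIntegral φ) (𝓝[>] 0) atTop) {l : ℝ} (hl : 1 < l) :
    ∃ c < 1, ∀ᶠ x in 𝓝[>] 0, invIntegral φ (l * x) ≤ c * invIntegral φ x := by
  obtain ⟨K, hK2, hKβ⟩ : ∃ K, 2 < K ∧ K < (2 : ℝ) ^ β :=
    exists_between (by simpa using rpow_lt_rpow_of_exponent_lt one_lt_two hβ)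
  exact invIntegral_mul_le_of_isBigO hpos hmono
    (isBigO_invIntegral_of_doubling hpos hmono hK2 (h.eventually_mul_le_comp_two_mul hpos hKβ)
      htop) hl (h.isBigO_comp_mul hpos (by linarith))

end IsRegularlyVaryingAtZero

section Inversion

variable {α : Type*} {L : Filter α} {a b : α → ℝ}

theorem tendsto_div_nhds_one_of_eventually_le_mul (ha : ∀ᶠ t in L, 0 < a t)
    (hb : ∀ᶠ t in L, 0 < b t) (hab : ∀ l > 1, ∀ᶠ t in L, a t ≤ l * b t)
    (hba : ∀ l > 1, ∀ᶠ t in L, b t ≤ l * a t) : Tendsto (fun t => a t / b t) L (𝓝 1) := by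
  refine tendsto_order.2 ⟨fun u hu => ?_, fun u hu => ?_⟩
  · obtain ⟨m, hum, hm1⟩ := exists_between (max_lt hu one_pos)
    have hm : 0 < m := (le_max_right u 0).trans_lt hum
    filter_upwards [ha, hb, hba m⁻¹ (one_lt_inv₀ hm |>.2 hm1)] with t hat hbt hle
    rw [lt_div_iff₀ hbt]
    calc u * b t < m * b t := mul_lt_mul_of_pos_right ((le_max_left u 0).trans_lt hum) hbt
      _ ≤ a t := (le_inv_mul_iff₀ hm).1 hle
  · obtain ⟨m, hm1, hmu⟩ := exists_between hu
    filter_upwards [hb, hab m hm1] with t hbt hle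
    rw [div_lt_iff₀ hbt]
    exact hle.trans_lt (mul_lt_mul_of_pos_right hmu hbt)

variable {Φ : ℝ → ℝ}

theorem AntitoneOn.eventually_le_mul_of_tendsto_div_comp (hanti : AntitoneOn Φ (Ioi 0))
    (hpos : ∀ᶠ x in 𝓝[>] 0, 0 < Φ x) {l c : ℝ} (hl : 0 < l) (hc : c < 1)
    (hgap : ∀ᶠ x in 𝓝[>] 0, Φ (l * x) ≤ c * Φ x) (ha : Tendsto a L (𝓝[>] 0))
    (hb : Tendsto b L (𝓝[>] 0)) (hab : Tendsto (fun t => Φ (a t) / Φ (b t)) L (𝓝 1)) :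
    ∀ᶠ t in L, a t ≤ l * b t := by
  filter_upwards [ha.eventually self_mem_nhdsWithin, hb.eventually self_mem_nhdsWithin,
    hb.eventually hgap, hb.eventually hpos, hab.eventually (eventually_gt_nhds hc)]
    with t (hat : 0 < a t) (hbt : 0 < b t) hgapt hΦb hratio
  by_contra! hlt
  have := (hanti (mul_pos hl hbt) hat hlt.le).trans hgapt
  rw [lt_div_iff₀ hΦb] at hratio
  linarith

theorem AntitoneOn.tendsto_div_of_tendsto_div_comp (hanti : AntitoneOn Φ (Ioi 0))
    (hpos : ∀ᶠ x in 𝓝[>] 0, 0 < Φ x)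
    (hgap : ∀ l > 1, ∃ c < 1, ∀ᶠ x in 𝓝[>] 0, Φ (l * x) ≤ c * Φ x)
    (ha : Tendsto a L (𝓝[>] 0)) (hb : Tendsto b L (𝓝[>] 0))
    (hab : Tendsto (fun t => Φ (a t) / Φ (b t)) L (𝓝 1)) :
    Tendsto (fun t => a t / b t) L (𝓝 1) := by
  have hba : Tendsto (fun t => Φ (b t) / Φ (a t)) L (𝓝 1) := by
    simpa using hab.inv₀ one_ne_zero
  refine tendsto_div_nhds_one_of_eventually_le_mul (ha.eventually self_mem_nhdsWithin)
    (hb.eventually self_mem_nhdsWithin) (fun l hl => ?_) (fun l hl => ?_)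
  · obtain ⟨c, hc, hgapl⟩ := hgap l hl
    exact hanti.eventually_le_mul_of_tendsto_div_comp hpos (by linarith) hc hgapl ha hb hab
  · obtain ⟨c, hc, hgapl⟩ := hgap l hl
    exact hanti.eventually_le_mul_of_tendsto_div_comp hpos (by linarith) hc hgapl hb ha hba

theorem AntitoneOn.tendsto_atTop_nhdsGT_zero (hanti : AntitoneOn Φ (Ioi 0)) {ψ : ℝ → ℝ}
    (hψpos : ∀ᶠ t in atTop, 0 < ψ t) (hψ : ∀ᶠ t in atTop, Φ (ψ t) = t) :
    Tendsto Φ (𝓝[>] 0) atTop := by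
  refine tendsto_atTop.2 fun M => ?_
  obtain ⟨t, ⟨htpos, hΦt⟩, hMt⟩ := ((hψpos.and hψ).and (eventually_ge_atTop M)).exists
  filter_upwards [Ioc_mem_nhdsGT htpos] with x hx
  calc M ≤ t := hMt
    _ = Φ (ψ t) := hΦt.symm
    _ ≤ Φ x := hanti hx.1 htpos hx.2

end Inversion

theorem stmt2_general (f φ : ℝ → ℝ) (β : ℝ) (hβ : 1 < β)
    (hfc : Continuous f) (hsign : ∀ x ≠ 0, 0 < x * f x)
    (hφodd : ∀ x, φ (-x) = -φ x) (hφmono : StrictMono φ)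
    (hφrv : ∀ l : ℝ, 0 < l →
      Tendsto (fun x => φ (l * x) / φ x) (𝓝[>] 0) (𝓝 (l ^ β)))
    (hasym : Tendsto (fun x => f x / φ x) (𝓝[≠] 0) (𝓝 1))
    (Finv Φinv : ℝ → ℝ)
    (hFinv_pos : ∀ᶠ t in atTop, 0 < Finv t)
    (hFinv : ∀ᶠ t in atTop, (∫ u in Finv t..1, 1 / f u) = t)
    (hFinv0 : Tendsto Finv atTop (𝓝 0))
    (hΦinv_pos : ∀ᶠ t in atTop, 0 < Φinv t)
    (hΦinv : ∀ᶠ t in atTop, (∫ u in Φinv t..1, 1 / φ u) = t)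
    (hΦinv0 : Tendsto Φinv atTop (𝓝 0)) :
    Tendsto (fun x => (∫ u in x..1, 1 / φ u) / (∫ u in x..1, 1 / f u))
      (𝓝[>] 0) (𝓝 1) ∧
    Tendsto (fun t => Φinv t / Finv t) atTop (𝓝 1) := by
  have hφpos : ∀ x, 0 < x → 0 < φ x := fun x hx => by
    have hφ0 : φ 0 = 0 := by linarith [hφodd 0, congrArg φ neg_zero]
    exact hφ0 ▸ hφmono hx
  have hfpos : ∀ x, 0 < x → 0 < f x := fun x hx => pos_of_mul_pos_right (hsign x hx.ne') hx.le
  have hφmonoOn : MonotoneOn φ (Ioi 0) := hφmono.monotone.monotoneOn _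
  have hΦanti := antitoneOn_invIntegral hφpos hφmonoOn
  have hΦtop : Tendsto (invIntegral φ) (𝓝[>] 0) atTop :=
    hΦanti.tendsto_atTop_nhdsGT_zero hΦinv_pos hΦinv
  have hFΦ : invIntegral f ~[𝓝[>] 0] invIntegral φ := by
    have hfφ : f ~[𝓝[>] 0] φ := isEquivalent_of_tendsto_one
      (hasym.mono_left (nhdsWithin_mono 0 fun _ hx => ne_of_gt hx))
    refine isEquivalent_integral_nhdsGT
      ((continuousOn_const.div hfc.continuousOn fun x hx => (hfpos x hx).ne').locallyIntegrableOn
        measurableSet_Ioi)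
      (locallyIntegrableOn_one_div_of_monotoneOn hφpos hφmonoOn)
      (fun x hx => (one_div_pos.2 (hφpos x hx)).le) hΦtop ?_
    simp only [one_div]
    exact hfφ.inv
  have hFinvT : Tendsto Finv atTop (𝓝[>] 0) := tendsto_nhdsWithin_iff.2 ⟨hFinv0, hFinv_pos⟩
  have hΦinvT : Tendsto Φinv atTop (𝓝[>] 0) := tendsto_nhdsWithin_iff.2 ⟨hΦinv0, hΦinv_pos⟩
  refine ⟨(isEquivalent_iff_tendsto_one ((hFΦ.symm.tendsto_atTop hΦtop).eventually_ne_atTop 0)).1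
    hFΦ.symm, ?_⟩
  have hratio : Tendsto (fun t => invIntegral φ (Φinv t) / invIntegral φ (Finv t)) atTop (𝓝 1) := by
    -- `Φ (Φinv t) = t = F (Finv t)`, so this is `F / Φ → 1` along `Finv`
    refine (((isEquivalent_iff_tendsto_one (hΦtop.eventually_ne_atTop 0)).1 hFΦ).comp
      hFinvT).congr' ?_
    filter_upwards [hFinv, hΦinv] with t hFt hΦt
    simp only [Function.comp_apply, Pi.div_apply, invIntegral, hFt, hΦt]
  exact hΦanti.tendsto_div_of_tendsto_div_comp (hΦtop.eventually_gt_atTop 0)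
    (fun l hl => IsRegularlyVaryingAtZero.invIntegral_mul_le hφrv hβ hφpos hφmonoOn hΦtop hl)
    hΦinvT hFinvT hratio

/-- If `f` (with `x f(x) > 0` for `x ≠ 0`) is asymptotic at 0 to an odd
increasing `C¹` function `φ`, regularly varying at 0 with index `β > 1`, then with
`F(x) = ∫_x^1 du/f(u)` and `Φ(x) = ∫_x^1 du/φ(u)` one has `Φ(x)/F(x) → 1` as `x → 0⁺`
and `Φ⁻¹(t)/F⁻¹(t) → 1` as `t → ∞`. -/
theorem stmt2 (f φ : ℝ → ℝ) (β : ℝ) (hβ : 1 < β)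
    (hfc : Continuous f) (hsign : ∀ x ≠ 0, 0 < x * f x)
    (hφodd : ∀ x, φ (-x) = -φ x) (hφmono : StrictMono φ) (hφC1 : ContDiff ℝ 1 φ)
    (hφrv : ∀ l : ℝ, 0 < l →
      Tendsto (fun x => φ (l * x) / φ x) (𝓝[>] 0) (𝓝 (l ^ β)))
    (hasym : Tendsto (fun x => f x / φ x) (𝓝[≠] 0) (𝓝 1))
    (Finv Φinv : ℝ → ℝ)
    (hFinv_pos : ∀ᶠ t in atTop, 0 < Finv t)
    (hFinv : ∀ᶠ t in atTop, (∫ u in Finv t..1, 1 / f u) = t)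
    (hFinv0 : Tendsto Finv atTop (𝓝 0))
    (hΦinv_pos : ∀ᶠ t in atTop, 0 < Φinv t)
    (hΦinv : ∀ᶠ t in atTop, (∫ u in Φinv t..1, 1 / φ u) = t)
    (hΦinv0 : Tendsto Φinv atTop (𝓝 0)) :
    Tendsto (fun x => (∫ u in x..1, 1 / φ u) / (∫ u in x..1, 1 / f u))
      (𝓝[>] 0) (𝓝 1) ∧
    Tendsto (fun t => Φinv t / Finv t) atTop (𝓝 1) :=
  stmt2_general f φ β hβ hfc hsign hφodd hφmono hφrv hasym Finv Φinv hFinv_pos hFinv hFinv0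
    hΦinv_pos hΦinv hΦinv0
end

section
/- Suppose f is continuous, asymptotic at 0 to an odd function, regularly varying at 0 with index β>1, f(x)/x→0 as x→0, f(0)=0. Let g be continuous and suppose the continuous solution x of x'(t)=-f(x(t))+g(t) satisfies x(t)/F⁻¹(t)→λ as t→∞ for some λ∈{-1,0,1}. Then lim_{t→∞}∫_0^t g(s)ds exists and is finite. -/
open Real Filter MeasureTheory Set Topology

lemma ev_Ioc {P : ℝ → Prop} (h : ∀ᶠ u in 𝓝[>] (0:ℝ), P u) :
    ∃ ε > 0, ∀ u ∈ Ioc (0:ℝ) ε, P u := by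
  rcases mem_nhdsGT_iff_exists_Ioc_subset.mp h with ⟨ε, hε, hsub⟩
  exact ⟨ε, hε, fun u hu => hsub hu⟩

lemma ev_punct {P : ℝ → Prop} (h : ∀ᶠ u in 𝓝[≠] (0:ℝ), P u) :
    ∃ ε > 0, ∀ u : ℝ, u ≠ 0 → |u| < ε → P u := by
  rw [eventually_nhdsWithin_iff] at h
  rcases Metric.eventually_nhds_iff.mp h with ⟨ε, hε, h'⟩
  exact ⟨ε, hε, fun u hu hlt => h' (by simpa [Real.dist_eq] using hlt) hu⟩

lemma aux_band {f : ℝ → ℝ} {β : ℝ} (hβ : 1 < β) (hfc : Continuous f)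
    (hrv : ∀ l : ℝ, 0 < l →
      Tendsto (fun y => f (l * y) / f y) (𝓝[>] 0) (𝓝 (l ^ β)))
    {δ : ℝ} (hδ : 0 < δ) (hfpos : ∀ y ∈ Ioo (0:ℝ) δ, 0 < f y) :
    ∃ M : ℝ, 1 ≤ M ∧ ∃ ε : ℝ, 0 < ε ∧ ε < δ ∧
      ∀ u ∈ Ioc (0:ℝ) ε, ∀ s ∈ Icc (1/2 : ℝ) 1, f (s * u) ≤ M * f u := by
  have hβ0 : 0 < β := by linarith
  set c₀ : ℝ := (4:ℝ) ^ (-β) / 2 with hc₀def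
  have h4β : (0:ℝ) < (4:ℝ) ^ (-β) := Real.rpow_pos_of_pos (by norm_num) _
  have hc₀pos : 0 < c₀ := by positivity
  have h4βle : (4:ℝ) ^ (-β) ≤ 1 :=
    Real.rpow_le_one_of_one_le_of_nonpos (by norm_num) (by linarith)
  have hc₀le : c₀ ≤ 1/2 := by rw [hc₀def]; linarith
  set uN : ℕ → ℝ := fun N => min (δ/2) (1/((N:ℝ)+1)) with huNdef
  have huNpos : ∀ N, 0 < uN N := by
    intro N
    have : (0:ℝ) < 1/((N:ℝ)+1) := by positivity
    exact lt_min (by linarith) this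
  have huNδ : ∀ N, uN N ≤ δ/2 := fun N => min_le_left _ _
  set FN : ℕ → Set ℝ := fun N =>
    {r | ∀ u : ℝ, 0 < u → u ≤ uN N → c₀ * f u ≤ f (r * u) ∧ f (r * u) ≤ 2 * f u} with hFNdef
  -- positivity of f at admissible points
  have hfposN : ∀ N, ∀ u : ℝ, 0 < u → u ≤ uN N → 0 < f u := by
    intro N u hu hule
    exact hfpos u ⟨hu, lt_of_le_of_lt (hule.trans (huNδ N)) (by linarith)⟩
  have hFclosed : ∀ N, IsClosed (FN N) := by
    intro N
    have hEq : FN N = ⋂ u : ℝ,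
        {r : ℝ | 0 < u → u ≤ uN N → c₀ * f u ≤ f (r * u) ∧ f (r * u) ≤ 2 * f u} := by
      ext r; simp [hFNdef, Set.mem_iInter]
    rw [hEq]
    apply isClosed_iInter
    intro u
    by_cases h1 : 0 < u ∧ u ≤ uN N
    · have he : {r : ℝ | 0 < u → u ≤ uN N → c₀ * f u ≤ f (r * u) ∧ f (r * u) ≤ 2 * f u}
          = {r : ℝ | c₀ * f u ≤ f (r * u)} ∩ {r : ℝ | f (r * u) ≤ 2 * f u} := by
        ext r; simp [h1.1, h1.2]
      rw [he]
      have hcont : Continuous fun r : ℝ => f (r * u) :=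
        hfc.comp (continuous_id.mul continuous_const)
      exact (isClosed_le continuous_const hcont).inter (isClosed_le hcont continuous_const)
    · rcases not_and_or.mp h1 with h | h
      · have he : {r : ℝ | 0 < u → u ≤ uN N → c₀ * f u ≤ f (r * u) ∧ f (r * u) ≤ 2 * f u}
            = univ := by ext r; simp [h]
        rw [he]; exact isClosed_univ
      · have he : {r : ℝ | 0 < u → u ≤ uN N → c₀ * f u ≤ f (r * u) ∧ f (r * u) ≤ 2 * f u}
            = univ := by
          ext r; simp only [mem_setOf_eq, mem_univ, iff_true]
          intro _ h2; exact absurd h2 h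
        rw [he]; exact isClosed_univ
  have hcover : ∀ r ∈ Icc (1/4:ℝ) 1, ∃ N, r ∈ FN N := by
    intro r hr
    have hr0 : 0 < r := lt_of_lt_of_le (by norm_num) hr.1
    have h14 : (4:ℝ) ^ (-β) = ((1:ℝ)/4) ^ β := by
      rw [Real.rpow_neg (by norm_num : (0:ℝ) ≤ 4),
        show ((1:ℝ)/4) = 4⁻¹ by norm_num, Real.inv_rpow (by norm_num : (0:ℝ) ≤ 4)]
    have h1 : c₀ < r ^ β := by
      have h2 : ((1:ℝ)/4) ^ β ≤ r ^ β :=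
        Real.rpow_le_rpow (by norm_num) hr.1 (le_of_lt hβ0)
      rw [hc₀def]; rw [h14] at h4β ⊢; linarith
    have h2 : r ^ β < 2 := by
      have : r ^ β ≤ 1 := Real.rpow_le_one hr0.le hr.2 hβ0.le
      linarith
    have hev : ∀ᶠ u in 𝓝[>] (0:ℝ), f (r * u) / f u ∈ Ioo c₀ 2 :=
      (hrv r hr0).eventually_mem (Ioo_mem_nhds h1 h2)
    rcases ev_Ioc hev with ⟨ε', hε', hP⟩
    rcases exists_nat_one_div_lt hε' with ⟨N, hN⟩
    refine ⟨N, fun u hu hule => ?_⟩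
    have huε : u ∈ Ioc (0:ℝ) ε' :=
      ⟨hu, le_of_lt (lt_of_le_of_lt (hule.trans (min_le_right _ _)) hN)⟩
    have hfu : 0 < f u := hfposN N u hu hule
    have hratio := hP u huε
    constructor
    · exact le_of_lt ((lt_div_iff₀ hfu).mp hratio.1)
    · exact le_of_lt ((div_lt_iff₀ hfu).mp hratio.2)
  -- Baire category
  let C : ℕ → Set (Icc (1/4:ℝ) 1) := fun N => Subtype.val ⁻¹' FN N
  have hCclosed : ∀ N, IsClosed (C N) := fun N => (hFclosed N).preimage continuous_subtype_val
  have hCunion : ⋃ N, C N = univ := by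
    ext ⟨r, hr⟩
    simp only [mem_iUnion, mem_univ, iff_true]
    rcases hcover r hr with ⟨N, hN⟩
    exact ⟨N, hN⟩
  haveI : Nonempty (Icc (1/4:ℝ) 1) := ⟨⟨1/4, by norm_num, by norm_num⟩⟩
  obtain ⟨N, hNne⟩ := nonempty_interior_of_iUnion_of_closed hCclosed hCunion
  obtain ⟨r₀, hr₀⟩ := hNne
  rcases Metric.mem_nhds_iff.mp (mem_interior_iff_mem_nhds.mp hr₀) with ⟨ρ₀, hρ₀, hball⟩
  set ρ : ℝ := min (ρ₀/2) (1/8) with hρdef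
  have hρpos : 0 < ρ := lt_min (by linarith) (by norm_num)
  have hρle : ρ ≤ 1/8 := min_le_right _ _
  have hρlt : ρ < ρ₀ := lt_of_le_of_lt (min_le_left _ _) (by linarith)
  set rv : ℝ := (r₀ : ℝ) with hrvdef
  have hrv₀ : rv ∈ Icc (1/4:ℝ) 1 := r₀.2
  set a : ℝ := max (1/4) (rv - ρ) with hadef
  set b : ℝ := min 1 (rv + ρ) with hbdef
  have ha14 : 1/4 ≤ a := le_max_left _ _
  have hb1 : b ≤ 1 := min_le_left _ _
  have ha_le_rv : a ≤ rv := max_le hrv₀.1 (by linarith)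
  have hrv_le_b : rv ≤ b := le_min hrv₀.2 (by linarith)
  have hab : a < b := by
    by_cases hc : rv + ρ ≤ 1
    · have hb_eq : b = rv + ρ := min_eq_right hc
      have : a ≤ rv := ha_le_rv
      rw [hb_eq]; linarith
    · push_neg at hc
      have hb_eq : b = 1 := min_eq_left (by linarith)
      have hrvbig : 7/8 < rv := by
        have := hρle; linarith
      have ha_eq : a = rv - ρ := max_eq_right (by linarith [hρle])
      rw [hb_eq, ha_eq]
      have := hrv₀.2
      linarith [hρpos]
  have ha_pos : 0 < a := lt_of_lt_of_le (by norm_num) ha14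
  have hb_pos : 0 < b := lt_trans ha_pos hab
  have hsubFN : ∀ r ∈ Icc a b, r ∈ FN N := by
    intro r hr
    have h1 : r ∈ Icc (1/4:ℝ) 1 := ⟨le_trans ha14 hr.1, le_trans hr.2 hb1⟩
    have h2 : (⟨r, h1⟩ : Icc (1/4:ℝ) 1) ∈ Metric.ball r₀ ρ₀ := by
      rw [Metric.mem_ball, Subtype.dist_eq, Real.dist_eq]
      have hle1 : rv - ρ ≤ r := le_trans (le_max_right _ _) hr.1
      have hle2 : r ≤ rv + ρ := le_trans hr.2 (min_le_right _ _)
      have : |r - rv| ≤ ρ := abs_sub_le_iff.mpr ⟨by linarith, by linarith⟩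
      exact lt_of_le_of_lt this hρlt
    exact hball h2
  have hratio_pos : 0 < a/b := div_pos ha_pos hb_pos
  have hratio_lt : a/b < 1 := (div_lt_one hb_pos).mpr hab
  -- one step
  have hstep : ∀ σ : ℝ, a/b ≤ σ → σ ≤ 1 → ∀ u : ℝ, 0 < u → u ≤ uN N →
      f (σ * u) ≤ (2/c₀) * f u := by
    intro σ hσ1 hσ2 u hu hule
    have hσpos : 0 < σ := lt_of_lt_of_le hratio_pos hσ1
    have h1 : a/σ ∈ Icc a b := by
      constructor
      · rw [le_div_iff₀ hσpos]
        exact mul_le_of_le_one_right ha_pos.le hσ2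
      · rw [div_le_iff₀ hσpos]
        have : a ≤ σ * b := by
          rw [div_le_iff₀ hb_pos] at hσ1
          linarith [hσ1]
        linarith [this]
    have e1 := hsubFN (a/σ) h1
    have e2 := hsubFN a ⟨le_refl a, hab.le⟩
    have hσu : 0 < σ * u := by positivity
    have hσule : σ * u ≤ uN N := le_trans (mul_le_of_le_one_left hu.le hσ2) hule
    have h3 := (e1 (σ*u) hσu hσule).1
    have h4 := (e2 u hu hule).2
    have heq : (a/σ) * (σ*u) = a * u := by field_simp
    rw [heq] at h3
    have h5 : c₀ * f (σ * u) ≤ 2 * f u := h3.trans h4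
    rw [div_mul_eq_mul_div, le_div_iff₀ hc₀pos]
    linarith [h5]
  set ρ₁ : ℝ := 2/c₀ with hρ₁def
  have hρ₁ : 1 ≤ ρ₁ := by
    rw [hρ₁def, le_div_iff₀ hc₀pos]; linarith
  have hind : ∀ j : ℕ, ∀ s : ℝ, (a/b)^j ≤ s → s ≤ 1 → ∀ u : ℝ, 0 < u → u ≤ uN N →
      f (s * u) ≤ ρ₁^j * f u := by
    intro j
    induction j with
    | zero =>
      intro s hs1 hs2 u hu hule
      have : s = 1 := le_antisymm hs2 (by simpa using hs1)
      subst this; simp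
    | succ j ih =>
      intro s hs1 hs2 u hu hule
      have hfu : 0 < f u := hfposN N u hu hule
      by_cases hcase : (a/b)^j ≤ s
      · have h1 := ih s hcase hs2 u hu hule
        have h2 : ρ₁^j ≤ ρ₁^(j+1) := pow_le_pow_right₀ hρ₁ (Nat.le_succ j)
        calc f (s*u) ≤ ρ₁^j * f u := h1
          _ ≤ ρ₁^(j+1) * f u := mul_le_mul_of_nonneg_right h2 hfu.le
      · push_neg at hcase
        have hpj : 0 < (a/b)^j := pow_pos hratio_pos j
        have hpj1 : (a/b)^j ≤ 1 := pow_le_one₀ hratio_pos.le hratio_lt.le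
        set σ := s / (a/b)^j with hσdef
        have hσ1 : σ ≤ 1 := (div_le_one hpj).mpr hcase.le
        have hσlow : a/b ≤ σ := by
          rw [hσdef, le_div_iff₀ hpj]
          calc a/b * (a/b)^j = (a/b)^(j+1) := by rw [pow_succ]; ring
            _ ≤ s := hs1
        have hu' : 0 < (a/b)^j * u := by positivity
        have hu'le : (a/b)^j * u ≤ uN N :=
          le_trans (mul_le_of_le_one_left hu.le hpj1) hule
        have heq : s * u = σ * ((a/b)^j * u) := by
          rw [hσdef]; field_simp
        rw [heq]
        have hρ₁pos : (0:ℝ) < ρ₁ := by linarith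
        calc f (σ * ((a/b)^j * u)) ≤ ρ₁ * f ((a/b)^j * u) := by
              have := hstep σ hσlow hσ1 ((a/b)^j * u) hu' hu'le
              rwa [hρ₁def]
          _ ≤ ρ₁ * (ρ₁^j * f u) := by
              apply mul_le_mul_of_nonneg_left _ hρ₁pos.le
              exact ih ((a/b)^j) (le_refl _) hpj1 u hu hule
          _ = ρ₁^(j+1) * f u := by rw [pow_succ]; ring
  obtain ⟨k, hk⟩ := exists_pow_lt_of_lt_one (show (0:ℝ) < 1/2 by norm_num) hratio_lt
  refine ⟨ρ₁^k, one_le_pow₀ hρ₁, uN N, huNpos N, lt_of_le_of_lt (huNδ N) (by linarith), ?_⟩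
  intro u hu s hs
  exact hind k s (le_trans hk.le hs.1) hs.2 u hu.1 hu.2

lemma aux_envelope {f : ℝ → ℝ} {M ε : ℝ} (hM : 1 ≤ M) (hε : 0 < ε)
    (hband : ∀ u ∈ Ioc (0:ℝ) ε, ∀ s ∈ Icc (1/2:ℝ) 1, f (s*u) ≤ M * f u)
    (hhalf : ∀ u ∈ Ioc (0:ℝ) ε, f ((1/2) * u) ≤ f u) :
    ∀ v ∈ Ioc (0:ℝ) ε, ∀ z ∈ Ioc (0:ℝ) v, f z ≤ M * f v := by
  intro v hv z hz
  have hp1 : ∀ j : ℕ, ((1:ℝ)/2)^j ≤ 1 := fun j => pow_le_one₀ (by norm_num) (by norm_num)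
  have hmem : ∀ j : ℕ, ((1:ℝ)/2)^j * v ∈ Ioc (0:ℝ) ε := by
    intro j
    constructor
    · exact mul_pos (pow_pos (by norm_num) j) hv.1
    · exact le_trans (mul_le_of_le_one_left hv.1.le (hp1 j)) hv.2
  have hchain : ∀ j : ℕ, f (((1:ℝ)/2)^j * v) ≤ f v := by
    intro j
    induction j with
    | zero => simp
    | succ j ih =>
      have h1 : ((1:ℝ)/2)^(j+1) * v = (1/2) * (((1:ℝ)/2)^j * v) := by ring
      rw [h1]
      exact le_trans (hhalf (((1:ℝ)/2)^j * v) (hmem j)) ih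
  have hex : ∃ n : ℕ, ((1:ℝ)/2)^n * v < z := by
    rcases exists_pow_lt_of_lt_one (show (0:ℝ) < z/v from div_pos hz.1 hv.1)
      (by norm_num : (1:ℝ)/2 < 1) with ⟨n, hn⟩
    exact ⟨n, by rwa [lt_div_iff₀ hv.1] at hn⟩
  classical
  set n₀ := Nat.find hex with hn₀def
  have hn₀ : ((1:ℝ)/2)^n₀ * v < z := Nat.find_spec hex
  have hn₀pos : n₀ ≠ 0 := by
    intro h
    rw [h] at hn₀; simp at hn₀
    exact absurd hn₀ (not_lt.mpr hz.2)
  obtain ⟨j, hj⟩ : ∃ j, n₀ = j + 1 :=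
    ⟨n₀ - 1, (Nat.succ_pred_eq_of_pos (Nat.pos_of_ne_zero hn₀pos)).symm⟩
  have hle : z ≤ ((1:ℝ)/2)^j * v := by
    have := Nat.find_min hex (show j < n₀ by omega)
    exact le_of_not_gt this
  have hgt : ((1:ℝ)/2)^(j+1) * v < z := by rw [← hj]; exact hn₀
  set w := ((1:ℝ)/2)^j * v with hwdef
  have hwpos : 0 < w := mul_pos (pow_pos (by norm_num) j) hv.1
  have hwIoc : w ∈ Ioc (0:ℝ) ε := hmem j
  set s := z / w with hsdef
  have hs : s ∈ Icc (1/2:ℝ) 1 := by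
    constructor
    · rw [hsdef, le_div_iff₀ hwpos]
      have : ((1:ℝ)/2)^(j+1) * v = (1/2) * w := by rw [hwdef]; ring
      rw [this] at hgt
      linarith
    · exact (div_le_one hwpos).mpr hle
  have heq : z = s * w := by rw [hsdef]; field_simp
  calc f z = f (s*w) := by rw [← heq]
    _ ≤ M * f w := hband w hwIoc s hs
    _ ≤ M * f v := mul_le_mul_of_nonneg_left (hchain j) (by linarith)

/-- If the solution of `x' = -f(x) + g` satisfies
`x(t)/F⁻¹(t) → λ ∈ {-1,0,1}`, then `∫_0^t g(s) ds` converges to a finite limit. -/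
theorem stmt6 (f g x Finv : ℝ → ℝ) (β l : ℝ) (hβ : 1 < β)
    (hfc : Continuous f)
    (hodd : ∃ φ : ℝ → ℝ, (∀ y, φ (-y) = -φ y) ∧
      Tendsto (fun y => f y / φ y) (𝓝[≠] 0) (𝓝 1))
    (hrv : ∀ l : ℝ, 0 < l →
      Tendsto (fun y => f (l * y) / f y) (𝓝[>] 0) (𝓝 (l ^ β)))
    (hsl : Tendsto (fun y => f y / y) (𝓝[≠] 0) (𝓝 0)) (hf0 : f 0 = 0)
    (hg : Continuous g)
    (hFinv_pos : ∀ᶠ t in atTop, 0 < Finv t)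
    (hFinv : ∀ᶠ t in atTop, (∫ u in Finv t..1, 1 / f u) = t)
    (hFinv0 : Tendsto Finv atTop (𝓝 0))
    (hx : ∀ t ≥ 0, HasDerivAt x (-f (x t) + g t) t)
    (hl : l ∈ ({-1, 0, 1} : Set ℝ))
    (hxlim : Tendsto (fun t => x t / Finv t) atTop (𝓝 l)) :
    ∃ L, Tendsto (fun t => ∫ s in (0:ℝ)..t, g s) atTop (𝓝 L) := by
  classical
  obtain ⟨φ, hφodd, hφlim⟩ := hodd
  have hβ0 : 0 < β := by linarith
  -- bounds from φ near 0
  have hev : ∀ᶠ y in 𝓝[≠] (0:ℝ), |f y / φ y - 1| < 1/2 := by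
    have h := hφlim.eventually_mem (Metric.ball_mem_nhds (1:ℝ) (by norm_num : (0:ℝ) < 1/2))
    filter_upwards [h] with y hy
    simpa [Metric.mem_ball, Real.dist_eq] using hy
  obtain ⟨δ₁, hδ₁pos, hδ₁⟩ := ev_punct hev
  have hfb : ∀ y : ℝ, y ≠ 0 → |y| < δ₁ →
      ((1/2) * |φ y| ≤ |f y| ∧ |f y| ≤ (3/2) * |φ y| ∧ f y ≠ 0) := by
    intro y hy hlt
    have h := hδ₁ y hy hlt
    obtain ⟨h1, h2⟩ := abs_sub_lt_iff.mp h
    have hr1 : 1/2 < f y / φ y := by linarith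
    have hr2 : f y / φ y < 3/2 := by linarith
    have hfy : f y ≠ 0 := by
      intro h0; rw [h0, zero_div] at hr1; norm_num at hr1
    have hφy : φ y ≠ 0 := by
      intro h0; rw [h0, div_zero] at hr1; norm_num at hr1
    have heq : f y = (f y / φ y) * φ y := (div_mul_cancel₀ _ hφy).symm
    have h3 : |f y| = (f y / φ y) * |φ y| := by
      conv_lhs => rw [heq]
      rw [abs_mul, abs_of_pos (by linarith : (0:ℝ) < f y / φ y)]
    refine ⟨?_, ?_, hfy⟩
    · rw [h3]; exact mul_le_mul_of_nonneg_right hr1.le (abs_nonneg _)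
    · rw [h3]; exact mul_le_mul_of_nonneg_right hr2.le (abs_nonneg _)
  have hne : ∀ y ∈ Ioo (0:ℝ) δ₁, f y ≠ 0 := fun y hy =>
    (hfb y (ne_of_gt hy.1) (by rw [abs_of_pos hy.1]; exact hy.2)).2.2
  -- constant sign on (0, δ₁)
  have hsign : (∀ y ∈ Ioo (0:ℝ) δ₁, 0 < f y) ∨ (∀ y ∈ Ioo (0:ℝ) δ₁, f y < 0) := by
    by_contra hcon
    push_neg at hcon
    obtain ⟨⟨y₁, hy₁, hy₁'⟩, ⟨y₂, hy₂, hy₂'⟩⟩ := hcon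
    have h1 : f y₁ ≤ 0 := hy₁'
    have h2 : 0 ≤ f y₂ := hy₂'
    have hmem : (0:ℝ) ∈ uIcc (f y₁) (f y₂) := mem_uIcc.mpr (Or.inl ⟨h1, h2⟩)
    obtain ⟨y₃, hy₃, hy₃'⟩ := intermediate_value_uIcc hfc.continuousOn hmem
    exact hne y₃ ((Set.ordConnected_Ioo.uIcc_subset hy₁ hy₂) hy₃) hy₃'
  set A := Finv with hAdef
  -- Stage: T₀ package
  set δ' : ℝ := min δ₁ 1 with hδ'def
  have hδ'pos : 0 < δ' := lt_min hδ₁pos one_pos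
  have hδ'le : δ' ≤ δ₁ := min_le_left _ _
  have hbig0 : ∀ᶠ t in atTop,
      (0 < A t ∧ A t < δ'/2 ∧ (∫ u in A t..1, 1/f u) = t ∧ 1 ≤ t) := by
    have h1 : ∀ᶠ t in atTop, A t < δ'/2 :=
      hFinv0.eventually_lt_const (by linarith)
    filter_upwards [hFinv_pos, h1, hFinv, eventually_ge_atTop 1] with t p1 p2 p3 p4
    exact ⟨p1, p2, p3, p4⟩
  obtain ⟨T₀, hT₀⟩ := eventually_atTop.mp hbig0
  have hT₀1 : 1 ≤ T₀ := (hT₀ T₀ le_rfl).2.2.2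
  have hAIoo : ∀ t, T₀ ≤ t → A t ∈ Ioo (0:ℝ) δ₁ := fun t ht =>
    ⟨(hT₀ t ht).1, lt_of_lt_of_le (lt_of_lt_of_le (hT₀ t ht).2.1 (by linarith)) hδ'le⟩
  -- integrability of 1/f on compacts of (0, δ₁)
  have hcont1f : ContinuousOn (fun u => 1/f u) (Ioo (0:ℝ) δ₁) :=
    ContinuousOn.div continuousOn_const hfc.continuousOn (fun y hy => hne y hy)
  have hIoD : ∀ c d : ℝ, c ∈ Ioo (0:ℝ) δ₁ → d ∈ Ioo (0:ℝ) δ₁ →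
      IntervalIntegrable (fun u => 1/f u) volume c d := by
    intro c d hc hd
    exact (hcont1f.mono (Set.ordConnected_Ioo.uIcc_subset hc hd)).intervalIntegrable
  have hint1 : ∀ t, T₀ ≤ t → IntervalIntegrable (fun u => 1/f u) volume (A t) 1 := by
    intro t ht
    by_contra hcon
    have h0 := intervalIntegral.integral_undef hcon
    have := (hT₀ t ht).2.2.1
    rw [h0] at this
    linarith [(hT₀ t ht).2.2.2]
  have hsplit0 : ∀ t₁ t₂ : ℝ, T₀ ≤ t₁ → T₀ ≤ t₂ →
      (∫ u in A t₂..A t₁, 1/f u) = t₂ - t₁ := by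
    intro t₁ t₂ h₁ h₂
    have hi1 : IntervalIntegrable (fun u => 1/f u) volume (A t₂) (A t₁) :=
      hIoD _ _ (hAIoo t₂ h₂) (hAIoo t₁ h₁)
    have := intervalIntegral.integral_add_adjacent_intervals hi1 (hint1 t₁ h₁)
    rw [(hT₀ t₁ h₁).2.2.1, (hT₀ t₂ h₂).2.2.1] at this
    linarith
  have hIccIoo : ∀ c d : ℝ, c ∈ Ioo (0:ℝ) δ₁ → d ∈ Ioo (0:ℝ) δ₁ →
      Icc c d ⊆ Ioo (0:ℝ) δ₁ := by
    intro c d hc hd u hu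
    exact ⟨lt_of_lt_of_le hc.1 hu.1, lt_of_le_of_lt hu.2 hd.2⟩
  -- eliminate negative sign
  have hfpos : ∀ y ∈ Ioo (0:ℝ) δ₁, 0 < f y := by
    rcases hsign with h | hfneg
    · exact h
    exfalso
    have hinc : ∀ t₁ t₂ : ℝ, T₀ ≤ t₁ → t₁ < t₂ → A t₁ < A t₂ := by
      intro t₁ t₂ h₁ h₁₂
      by_contra hcon
      push_neg at hcon
      have heq := hsplit0 t₁ t₂ h₁ (by linarith)
      have hnonpos : (∫ u in A t₂..A t₁, 1/f u) ≤ 0 := by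
        rw [← neg_nonneg, ← intervalIntegral.integral_neg]
        apply intervalIntegral.integral_nonneg hcon
        intro u hu
        have huI : u ∈ Ioo (0:ℝ) δ₁ :=
          hIccIoo _ _ (hAIoo t₂ (by linarith)) (hAIoo t₁ h₁) hu
        have := hfneg u huI
        simp only [neg_nonneg]
        exact le_of_lt (one_div_neg.mpr this)
      linarith
    have h1 : 0 < A (T₀ + 1) := (hT₀ _ (by linarith)).1
    have h2 : ∀ᶠ t in atTop, A t < A (T₀+1) := hFinv0.eventually_lt_const h1
    obtain ⟨t₃, ht₃, ht₃'⟩ := (h2.and (eventually_ge_atTop (T₀+2))).exists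
    have := hinc (T₀+1) t₃ (by linarith) (by linarith)
    linarith
  have hanti : ∀ t₁ t₂ : ℝ, T₀ ≤ t₁ → t₁ < t₂ → A t₂ < A t₁ := by
    intro t₁ t₂ h₁ h₁₂
    by_contra hcon
    push_neg at hcon
    have heq := hsplit0 t₁ t₂ h₁ (by linarith)
    have hnonpos : (∫ u in A t₂..A t₁, 1/f u) ≤ 0 := by
      rw [intervalIntegral.integral_symm, neg_nonpos]
      apply intervalIntegral.integral_nonneg hcon
      intro u hu
      have huI : u ∈ Ioo (0:ℝ) δ₁ :=
        hIccIoo _ _ (hAIoo t₁ h₁) (hAIoo t₂ (by linarith)) hu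
      exact le_of_lt (one_div_pos.mpr (hfpos u huI))
    linarith
  have hanti_le : ∀ t₁ t₂ : ℝ, T₀ ≤ t₁ → t₁ ≤ t₂ → A t₂ ≤ A t₁ := by
    intro t₁ t₂ h₁ h₁₂
    rcases eq_or_lt_of_le h₁₂ with rfl | h
    · exact le_rfl
    · exact (hanti t₁ t₂ h₁ h).le
  -- band and envelope
  obtain ⟨M₀, hM₀, ε₀, hε₀pos, hε₀lt, hband⟩ := aux_band hβ hfc hrv hδ₁pos hfpos
  have hhalfev : ∀ᶠ u in 𝓝[>] (0:ℝ), f ((1/2) * u) / f u < 1 := by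
    have hlt : ((1:ℝ)/2) ^ β < 1 :=
      Real.rpow_lt_one (by norm_num) (by norm_num) hβ0
    exact (hrv (1/2) (by norm_num)).eventually_lt_const hlt
  obtain ⟨ε₁', hε₁'pos, hhalf''⟩ := ev_Ioc hhalfev
  set C₂ : ℝ := (2:ℝ)^β + 1 with hC₂def
  have hC₂pos : 0 < C₂ := by
    have : (0:ℝ) < (2:ℝ)^β := Real.rpow_pos_of_pos (by norm_num) _
    linarith
  have h2ev : ∀ᶠ u in 𝓝[>] (0:ℝ), f (2 * u) / f u < C₂ :=
    (hrv 2 (by norm_num)).eventually_lt_const (by rw [hC₂def]; linarith)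
  obtain ⟨ε₃, hε₃pos, h2''⟩ := ev_Ioc h2ev
  set ε₂ : ℝ := min ε₀ (min ε₁' (δ₁/2)) with hε₂def
  have hε₂pos : 0 < ε₂ := lt_min hε₀pos (lt_min hε₁'pos (by linarith))
  have hε₂δ : ε₂ < δ₁ := lt_of_le_of_lt (min_le_left _ _) hε₀lt
  have hhalf3 : ∀ u ∈ Ioc (0:ℝ) ε₂, f ((1/2) * u) ≤ f u := by
    intro u hu
    have hu1 : u ∈ Ioc (0:ℝ) ε₁' :=
      ⟨hu.1, hu.2.trans ((min_le_right _ _).trans (min_le_left _ _))⟩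
    have hfu : 0 < f u := hfpos u ⟨hu.1, lt_of_le_of_lt hu.2 hε₂δ⟩
    exact le_of_lt ((div_lt_one hfu).mp (hhalf'' u hu1))
  have henv : ∀ v ∈ Ioc (0:ℝ) ε₂, ∀ z ∈ Ioc (0:ℝ) v, f z ≤ M₀ * f v :=
    aux_envelope hM₀ hε₂pos
      (fun u hu => hband u ⟨hu.1, hu.2.trans (min_le_left _ _)⟩) hhalf3
  -- continuity and derivative of A on Ioi T₀
  have hAcd : ∀ t₀ : ℝ, T₀ < t₀ → ContinuousAt A t₀ ∧ HasDerivAt A (-(f (A t₀))) t₀ := by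
    intro t₀ ht₀
    have hp := hT₀ t₀ ht₀.le
    set y₀ := A t₀ with hy₀def
    have hy₀Ioo' : y₀ ∈ Ioo (0:ℝ) δ' := ⟨hp.1, by linarith [hp.2.1]⟩
    have hy₀Ioo : y₀ ∈ Ioo (0:ℝ) δ₁ := ⟨hy₀Ioo'.1, lt_of_lt_of_le hy₀Ioo'.2 hδ'le⟩
    have hIooδ' : Ioo (0:ℝ) δ' ⊆ Ioo (0:ℝ) δ₁ := fun u hu => ⟨hu.1, lt_of_lt_of_le hu.2 hδ'le⟩
    set H : ℝ → ℝ := fun y => ∫ u in y..y₀, 1/f u with hHdef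
    have hGeq : ∀ y ∈ Ioo (0:ℝ) δ', (∫ u in y..(1:ℝ), 1/f u) = H y + t₀ := by
      intro y hy
      have h1 : IntervalIntegrable (fun u => 1/f u) volume y y₀ :=
        hIoD _ _ (hIooδ' hy) hy₀Ioo
      have h2 := intervalIntegral.integral_add_adjacent_intervals h1 (hint1 t₀ ht₀.le)
      rw [hp.2.2.1] at h2
      linarith
    have hGanti : ∀ y y' : ℝ, y ∈ Ioo (0:ℝ) δ' → y' ∈ Ioo (0:ℝ) δ' → y ≤ y' →
        (∫ u in y'..(1:ℝ), 1/f u) ≤ ∫ u in y..(1:ℝ), 1/f u := by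
      intro y y' hy hy' hle
      rw [hGeq y hy, hGeq y' hy']
      have hadd := intervalIntegral.integral_add_adjacent_intervals
        (hIoD y y' (hIooδ' hy) (hIooδ' hy')) (hIoD y' y₀ (hIooδ' hy') hy₀Ioo)
      have hnn : (0:ℝ) ≤ ∫ u in y..y', 1/f u := by
        apply intervalIntegral.integral_nonneg hle
        intro u hu
        exact le_of_lt (one_div_pos.mpr (hfpos u (hIccIoo _ _ (hIooδ' hy) (hIooδ' hy') hu)))
      have : H y = (∫ u in y..y', 1/f u) + H y' := hadd.symm
      linarith
    have hAc : ContinuousAt A t₀ := by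
      rw [Metric.continuousAt_iff]
      intro ε hε
      set ε'' : ℝ := min (ε/2) (min (y₀/2) ((δ' - y₀)/2)) with hε''def
      have hε''pos : 0 < ε'' :=
        lt_min (by linarith) (lt_min (by linarith [hy₀Ioo'.1]) (by linarith [hy₀Ioo'.2]))
      have hε''y : ε'' ≤ y₀/2 := (min_le_right _ _).trans (min_le_left _ _)
      have hε''δ : ε'' ≤ (δ' - y₀)/2 := (min_le_right _ _).trans (min_le_right _ _)
      have hε''ε : ε'' ≤ ε/2 := min_le_left _ _
      have hym : y₀ - ε'' ∈ Ioo (0:ℝ) δ' := ⟨by linarith [hy₀Ioo'.1], by linarith [hy₀Ioo'.2]⟩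
      have hyp : y₀ + ε'' ∈ Ioo (0:ℝ) δ' := ⟨by linarith [hy₀Ioo'.1], by linarith⟩
      set d₁ : ℝ := ∫ u in (y₀ - ε'')..y₀, 1/f u with hd₁def
      set d₂ : ℝ := ∫ u in y₀..(y₀ + ε''), 1/f u with hd₂def
      have hd₁pos : 0 < d₁ := by
        apply intervalIntegral.intervalIntegral_pos_of_pos_on
          (hIoD _ _ (hIooδ' hym) hy₀Ioo) _ (by linarith)
        intro u hu
        refine one_div_pos.mpr (hfpos u ⟨by linarith [hu.1, hym.1], ?_⟩)
        have := hu.2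
        have h5 := hy₀Ioo.2
        linarith
      have hd₂pos : 0 < d₂ := by
        apply intervalIntegral.intervalIntegral_pos_of_pos_on
          (hIoD _ _ hy₀Ioo (hIooδ' hyp)) _ (by linarith)
        intro u hu
        refine one_div_pos.mpr (hfpos u ⟨by linarith [hu.1, hy₀Ioo.1], ?_⟩)
        have := hu.2
        have h5 : y₀ + ε'' < δ₁ := lt_of_lt_of_le hyp.2 hδ'le
        linarith
      refine ⟨min (min d₁ d₂) (t₀ - T₀), lt_min (lt_min hd₁pos hd₂pos) (by linarith), fun {t} ht => ?_⟩
      rw [Real.dist_eq] at ht ⊢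
      obtain ⟨ht1, ht2⟩ := abs_sub_lt_iff.mp ht
      have htT₀ : T₀ < t := by
        have := lt_of_lt_of_le ht2 (min_le_right _ _); linarith
      have hq := hT₀ t htT₀.le
      have hAt : A t ∈ Ioo (0:ℝ) δ' := ⟨hq.1, by linarith [hq.2.1, hδ'pos]⟩
      have htd₁ : |t - t₀| < d₁ := lt_of_lt_of_le ht ((min_le_left _ _).trans (min_le_left _ _))
      have htd₂ : |t - t₀| < d₂ := lt_of_lt_of_le ht ((min_le_left _ _).trans (min_le_right _ _))
      obtain ⟨ht1', ht2'⟩ := abs_sub_lt_iff.mp htd₁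
      obtain ⟨ht1'', ht2''⟩ := abs_sub_lt_iff.mp htd₂
      have hub : A t < y₀ + ε'' := by
        by_contra hcon
        push_neg at hcon
        have hle := hGanti (y₀ + ε'') (A t) hyp hAt hcon
        rw [hq.2.2.1, hGeq (y₀ + ε'') hyp] at hle
        have hH : H (y₀ + ε'') = -d₂ := by
          rw [hHdef, hd₂def]
          exact intervalIntegral.integral_symm _ _
        rw [hH] at hle
        linarith
      have hlb : y₀ - ε'' < A t := by
        by_contra hcon
        push_neg at hcon
        have hle := hGanti (A t) (y₀ - ε'') hAt hym hcon
        rw [hq.2.2.1, hGeq (y₀ - ε'') hym] at hle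
        have hH : H (y₀ - ε'') = d₁ := rfl
        rw [hH] at hle
        linarith
      rw [abs_sub_lt_iff]
      constructor <;> [skip; skip] <;> linarith
    -- derivative
    have hfy₀ : 0 < f y₀ := hfpos y₀ hy₀Ioo
    have hH' : HasDerivAt H (-(1/f y₀)) y₀ := by
      have h1 : IntervalIntegrable (fun u => 1/f u) volume y₀ y₀ :=
        hIoD _ _ hy₀Ioo hy₀Ioo
      have h2 : StronglyMeasurableAtFilter (fun u => 1/f u) (𝓝 y₀) volume :=
        ContinuousOn.stronglyMeasurableAtFilter isOpen_Ioo hcont1f y₀ hy₀Ioo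
      have h3 : ContinuousAt (fun u => 1/f u) y₀ :=
        ContinuousAt.div continuousAt_const hfc.continuousAt hfy₀.ne'
      exact intervalIntegral.integral_hasDerivAt_left h1 h2 h3
    have hGd : HasDerivAt (fun y => ∫ u in y..(1:ℝ), 1/f u) (-(1/f y₀)) y₀ := by
      apply (hH'.add_const t₀).congr_of_eventuallyEq
      filter_upwards [Ioo_mem_nhds hy₀Ioo'.1 hy₀Ioo'.2] with y hy
      exact hGeq y hy
    have hinv : HasDerivAt A (-(1/f y₀))⁻¹ t₀ := by
      apply HasDerivAt.of_local_left_inverse hAc hGd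
      · simp only [ne_eq, neg_eq_zero]
        exact one_div_ne_zero hfy₀.ne'
      · filter_upwards [Ioi_mem_nhds ht₀] with t ht
        exact (hT₀ t (le_of_lt ht)).2.2.1
    have hsimp : (-(1/f y₀))⁻¹ = -(f y₀) := by
      field_simp
    exact ⟨hAc, by rwa [hsimp] at hinv⟩
  -- Stage: T₁ package
  have hlab : |l| ≤ 1 := by
    simp only [mem_insert_iff, mem_singleton_iff] at hl
    rcases hl with rfl | rfl | rfl <;> norm_num
  have hxev : ∀ᶠ t in atTop, |x t / A t - l| < 1/2 := by
    have h := hxlim.eventually_mem (Metric.ball_mem_nhds l (by norm_num : (0:ℝ) < 1/2))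
    filter_upwards [h] with t ht
    simpa [Metric.mem_ball, Real.dist_eq] using ht
  have hκpos : 0 < min (ε₂/2) ε₃ := lt_min (by linarith) hε₃pos
  have hbig1 : ∀ᶠ t in atTop,
      (A t < min (ε₂/2) ε₃ ∧ |x t / A t - l| < 1/2 ∧ T₀ + 1 ≤ t) := by
    filter_upwards [hFinv0.eventually_lt_const hκpos, hxev,
      eventually_ge_atTop (T₀+1)] with t p1 p2 p3
    exact ⟨p1, p2, p3⟩
  obtain ⟨T₁, hT₁⟩ := eventually_atTop.mp hbig1
  have hT₁gt : T₀ < T₁ := by linarith [(hT₁ T₁ le_rfl).2.2]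
  have hT₁0 : (0:ℝ) < T₁ := by linarith
  have hAT₁pos : 0 < A T₁ := (hT₀ T₁ hT₁gt.le).1
  have hAT₁lt : A T₁ < min (ε₂/2) ε₃ := (hT₁ T₁ le_rfl).1
  have hAT₁δ : A T₁ < δ₁ := by
    have h1 : A T₁ < ε₂/2 := lt_of_lt_of_le hAT₁lt (min_le_left _ _)
    linarith [hε₂δ, hε₂pos]
  -- q and its properties
  have hAcont : ∀ s : ℝ, T₀ < s → ContinuousAt A s := fun s hs => (hAcd s hs).1
  set q : ℝ → ℝ := fun s => f (2 * A s) with hqdef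
  have hqcont : ∀ s : ℝ, T₀ < s → ContinuousAt q s := fun s hs =>
    hfc.continuousAt.comp (continuousAt_const.mul (hAcont s hs))
  have h2A : ∀ s : ℝ, T₁ ≤ s → 2 * A s ∈ Ioc (0:ℝ) ε₂ := by
    intro s hs
    have h1 : 0 < A s := (hT₀ s (by linarith [(hT₁ s hs).2.2])).1
    have h2 : A s < ε₂/2 := lt_of_lt_of_le (hT₁ s hs).1 (min_le_left _ _)
    exact ⟨by linarith, by linarith⟩
  have hqpos : ∀ s : ℝ, T₁ ≤ s → 0 < q s := by
    intro s hs
    have h1 := h2A s hs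
    exact hfpos _ ⟨h1.1, lt_of_le_of_lt h1.2 hε₂δ⟩
  -- key substitution bound
  have hkey : ∀ t₂ : ℝ, T₁ ≤ t₂ → (∫ s in T₁..t₂, q s) ≤ C₂ * A T₁ := by
    intro t₂ ht₂
    rcases eq_or_lt_of_le ht₂ with rfl | hlt
    · rw [intervalIntegral.integral_same]; positivity
    have hAle : A t₂ ≤ A T₁ := (hanti T₁ t₂ hT₁gt.le hlt).le
    have hApos₂ : 0 < A t₂ := (hT₀ t₂ (by linarith)).1
    set cl : ℝ → ℝ := fun u => min (max u (A t₂)) (A T₁) with hcldef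
    have hclcont : Continuous cl := (continuous_id.max continuous_const).min continuous_const
    have hclmem : ∀ u, cl u ∈ Icc (A t₂) (A T₁) := fun u =>
      ⟨le_min (le_max_right _ _) hAle, min_le_right _ _⟩
    have hclIoo : ∀ u, cl u ∈ Ioo (0:ℝ) δ₁ := fun u =>
      ⟨lt_of_lt_of_le hApos₂ (hclmem u).1, lt_of_le_of_lt (hclmem u).2 hAT₁δ⟩
    set G₂ : ℝ → ℝ := fun u => f (2 * cl u) / f (cl u) with hG₂def
    have hG₂cont : Continuous G₂ :=
      Continuous.div (hfc.comp (continuous_const.mul hclcont)) (hfc.comp hclcont)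
        (fun u => (hfpos _ (hclIoo u)).ne')
    have hsub : (∫ s in T₁..t₂, (fun s => -f (A s)) s • (G₂ ∘ A) s)
        = ∫ u in A T₁..A t₂, G₂ u := by
      apply intervalIntegral.integral_comp_smul_deriv _ _ hG₂cont
      · intro s hs
        rw [uIcc_of_le ht₂] at hs
        exact (hAcd s (by linarith [hs.1])).2
      · intro s hs
        rw [uIcc_of_le ht₂] at hs
        exact ((hfc.continuousAt.comp (hAcont s (by linarith [hs.1]))).neg).continuousWithinAt
    have hLHS : ∀ s ∈ uIcc T₁ t₂, (fun s => -f (A s)) s • (G₂ ∘ A) s = -q s := by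
      intro s hs
      rw [uIcc_of_le ht₂] at hs
      have hAs : A s ∈ Icc (A t₂) (A T₁) :=
        ⟨hanti_le s t₂ (by linarith [hs.1]) hs.2, hanti_le T₁ s hT₁gt.le hs.1⟩
      have hclAs : cl (A s) = A s := by
        rw [hcldef]; simp only
        rw [max_eq_left hAs.1, min_eq_left hAs.2]
      have hAsIoo : A s ∈ Ioo (0:ℝ) δ₁ :=
        ⟨lt_of_lt_of_le hApos₂ hAs.1, lt_of_le_of_lt hAs.2 hAT₁δ⟩
      have hfAs : f (A s) ≠ 0 := (hfpos _ hAsIoo).ne'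
      simp only [Function.comp_apply, hG₂def, hclAs, smul_eq_mul, hqdef]
      field_simp
    have h5 : (∫ s in T₁..t₂, q s) = ∫ u in A t₂..A T₁, G₂ u := by
      have e1 : (∫ s in T₁..t₂, (fun s => -f (A s)) s • (G₂ ∘ A) s)
          = ∫ s in T₁..t₂, -q s := intervalIntegral.integral_congr hLHS
      rw [e1, intervalIntegral.integral_neg,
        intervalIntegral.integral_symm (A t₂) (A T₁)] at hsub
      linarith
    rw [h5]
    have hb : (∫ u in A t₂..A T₁, G₂ u) ≤ ∫ u in A t₂..A T₁, C₂ := by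
      apply intervalIntegral.integral_mono_on hAle
        (hG₂cont.intervalIntegrable _ _) (intervalIntegrable_const)
      intro u hu
      have hclu : cl u = u := by
        rw [hcldef]; simp only
        rw [max_eq_left hu.1, min_eq_left hu.2]
      have hu0 : 0 < u := lt_of_lt_of_le hApos₂ hu.1
      have huε₃ : u ≤ ε₃ :=
        le_of_lt (lt_of_le_of_lt hu.2 (lt_of_lt_of_le hAT₁lt (min_le_right _ _)))
      have hr := h2'' u ⟨hu0, huε₃⟩
      have hfu : 0 < f u := hfpos u ⟨hu0, lt_of_le_of_lt hu.2 hAT₁δ⟩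
      rw [hG₂def]; simp only [hclu]
      exact le_of_lt hr
    rw [intervalIntegral.integral_const, smul_eq_mul] at hb
    have : (A T₁ - A t₂) * C₂ ≤ A T₁ * C₂ :=
      mul_le_mul_of_nonneg_right (by linarith) hC₂pos.le
    linarith
  -- integrability of q on Ioi T₁
  have hqmeasOn : ContinuousOn q (Ici T₁) := fun s hs =>
    (hqcont s (lt_of_lt_of_le hT₁gt hs)).continuousWithinAt
  have hqIntOn : ∀ n : ℕ, IntegrableOn q (Ioc T₁ (T₁ + n)) volume := by
    intro n
    have h1 : ContinuousOn q (Icc T₁ (T₁ + n)) := hqmeasOn.mono Icc_subset_Ici_self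
    exact h1.integrableOn_Icc.mono_set Ioc_subset_Icc_self
  have hqnorm : ∀ n : ℕ, (∫ s in T₁..(T₁ + (n:ℝ)), ‖q s‖) ≤ C₂ * A T₁ := by
    intro n
    have hle : T₁ ≤ T₁ + (n:ℝ) := le_add_of_nonneg_right n.cast_nonneg
    have e1 : (∫ s in T₁..(T₁ + (n:ℝ)), ‖q s‖) = ∫ s in T₁..(T₁ + (n:ℝ)), q s := by
      apply intervalIntegral.integral_congr
      intro s hs
      rw [uIcc_of_le hle] at hs
      exact Real.norm_of_nonneg (hqpos s hs.1).le
    rw [e1]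
    exact hkey _ hle
  have hqInt : IntegrableOn q (Ioi T₁) volume := by
    exact integrableOn_Ioi_of_intervalIntegral_norm_bounded (C₂ * A T₁) T₁ hqIntOn
      (tendsto_atTop_add_const_left atTop T₁ tendsto_natCast_atTop_atTop)
      (Eventually.of_forall hqnorm)
  -- domination of f ∘ x
  have hfxbd : ∀ s : ℝ, T₁ ≤ s → ‖f (x s)‖ ≤ (3 * M₀) * q s := by
    intro s hs
    have hs' := hT₁ s hs
    have hApos : 0 < A s := (hT₀ s (by linarith [hs'.2.2])).1
    have hqs := hqpos s hs
    have hratio : |x s / A s| < 3/2 := by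
      have h1 : |x s / A s| ≤ |x s / A s - l| + |l| := by
        calc |x s / A s| = |(x s / A s - l) + l| := by ring_nf
          _ ≤ |x s / A s - l| + |l| := abs_add_le _ _
      linarith [hs'.2.1]
    have hxs : |x s| ≤ (3/2) * A s := by
      have he : x s = (x s / A s) * A s := (div_mul_cancel₀ _ hApos.ne').symm
      rw [he, abs_mul, abs_of_pos hApos]
      exact mul_le_mul_of_nonneg_right hratio.le hApos.le
    by_cases hx0 : x s = 0
    · rw [hx0, hf0, norm_zero]
      positivity
    · set xa : ℝ := |x s| with hxadef
      have hxabs : 0 < xa := abs_pos.mpr hx0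
      have h2As := h2A s hs
      have hxlt2A : xa ≤ 2 * A s := by rw [hxadef]; linarith
      have hxltδ : xa < δ₁ := lt_of_le_of_lt hxlt2A (lt_of_le_of_lt h2As.2 hε₂δ)
      have henv' : f xa ≤ M₀ * f (2 * A s) :=
        henv (2 * A s) h2As xa ⟨hxabs, hxlt2A⟩
      have hxltδ' : |x s| < δ₁ := hxltδ
      have hb1 := hfb (x s) hx0 hxltδ'
      have hb2 := hfb xa hxabs.ne' (by rw [hxadef, abs_abs]; exact hxltδ)
      have hφeq : |φ (x s)| = |φ xa| := by
        rcases le_or_gt 0 (x s) with hc | hc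
        · rw [hxadef, abs_of_nonneg hc]
        · rw [hxadef, abs_of_neg hc]
          have hoo : φ (-(x s)) = -φ (x s) := hφodd (x s)
          rw [hoo, abs_neg]
      have hfxspos : 0 < f xa := hfpos _ ⟨hxabs, hxltδ⟩
      have h6 : |φ xa| ≤ 2 * |f xa| := by linarith [hb2.1]
      have h7 : |f xa| = f xa := abs_of_pos hfxspos
      calc ‖f (x s)‖ = |f (x s)| := Real.norm_eq_abs _
        _ ≤ (3/2) * |φ (x s)| := hb1.2.1
        _ = (3/2) * |φ xa| := by rw [hφeq]
        _ ≤ 3 * f xa := by rw [h7] at h6; linarith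
        _ ≤ 3 * (M₀ * f (2 * A s)) := by linarith [henv']
        _ = (3 * M₀) * q s := by rw [hqdef]; ring
  have hxcont : ∀ s : ℝ, 0 ≤ s → ContinuousAt x s := fun s hs => (hx s hs).continuousAt
  have hfxcont : ContinuousOn (fun s => f (x s)) (Ici (0:ℝ)) := fun s hs =>
    (hfc.continuousAt.comp (hxcont s hs)).continuousWithinAt
  have hfxInt : IntegrableOn (fun s => f (x s)) (Ioi T₁) volume := by
    apply Integrable.mono' (hqInt.const_mul (3 * M₀))
    · apply ContinuousOn.aestronglyMeasurable _ measurableSet_Ioi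
      exact hfxcont.mono (fun s hs => le_of_lt (lt_of_lt_of_le hT₁0 (le_of_lt hs)))
    · rw [ae_restrict_iff' measurableSet_Ioi]
      exact ae_of_all _ (fun s hs => hfxbd s (le_of_lt hs))
  have hlim1 := intervalIntegral_tendsto_integral_Ioi T₁ hfxInt (tendsto_id (α := ℝ))
  -- FTC
  have hFTC : ∀ t : ℝ, 0 ≤ t →
      (∫ s in (0:ℝ)..t, g s) = (x t - x 0) + ∫ s in (0:ℝ)..t, f (x s) := by
    intro t ht
    have huIcc : uIcc (0:ℝ) t = Icc 0 t := uIcc_of_le ht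
    have hI1 : IntervalIntegrable (fun s => f (x s)) volume 0 t := by
      apply ContinuousOn.intervalIntegrable
      rw [huIcc]
      exact hfxcont.mono (fun s hs => hs.1)
    have hIg : IntervalIntegrable g volume 0 t := hg.intervalIntegrable 0 t
    have hderiv : ∀ s ∈ uIcc (0:ℝ) t, HasDerivAt x (-f (x s) + g s) s := by
      intro s hs
      rw [huIcc] at hs
      exact hx s hs.1
    have heq := intervalIntegral.integral_eq_sub_of_hasDerivAt hderiv (hI1.neg.add hIg)
    have h2 : (∫ s in (0:ℝ)..t, (-f (x s) + g s))
        = (∫ s in (0:ℝ)..t, -f (x s)) + ∫ s in (0:ℝ)..t, g s :=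
      intervalIntegral.integral_add hI1.neg hIg
    have h3 : (∫ s in (0:ℝ)..t, -f (x s)) = -∫ s in (0:ℝ)..t, f (x s) :=
      intervalIntegral.integral_neg
    rw [h2, h3] at heq
    linarith
  have hfinal : ∀ᶠ t in atTop, (∫ s in (0:ℝ)..t, g s)
      = ((x t - x 0) + (∫ s in (0:ℝ)..T₁, f (x s))) + ∫ s in T₁..t, f (x s) := by
    filter_upwards [eventually_ge_atTop T₁] with t ht
    have h0t : (0:ℝ) ≤ t := le_trans hT₁0.le ht
    rw [hFTC t h0t]
    have hI1 : IntervalIntegrable (fun s => f (x s)) volume 0 T₁ := by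
      apply ContinuousOn.intervalIntegrable
      rw [uIcc_of_le hT₁0.le]
      exact hfxcont.mono (fun s hs => hs.1)
    have hI2 : IntervalIntegrable (fun s => f (x s)) volume T₁ t := by
      apply ContinuousOn.intervalIntegrable
      rw [uIcc_of_le ht]
      exact hfxcont.mono (fun s hs => le_trans hT₁0.le hs.1)
    rw [← intervalIntegral.integral_add_adjacent_intervals hI1 hI2]
    ring
  have hx0lim : Tendsto x atTop (𝓝 0) := by
    have h1 : Tendsto (fun t => (x t / A t) * A t) atTop (𝓝 (l * 0)) :=
      hxlim.mul hFinv0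
    rw [mul_zero] at h1
    apply h1.congr'
    filter_upwards [hFinv_pos] with t ht
    exact div_mul_cancel₀ _ ht.ne'
  refine ⟨((0 - x 0) + (∫ s in (0:ℝ)..T₁, f (x s))) + ∫ s in Ioi T₁, f (x s), ?_⟩
  have hT : Tendsto (fun t => ((x t - x 0) + (∫ s in (0:ℝ)..T₁, f (x s)))
      + ∫ s in T₁..t, f (x s)) atTop
      (𝓝 (((0 - x 0) + (∫ s in (0:ℝ)..T₁, f (x s))) + ∫ s in Ioi T₁, f (x s))) :=
    (((hx0lim.sub_const (x 0)).add_const _).add hlim1)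
  exact hT.congr' (hfinal.mono (fun t h => h.symm))
end

section
/- Let f:ℝ→ℝ be locally Lipschitz with xf(x)>0 for x≠0, f(0)=0, liminf_{x→+∞}|f(x)|>0 and liminf_{x→-∞}|f(x)|>0. Let g be continuous with lim_{t→∞}∫_0^t g(s)ds existing and finite. Then the unique continuous solution x of x'(t)=-f(x(t))+g(t), x(0)=ξ, satisfies x(t)→0 as t→∞. -/
/-!
Write `G t = ∫₀ᵗ g`. While `x ≥ c > 0` the drift `-f(x)` is nonpositive, so `x` can rise above
its last crossing of the level `c` by at most the increment of `G`; since `G` converges, its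
increments are eventually below any `δ > 0`. Hence `x` is eventually bounded above by some `B`,
and on `[δ, B]` the continuous positive `f` is at least some `m > 0`, so `x` cannot stay above
`δ` for long: it drops below `δ` once, and afterwards never exceeds `2δ`. Applying this to
`-x`, which solves the equation with `y ↦ -f (-y)` and `-g`, bounds `x` from below.
-/

open Filter MeasureTheory Set Topology

section

variable {f g x : ℝ → ℝ}

theorem ContinuousOn.exists_eq_forall_le_of_le_of_le {a b c : ℝ} (hx : ContinuousOn x (Icc a b))
    (hab : a ≤ b) (ha : x a ≤ c) (hb : c ≤ x b) :
    ∃ s ∈ Icc a b, x s = c ∧ ∀ u ∈ Icc s b, c ≤ x u := by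
  set S := Icc a b ∩ x ⁻¹' Iic c
  have hS : IsCompact S := isCompact_Icc.of_isClosed_subset
    (hx.preimage_isClosed_of_isClosed isClosed_Icc isClosed_Iic) inter_subset_left
  obtain ⟨s, ⟨hsI, hxs⟩, hmax⟩ := hS.exists_isGreatest ⟨a, ⟨le_rfl, hab⟩, ha⟩
  have hright : ∀ u ∈ Icc s b, x u ≤ c → u = s := fun u hu hxu =>
    le_antisymm (hmax ⟨⟨hsI.1.trans hu.1, hu.2⟩, hxu⟩) hu.1
  have hxs_eq : x s = c := by
    refine le_antisymm hxs (not_lt.1 fun hlt => ?_)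
    obtain ⟨u, hu, hxu⟩ := intermediate_value_Icc hsI.2 (hx.mono (Icc_subset_Icc_left hsI.1))
      ⟨hlt.le, hb⟩
    rw [hright u hu hxu.le] at hxu
    exact hlt.ne hxu
  refine ⟨s, hsI, hxs_eq, fun u hu => not_lt.1 fun hlt => ?_⟩
  rw [hright u hu hlt.le, hxs_eq] at hlt
  exact lt_irrefl c hlt

theorem exists_forall_integral_le_of_tendsto (hg : Continuous g) {L : ℝ}
    (hgint : Tendsto (fun t => ∫ s in (0:ℝ)..t, g s) atTop (𝓝 L)) {ε : ℝ} (hε : 0 < ε) :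
    ∃ T ≥ 0, ∀ s ≥ T, ∀ t ≥ T, ∫ u in s..t, g u ≤ ε := by
  obtain ⟨T, hT⟩ := Metric.cauchySeq_iff.1 hgint.cauchySeq ε hε
  refine ⟨max T 0, le_max_right _ _, fun s hs t ht => ?_⟩
  rw [← intervalIntegral.integral_interval_sub_left (hg.intervalIntegrable 0 t)
    (hg.intervalIntegrable 0 s)]
  have := hT t ((le_max_left _ _).trans ht) s ((le_max_left _ _).trans hs)
  rw [Real.dist_eq] at this
  linarith [le_abs_self ((∫ u in (0:ℝ)..t, g u) - ∫ u in (0:ℝ)..s, g u)]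

theorem apply_le_sub_mul_add_integral (hg : Continuous g)
    (hx : ∀ t ≥ 0, HasDerivAt x (-f (x t) + g t) t) {m s t : ℝ} (hs : 0 ≤ s) (hst : s ≤ t)
    (hm : ∀ u ∈ Icc s t, m ≤ f (x u)) :
    x t ≤ x s - m * (t - s) + ∫ u in s..t, g u := by
  set y : ℝ → ℝ := fun u => x u + m * u - ∫ v in s..u, g v
  have hy : ∀ u ∈ Icc s t, HasDerivAt y (-f (x u) + m) u := fun u hu =>
    (((hx u (hs.trans hu.1)).add ((hasDerivAt_id' u).const_mul m)).sub
      (hg.integral_hasStrictDerivAt s u).hasDerivAt).congr_deriv (by ring)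
  have hanti : AntitoneOn y (Icc s t) :=
    antitoneOn_of_hasDerivWithinAt_nonpos (convex_Icc s t)
      (fun u hu => (hy u hu).continuousAt.continuousWithinAt)
      (fun u hu => (hy u (interior_subset hu)).hasDerivWithinAt)
      (fun u hu => by linarith [hm u (interior_subset hu)])
  have := hanti ⟨le_rfl, hst⟩ ⟨hst, le_rfl⟩ hst
  simp only [y, intervalIntegral.integral_same] at this
  linarith

/-- Above the last time before `t` at which `x` equals `c`, the drift is nonpositive. -/
theorem le_add_of_forall_integral_le (hg : Continuous g)
    (hx : ∀ t ≥ 0, HasDerivAt x (-f (x t) + g t) t) {a t c δ : ℝ} (ha : 0 ≤ a) (hat : a ≤ t)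
    (hf : ∀ y ≥ c, 0 ≤ f y) (hxa : x a ≤ c) (hδ : ∀ s ∈ Icc a t, ∫ u in s..t, g u ≤ δ) :
    x t ≤ c + δ := by
  rcases le_total (x t) c with hxt | hxt
  · have := hδ t ⟨hat, le_rfl⟩
    rw [intervalIntegral.integral_same] at this
    linarith
  obtain ⟨s, hs, hxs, hcx⟩ := ContinuousOn.exists_eq_forall_le_of_le_of_le
    (fun u hu => (hx u (ha.trans hu.1)).continuousAt.continuousWithinAt) hat hxa hxt
  have := apply_le_sub_mul_add_integral hg hx (ha.trans hs.1) hs.2 fun u hu => hf _ (hcx u hu)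
  linarith [hδ s hs]

theorem exists_ge_apply_le (hf : Continuous f) (hpos : ∀ y > 0, 0 < f y) (hg : Continuous g)
    (hx : ∀ t ≥ 0, HasDerivAt x (-f (x t) + g t) t) {T B K ε : ℝ} (hT : 0 ≤ T) (hε : 0 < ε)
    (hB : ∀ t ≥ T, x t ≤ B) (hK : ∀ t ≥ T, ∫ u in T..t, g u ≤ K) :
    ∃ t ≥ T, x t ≤ ε := by
  set B' := max ε B
  obtain ⟨y₀, hy₀, hmin⟩ := isCompact_Icc.exists_isMinOn
    (nonempty_Icc.2 (le_max_left ε B)) hf.continuousOn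
  have hm : 0 < f y₀ := hpos y₀ (hε.trans_le hy₀.1)
  have hK0 : 0 ≤ K := by simpa using hK T le_rfl
  have hB'K : 0 ≤ B' + K := by linarith [le_max_left ε B]
  by_contra! hgt
  -- staying above `ε` for this long would use up more than the available budget `B' + K`
  set t := T + (B' + K) / f y₀
  have hTt : T ≤ t := le_add_of_nonneg_right (by positivity)
  have hxt := apply_le_sub_mul_add_integral hg hx hT hTt
    fun u hu => hmin ⟨(hgt u hu.1).le, (hB u hu.1).trans (le_max_right _ _)⟩
  have hmt : f y₀ * (t - T) = B' + K := by
    simp only [t]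
    field_simp
    ring
  linarith [hK t hTt, hB T le_rfl, hgt t hTt, le_max_right ε B]

theorem eventually_lt_of_tendsto_integral (hf : Continuous f) (hpos : ∀ y > 0, 0 < f y)
    (hg : Continuous g) {L : ℝ} (hgint : Tendsto (fun t => ∫ s in (0:ℝ)..t, g s) atTop (𝓝 L))
    (hx : ∀ t ≥ 0, HasDerivAt x (-f (x t) + g t) t) {ε : ℝ} (hε : 0 < ε) :
    ∀ᶠ t in atTop, x t < ε := by
  have hδ : 0 < ε / 3 := by positivity
  have hnonneg : ∀ c > 0, ∀ y ≥ c, 0 ≤ f y := fun c hc y hy => (hpos y (hc.trans_le hy)).le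
  obtain ⟨T, hT0, hT⟩ := exists_forall_integral_le_of_tendsto hg hgint hδ
  have hB : ∀ t ≥ T, x t ≤ max (x T) (ε / 3) + ε / 3 := fun t ht =>
    le_add_of_forall_integral_le hg hx hT0 ht (hnonneg _ (lt_max_of_lt_right hδ))
      (le_max_left _ _) fun s hs => hT s hs.1 t ht
  obtain ⟨t₁, ht₁, hxt₁⟩ :=
    exists_ge_apply_le hf hpos hg hx hT0 hδ hB fun t ht => hT T le_rfl t ht
  filter_upwards [eventually_ge_atTop t₁] with t ht
  have := le_add_of_forall_integral_le hg hx (hT0.trans ht₁) ht (hnonneg _ hδ) hxt₁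
    fun s hs => hT s (ht₁.trans hs.1) t (ht₁.trans ht)
  linarith

end

theorem stmt10_general (f g x : ℝ → ℝ) (L : ℝ)
    (hlip : LocallyLipschitz f) (hsign : ∀ y ≠ 0, 0 < y * f y)
    (hg : Continuous g)
    (hgint : Tendsto (fun t => ∫ s in (0:ℝ)..t, g s) atTop (𝓝 L))
    (hx : ∀ t ≥ 0, HasDerivAt x (-f (x t) + g t) t) :
    Tendsto x atTop (𝓝 0) := by
  have hf := hlip.continuous
  have hpos : ∀ y > 0, 0 < f y := fun y hy => pos_of_mul_pos_right (hsign y hy.ne') hy.le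
  have hpos' : ∀ y > 0, 0 < -f (-y) := fun y hy =>
    neg_pos.2 (neg_of_mul_pos_right (hsign (-y) (by linarith)) (by linarith))
  have hgint' : Tendsto (fun t => ∫ s in (0:ℝ)..t, -g s) atTop (𝓝 (-L)) := by
    simpa only [intervalIntegral.integral_neg] using hgint.neg
  have hx' : ∀ t ≥ 0, HasDerivAt (fun t => -x t) (-(-f (-(-x t))) + -g t) t := fun t ht =>
    (hx t ht).neg.congr_deriv (by simp only [neg_neg]; ring)
  refine tendsto_order.2 ⟨fun a ha => ?_, fun a ha =>
    eventually_lt_of_tendsto_integral hf hpos hg hgint hx ha⟩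
  filter_upwards [eventually_lt_of_tendsto_integral (hf.comp continuous_neg).neg hpos' hg.neg
    hgint' hx' (neg_pos.2 ha)] with t ht
  linarith

/-- Global convergence to 0 for `x' = -f(x) + g` when `f` is locally
Lipschitz, `x f(x) > 0` for `x ≠ 0`, `liminf_{±∞} |f| > 0` and `∫_0^t g` converges. -/
theorem stmt10 (f g x : ℝ → ℝ) (ξ L : ℝ)
    (hlip : LocallyLipschitz f) (hsign : ∀ y ≠ 0, 0 < y * f y) (hf0 : f 0 = 0)
    (hpinf : ∃ c > 0, ∀ᶠ y in atTop, c ≤ |f y|)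
    (hminf : ∃ c > 0, ∀ᶠ y in atBot, c ≤ |f y|)
    (hg : Continuous g)
    (hgint : Tendsto (fun t => ∫ s in (0:ℝ)..t, g s) atTop (𝓝 L))
    (hx : ∀ t ≥ 0, HasDerivAt x (-f (x t) + g t) t)
    (hx0 : x 0 = ξ) :
    Tendsto x atTop (𝓝 0) :=
  stmt10_general f g x L hlip hsign hg hgint hx
end

section
/- Let k∈C¹((0,∞);(0,∞)) be non-integrable on [0,∞) with k(t)→0 as t→∞, and suppose that for each T>0, sup_{0≤s≤T}|k(t+s)/k(t)−1|→0 and sup_{0≤s≤T}|k'(t+s)/k'(t)−1|→0 as t→∞. Define k₀(t)=k(t)sin(t). Then lim_{t→∞}∫_0^t k₀(s)ds exists and is finite, while ∫_0^t |k₀(s)|ds → +∞ as t→∞. -/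
/-!
Integrating by parts, `∫ k v' = [k v] - ∫ k' v`, so `∫ k v'` converges for every bounded `v`
with continuous derivative as soon as `k → 0` and `k'` is integrable at infinity. The latter holds
because `k'(t + 0) / k'(t) → 1` forces `k'` to be eventually nonzero, hence of one sign, so `k` is
eventually monotone with a finite limit. Taking `v = -cos` gives the convergence of `∫ k sin`.
For the divergence, `|k sin| ≥ k sin² = k / 2 - k cos(2s) / 2`, where `∫ k` diverges and
`∫ k cos(2s)` converges (take `v = sin(2s) / 2`).
-/

open Real Filter MeasureTheory Set Topology

theorem IsPreconnected.forall_pos_or_forall_neg {α : Type*} [TopologicalSpace α] {s : Set α}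
    (hs : IsPreconnected s) {f : α → ℝ} (hf : ContinuousOn f s) (hne : ∀ x ∈ s, f x ≠ 0) :
    (∀ x ∈ s, 0 < f x) ∨ (∀ x ∈ s, f x < 0) := by
  by_contra! h
  obtain ⟨⟨x, hxs, hx⟩, ⟨y, hys, hy⟩⟩ := h
  obtain ⟨z, hzs, hz⟩ := hs.intermediate_value hxs hys hf ⟨hx, hy⟩
  exact hne z hzs hz

theorem eventually_ne_zero_of_tendstoUniformlyOn_div {f : ℝ → ℝ} {T : ℝ} (hT : 0 ≤ T)
    (h : TendstoUniformlyOn (fun t s => f (t + s) / f t) (fun _ => 1) atTop (Icc 0 T)) :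
    ∀ᶠ t in atTop, f t ≠ 0 := by
  filter_upwards [(h.tendsto_at (left_mem_Icc.2 hT)).eventually_ne one_ne_zero] with t ht h0
  simp [h0] at ht

theorem integrableOn_Ioi_deriv_of_eventually_ne_zero {f f' : ℝ → ℝ} {a m : ℝ}
    (hderiv : ∀ x ∈ Ici a, HasDerivAt f (f' x) x) (hf' : ContinuousOn f' (Ici a))
    (hne : ∀ᶠ x in atTop, f' x ≠ 0) (hf : Tendsto f atTop (𝓝 m)) :
    IntegrableOn f' (Ioi a) := by
  obtain ⟨b, hb⟩ := eventually_atTop.1 (hne.and (eventually_ge_atTop a))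
  have hab : a ≤ b := (hb b le_rfl).2
  have hIcib : Ici b ⊆ Ici a := Ici_subset_Ici.2 hab
  have htail : IntegrableOn f' (Ioi b) := by
    rcases isPreconnected_Ici.forall_pos_or_forall_neg (hf'.mono hIcib)
      (fun x hx => (hb x hx).1) with hpos | hneg
    · exact integrableOn_Ioi_deriv_of_nonneg' (fun x hx => hderiv x (hIcib hx))
        (fun x hx => (hpos x (Ioi_subset_Ici_self hx)).le) hf
    · exact integrableOn_Ioi_deriv_of_nonpos' (fun x hx => hderiv x (hIcib hx))
        (fun x hx => (hneg x (Ioi_subset_Ici_self hx)).le) hf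
  have hhead : IntegrableOn f' (Ioc a b) :=
    ((hf'.mono Icc_subset_Ici_self).integrableOn_Icc).mono_set Ioc_subset_Icc_self
  rw [← Ioc_union_Ioi_eq_Ioi hab]
  exact hhead.union htail

theorem exists_tendsto_integral_mul_deriv {k k' v v' : ℝ → ℝ} {a C : ℝ}
    (hkd : ∀ x ∈ Ici a, HasDerivAt k (k' x) x) (hk' : IntegrableOn k' (Ioi a))
    (hk0 : Tendsto k atTop (𝓝 0)) (hvd : ∀ x, HasDerivAt v (v' x) x) (hv' : Continuous v')
    (hvC : ∀ x, |v x| ≤ C) :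
    ∃ L, Tendsto (fun t => ∫ s in a..t, k s * v' s) atTop (𝓝 L) := by
  have hv : Continuous v := continuous_iff_continuousAt.2 fun x => (hvd x).continuousAt
  have hk'v : IntegrableOn (fun s => k' s * v s) (Ioi a) :=
    hk'.mul_bdd hv.aestronglyMeasurable (ae_of_all _ fun x => (norm_eq_abs (v x)).le.trans (hvC x))
  have hkv : Tendsto (fun t => k t * v t) atTop (𝓝 0) :=
    hk0.zero_mul_isBoundedUnder_le ⟨C, eventually_map.2 (Eventually.of_forall fun x => hvC x)⟩
  refine ⟨0 - k a * v a - ∫ s in Ioi a, k' s * v s, ?_⟩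
  refine ((hkv.sub_const _).sub (intervalIntegral_tendsto_integral_Ioi a hk'v tendsto_id)).congr' ?_
  filter_upwards [eventually_ge_atTop a] with t hat
  have hsub : uIcc a t ⊆ Ici a := by rw [uIcc_of_le hat]; exact Icc_subset_Ici_self
  refine (intervalIntegral.integral_mul_deriv_eq_deriv_mul (fun x hx => hkd x (hsub hx))
    (fun x _ => hvd x) ?_ (hv'.intervalIntegrable _ _)).symm
  exact (intervalIntegrable_iff_integrableOn_Ioc_of_le hat).2 (hk'.mono_set Ioc_subset_Ioi_self)

theorem half_sub_half_mul_cos_two_mul_le_abs_mul_sin {c : ℝ} (hc : 0 ≤ c) (x : ℝ) :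
    c / 2 - c * cos (2 * x) / 2 ≤ |c * sin x| := by
  have hsq : sin x ^ 2 ≤ |sin x| := by
    rw [← sq_abs]
    exact pow_le_of_le_one (abs_nonneg _) (abs_sin_le_one x) two_ne_zero
  calc c / 2 - c * cos (2 * x) / 2 = c * sin x ^ 2 := by rw [sin_sq_eq_half_sub]; ring
    _ ≤ c * |sin x| := mul_le_mul_of_nonneg_left hsq hc
    _ = |c * sin x| := by rw [abs_mul, abs_of_nonneg hc]

theorem tendsto_integral_abs_mul_sin_atTop {k : ℝ → ℝ} {a : ℝ} (hk : ∀ x ∈ Ici a, 0 ≤ k x)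
    (hkc : ContinuousOn k (Ici a)) (hnonint : Tendsto (fun t => ∫ s in a..t, k s) atTop atTop)
    (hcos : ∃ L, Tendsto (fun t => ∫ s in a..t, k s * cos (2 * s)) atTop (𝓝 L)) :
    Tendsto (fun t => ∫ s in a..t, |k s * sin s|) atTop atTop := by
  obtain ⟨L, hL⟩ := hcos
  have hlower : Tendsto (fun t => (∫ s in a..t, k s) / 2 - (∫ s in a..t, k s * cos (2 * s)) / 2)
      atTop atTop := by
    simpa only [sub_eq_add_neg] using
      (hnonint.atTop_div_const two_pos).atTop_add (hL.div_const 2).neg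
  refine tendsto_atTop_mono' atTop ?_ hlower
  filter_upwards [eventually_ge_atTop a] with t hat
  have hkt : ContinuousOn k (uIcc a t) := hkc.mono (by rw [uIcc_of_le hat]; exact Icc_subset_Ici_self)
  have hcos2 : Continuous fun s : ℝ => cos (2 * s) := by fun_prop
  have hI : IntervalIntegrable k volume a t := hkt.intervalIntegrable
  have hIcos : IntervalIntegrable (fun s => k s * cos (2 * s)) volume a t :=
    (hkt.mul hcos2.continuousOn).intervalIntegrable
  rw [← intervalIntegral.integral_div, ← intervalIntegral.integral_div,
    ← intervalIntegral.integral_sub (hI.div_const 2) (hIcos.div_const 2)]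
  refine intervalIntegral.integral_mono_on hat ((hI.div_const 2).sub (hIcos.div_const 2))
    (hkt.mul continuous_sin.continuousOn).abs.intervalIntegrable fun x hx => ?_
  exact half_sub_half_mul_cos_two_mul_le_abs_mul_sin (hk x hx.1) x

theorem stmt12_general (k k' : ℝ → ℝ)
    (hkpos : ∀ t > 0, 0 < k t)
    (hkd : ∀ t > 0, HasDerivAt k (k' t) t)
    (hk'c : ContinuousOn k' (Ioi 0))
    (hnonint : Tendsto (fun t => ∫ s in (1:ℝ)..t, k s) atTop atTop)
    (hk0 : Tendsto k atTop (𝓝 0))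
    (hunif' : ∀ T > 0, TendstoUniformlyOn (fun t s => k' (t + s) / k' t)
      (fun _ => 1) atTop (Icc 0 T)) :
    (∃ L, Tendsto (fun t => ∫ s in (1:ℝ)..t, k s * Real.sin s) atTop (𝓝 L)) ∧
    Tendsto (fun t => ∫ s in (1:ℝ)..t, |k s * Real.sin s|) atTop atTop := by
  have hpos : Ici (1 : ℝ) ⊆ Ioi 0 := Ici_subset_Ioi.2 zero_lt_one
  have hkd1 : ∀ x ∈ Ici (1 : ℝ), HasDerivAt k (k' x) x := fun x hx => hkd x (hpos hx)
  have hk' : IntegrableOn k' (Ioi 1) :=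
    integrableOn_Ioi_deriv_of_eventually_ne_zero hkd1 (hk'c.mono hpos)
      (eventually_ne_zero_of_tendstoUniformlyOn_div zero_le_one (hunif' 1 one_pos)) hk0
  have hsin : ∃ L, Tendsto (fun t => ∫ s in (1:ℝ)..t, k s * sin s) atTop (𝓝 L) :=
    exists_tendsto_integral_mul_deriv (v := fun s => -cos s) (C := 1) hkd1 hk' hk0
      (fun x => by simpa using (hasDerivAt_cos x).fun_neg) continuous_sin
      (fun x => by simpa only [abs_neg] using abs_cos_le_one x)
  have hcos : ∃ L, Tendsto (fun t => ∫ s in (1:ℝ)..t, k s * cos (2 * s)) atTop (𝓝 L) :=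
    exists_tendsto_integral_mul_deriv (v := fun s => sin (2 * s) / 2) (C := 1) hkd1 hk' hk0
      (fun x => by simpa using ((hasDerivAt_id x).const_mul 2).sin.div_const 2)
      (by fun_prop)
      (fun x => by rw [abs_div, abs_two]; linarith [abs_sin_le_one (2 * x)])
  exact ⟨hsin, tendsto_integral_abs_mul_sin_atTop (fun x hx => (hkpos x (hpos hx)).le)
    (fun x hx => (hkd1 x hx).continuousAt.continuousWithinAt) hnonint hcos⟩

/-- If `k ∈ C¹((0,∞);(0,∞))` is non-integrable with `k(t) → 0` and
`k(t+s)/k(t) → 1`, `k'(t+s)/k'(t) → 1` uniformly on bounded windows, then the signed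
integral `∫ k(s) sin(s) ds` converges while the absolute integral diverges. -/
theorem stmt12 (k k' : ℝ → ℝ)
    (hkpos : ∀ t > 0, 0 < k t)
    (hkd : ∀ t > 0, HasDerivAt k (k' t) t)
    (hk'c : ContinuousOn k' (Ioi 0))
    (hnonint : Tendsto (fun t => ∫ s in (1:ℝ)..t, k s) atTop atTop)
    (hk0 : Tendsto k atTop (𝓝 0))
    (hunif : ∀ T > 0, TendstoUniformlyOn (fun t s => k (t + s) / k t)
      (fun _ => 1) atTop (Icc 0 T))
    (hunif' : ∀ T > 0, TendstoUniformlyOn (fun t s => k' (t + s) / k' t)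
      (fun _ => 1) atTop (Icc 0 T)) :
    (∃ L, Tendsto (fun t => ∫ s in (1:ℝ)..t, k s * Real.sin s) atTop (𝓝 L)) ∧
    Tendsto (fun t => ∫ s in (1:ℝ)..t, |k s * Real.sin s|) atTop atTop :=
  stmt12_general k k' hkpos hkd hk'c hnonint hk0 hunif'
end

section
/- Under the hypotheses of the previous statement (k∈C¹ positive, non-integrable, k(t)→0, with the uniform asymptotic conditions on k and k' over bounded windows), with k₀(t)=k(t)sin(t), one has lim_{t→∞}( (∫_t^∞ k₀(s)ds)/k(t) − cos(t) ) = 0; in particular limsup_{t→∞}|∫_t^∞ k₀(s)ds|/k(t)=1 and liminf_{t→∞}|∫_t^∞ k₀(s)ds|/k(t)=0. -/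
/-!
Integration by parts gives `∫_t^∞ k sin = k(t) cos t + ∫_t^∞ k' cos`, so everything reduces to
`∫_t^∞ k' cos = o(k(t))`. Eventually `k'` is negative and, by the uniform ratio condition, almost
constant on each period `[a, a + 2π]`; as `∫ cos` vanishes over a period, the integral of `k' cos`
there is small compared with `∫ (-k') = k(a) - k(a + 2π)`, and these drops telescope to at most
`k(t)`. Hence `|∫_t^∞ k₀| / k(t) - |cos t| → 0`, and the limsup and liminf are those of `|cos|`.
-/

open Real Filter MeasureTheory Set Topology
open Asymptotics intervalIntegral

section LimsupLiminf

variable {ι : Type*} {l : Filter ι} [l.NeBot] {f g : ι → ℝ}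

lemma limsup_eq_of_tendsto_sub (hg₁ : IsBoundedUnder (· ≤ ·) l g)
    (hg₂ : IsBoundedUnder (· ≥ ·) l g) (h : Tendsto (fun i => f i - g i) l (𝓝 0)) :
    limsup f l = limsup g l := by
  have hf : f = g + fun i => f i - g i := by ext; simp
  rw [hf]
  refine le_antisymm ?_ ?_
  · calc limsup (g + fun i => f i - g i) l
        ≤ limsup g l + limsup (fun i => f i - g i) l :=
          limsup_add_le hg₂ hg₁ h.isBoundedUnder_ge.isCoboundedUnder_le h.isBoundedUnder_le
      _ = limsup g l := by rw [h.limsup_eq, add_zero]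
  · calc limsup g l = limsup g l + liminf (fun i => f i - g i) l := by
          rw [h.liminf_eq, add_zero]
      _ ≤ limsup (g + fun i => f i - g i) l :=
          le_limsup_add hg₁ hg₂.isCoboundedUnder_le h.isBoundedUnder_le h.isBoundedUnder_ge

lemma liminf_eq_of_tendsto_sub (hg₁ : IsBoundedUnder (· ≤ ·) l g)
    (hg₂ : IsBoundedUnder (· ≥ ·) l g) (h : Tendsto (fun i => f i - g i) l (𝓝 0)) :
    liminf f l = liminf g l := by
  have hf : f = (fun i => f i - g i) + g := by ext; simp
  rw [hf]
  refine le_antisymm ?_ ?_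
  · calc liminf ((fun i => f i - g i) + g) l
        ≤ limsup (fun i => f i - g i) l + liminf g l :=
          liminf_add_le h.isBoundedUnder_ge h.isBoundedUnder_le hg₂ hg₁.isCoboundedUnder_ge
      _ = liminf g l := by rw [h.limsup_eq, zero_add]
  · calc liminf g l = liminf (fun i => f i - g i) l + liminf g l := by
          rw [h.liminf_eq, zero_add]
      _ ≤ liminf ((fun i => f i - g i) + g) l :=
          le_liminf_add h.isBoundedUnder_ge h.isBoundedUnder_le hg₂ hg₁.isCoboundedUnder_ge

end LimsupLiminf

lemma isBoundedUnder_le_abs_cos : IsBoundedUnder (· ≤ ·) atTop fun t => |cos t| :=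
  isBoundedUnder_of ⟨1, abs_cos_le_one⟩

lemma isBoundedUnder_ge_abs_cos : IsBoundedUnder (· ≥ ·) atTop fun t => |cos t| :=
  isBoundedUnder_of ⟨0, fun t => abs_nonneg (cos t)⟩

lemma limsup_abs_cos_atTop : limsup (fun t => |cos t|) atTop = 1 := by
  have hfreq : ∃ᶠ t in atTop, 1 ≤ |cos t| :=
    (tendsto_natCast_atTop_atTop.atTop_mul_const two_pi_pos).frequently
      (Frequently.of_forall fun n => by simp [cos_nat_mul_two_pi])
  exact le_antisymm
    (limsup_le_of_le isBoundedUnder_ge_abs_cos.isCoboundedUnder_le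
      (Eventually.of_forall abs_cos_le_one))
    (le_limsup_of_frequently_le hfreq isBoundedUnder_le_abs_cos)

lemma liminf_abs_cos_atTop : liminf (fun t => |cos t|) atTop = 0 := by
  have hfreq : ∃ᶠ t in atTop, |cos t| ≤ 0 :=
    (tendsto_atTop_add_const_left _ (π / 2)
      (tendsto_natCast_atTop_atTop.atTop_mul_const two_pi_pos)).frequently
      (Frequently.of_forall fun n => by simp [cos_add_nat_mul_two_pi])
  exact le_antisymm (liminf_le_of_frequently_le hfreq isBoundedUnder_ge_abs_cos)
    (le_liminf_of_le isBoundedUnder_le_abs_cos.isCoboundedUnder_ge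
      (Eventually.of_forall fun t => abs_nonneg (cos t)))

lemma uIcc_subset_Ioi {a b c : ℝ} (ha : c < a) (hb : c < b) : uIcc a b ⊆ Ioi c :=
  fun _ hx => (lt_min ha hb).trans_le hx.1

lemma TendstoUniformlyOn.eventually_ne_zero_and_abs_sub_le {g : ℝ → ℝ} {S : Set ℝ}
    (h : TendstoUniformlyOn (fun t s => g (t + s) / g t) (fun _ => 1) atTop S) (h0 : (0 : ℝ) ∈ S)
    {ε : ℝ} (hε : 0 < ε) :
    ∀ᶠ t in atTop, g t ≠ 0 ∧ ∀ s ∈ S, |g (t + s) - g t| ≤ ε * |g t| := by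
  have hne : ∀ᶠ t in atTop, g t ≠ 0 := by
    filter_upwards [(h.tendsto_at h0).eventually_ne one_ne_zero] with t ht hgt
    simp [hgt] at ht
  filter_upwards [hne, Metric.tendstoUniformlyOn_iff.mp h ε hε] with t hgt hclose
  refine ⟨hgt, fun s hs => ?_⟩
  have := hclose s hs
  rw [dist_comm, Real.dist_eq, div_sub_one hgt, abs_div, div_lt_iff₀ (abs_pos.2 hgt)] at this
  exact this.le

/-- A positive function tending to `0` cannot eventually increase, so a derivative without
zeros must, by Darboux's theorem, be eventually negative. -/
lemma eventually_neg_of_hasDerivAt_of_tendsto_zero {k k' : ℝ → ℝ}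
    (hkpos : ∀ᶠ t in atTop, 0 < k t) (hkd : ∀ᶠ t in atTop, HasDerivAt k (k' t) t)
    (hne : ∀ᶠ t in atTop, k' t ≠ 0) (hk0 : Tendsto k atTop (𝓝 0)) :
    ∀ᶠ t in atTop, k' t < 0 := by
  obtain ⟨t₀, ht₀⟩ := eventually_atTop.1 (hkpos.and (hkd.and hne))
  have hderiv : ∀ t ∈ Ici t₀, HasDerivWithinAt k (k' t) (Ici t₀) t :=
    fun t ht => (ht₀ t ht).2.1.hasDerivWithinAt
  rcases hasDerivWithinAt_forall_lt_or_forall_gt_of_forall_ne (convex_Ici t₀) hderiv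
    (fun t ht => (ht₀ t ht).2.2) with hneg | hpos
  · exact eventually_atTop.2 ⟨t₀, hneg⟩
  have hmono : MonotoneOn k (Ici t₀) :=
    monotoneOn_of_hasDerivWithinAt_nonneg (convex_Ici t₀)
      (fun t ht => (hderiv t ht).continuousWithinAt)
      (fun t ht => (ht₀ t (interior_subset ht)).2.1.hasDerivWithinAt)
      (fun t ht => (hpos t (interior_subset ht)).le)
  obtain ⟨t, hlt, ht⟩ :=
    ((hk0.eventually (gt_mem_nhds (ht₀ t₀ le_rfl).1)).and (eventually_ge_atTop t₀)).exists
  exact absurd (hmono self_mem_Ici ht ht) hlt.not_ge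

lemma tendsto_integral_deriv_mul_cos {k k' : ℝ → ℝ} {L t : ℝ}
    (hkd : ∀ t > 0, HasDerivAt k (k' t) t) (hk'c : ContinuousOn k' (Ioi 0))
    (hk0 : Tendsto k atTop (𝓝 0))
    (hL : Tendsto (fun t => ∫ s in (1 : ℝ)..t, k s * sin s) atTop (𝓝 L)) (ht : 0 < t) :
    Tendsto (fun T => ∫ s in t..T, k' s * cos s) atTop
      (𝓝 (L - (∫ s in (1 : ℝ)..t, k s * sin s) - k t * cos t)) := by
  have hint : ∀ {a b : ℝ}, 0 < a → 0 < b →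
      IntervalIntegrable (fun s => k s * sin s) volume a b := fun ha hb =>
    (ContinuousOn.mul (fun x hx => (hkd x (uIcc_subset_Ioi ha hb hx)).continuousAt
      |>.continuousWithinAt) continuous_sin.continuousOn).intervalIntegrable
  have hparts : ∀ T > 0, ∫ s in t..T, k' s * cos s
      = (∫ s in (1 : ℝ)..T, k s * sin s) - (∫ s in (1 : ℝ)..t, k s * sin s) - k t * cos t
        + k T * cos T := by
    intro T hT
    have h := intervalIntegral.integral_mul_deriv_eq_deriv_mul (u := cos)
      (u' := fun s => -sin s) (fun x _ => hasDerivAt_cos x)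
      (fun x hx => hkd x (uIcc_subset_Ioi ht hT hx)) (continuous_sin.neg.intervalIntegrable _ _)
      (hk'c.mono (uIcc_subset_Ioi ht hT)).intervalIntegrable
    rw [integral_interval_sub_left (hint one_pos hT) (hint one_pos ht)]
    simp only [neg_mul, intervalIntegral.integral_neg, sub_neg_eq_add] at h
    simp only [mul_comm (cos _), mul_comm (sin _)] at h
    linarith
  have hcos : Tendsto (fun T => k T * cos T) atTop (𝓝 0) :=
    hk0.zero_mul_isBoundedUnder_le
      (isBoundedUnder_of ⟨1, fun T => by simpa using abs_cos_le_one T⟩)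
  refine Tendsto.congr' ((eventually_gt_atTop 0).mono fun T hT => (hparts T hT).symm) ?_
  simpa using ((hL.sub_const _).sub_const _).add hcos

lemma abs_integral_mul_cos_le {g : ℝ → ℝ} {a δ : ℝ}
    (hg : IntervalIntegrable g volume a (a + 2 * π))
    (hδ : ∀ s ∈ Icc a (a + 2 * π), |g s - g a| ≤ δ) :
    |∫ s in a..a + 2 * π, g s * cos s| ≤ δ * (2 * π) := by
  have hcos : ∫ s in a..a + 2 * π, g a * cos s = 0 := by simp [integral_cos, sin_add_two_pi]
  have hshift : ∫ s in a..a + 2 * π, g s * cos s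
      = ∫ s in a..a + 2 * π, (g s - g a) * cos s := by
    simp_rw [sub_mul]
    rw [intervalIntegral.integral_sub (g := fun s => g a * cos s)
      (hg.mul_continuousOn continuous_cos.continuousOn)
      ((continuous_const.mul continuous_cos).intervalIntegrable _ _), hcos, sub_zero]
  have hbound := norm_integral_le_of_norm_le_const (a := a) (b := a + 2 * π)
    (f := fun s => (g s - g a) * cos s) (C := δ) fun s hs => by
      rw [uIoc_of_le (by linarith [two_pi_pos])] at hs
      rw [norm_mul, Real.norm_eq_abs, Real.norm_eq_abs]
      exact (mul_le_of_le_one_right (abs_nonneg _) (abs_cos_le_one s)).trans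
        (hδ s (Ioc_subset_Icc_self hs))
  rw [hshift, ← Real.norm_eq_abs]
  simpa [abs_of_pos pi_pos] using hbound

lemma abs_integral_deriv_mul_cos_le {k k' : ℝ → ℝ} {a ε : ℝ} (hε₀ : 0 ≤ ε) (hε₁ : ε < 1)
    (ha : k' a < 0) (hkd : ∀ s ∈ Icc a (a + 2 * π), HasDerivAt k (k' s) s)
    (hk'c : ContinuousOn k' (Icc a (a + 2 * π)))
    (hnear : ∀ s ∈ Icc a (a + 2 * π), |k' s - k' a| ≤ ε * |k' a|) :
    |∫ s in a..a + 2 * π, k' s * cos s| ≤ ε / (1 - ε) * (k a - k (a + 2 * π)) := by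
  have hle : a ≤ a + 2 * π := by linarith [two_pi_pos]
  have hint : IntervalIntegrable k' volume a (a + 2 * π) := hk'c.intervalIntegrable_of_Icc hle
  have hdrop : (1 - ε) * |k' a| * (2 * π) ≤ k a - k (a + 2 * π) := by
    have hftc : ∫ s in a..a + 2 * π, k' s = k (a + 2 * π) - k a :=
      integral_eq_sub_of_hasDerivAt (fun s hs => hkd s (by rwa [uIcc_of_le hle] at hs)) hint
    have hmono := integral_mono_on hle hint intervalIntegrable_const
      fun s hs => (le_abs_self _).trans (hnear s hs) |> sub_le_iff_le_add'.1
    rw [intervalIntegral.integral_const, smul_eq_mul, hftc, abs_of_neg ha] at hmono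
    rw [abs_of_neg ha]
    linarith
  calc |∫ s in a..a + 2 * π, k' s * cos s| ≤ ε * |k' a| * (2 * π) :=
        abs_integral_mul_cos_le hint hnear
    _ = ε / (1 - ε) * ((1 - ε) * |k' a| * (2 * π)) := by field_simp [(sub_pos.2 hε₁).ne']
    _ ≤ ε / (1 - ε) * (k a - k (a + 2 * π)) := by gcongr

lemma abs_integral_le_of_forall_abs_integral_period_le {g φ : ℝ → ℝ} {t p c : ℝ}
    (hg : ∀ a ≥ t, IntervalIntegrable g volume a (a + p)) (hp : 0 ≤ p)
    (h : ∀ a ≥ t, |∫ s in a..a + p, g s| ≤ c * (φ a - φ (a + p))) (N : ℕ) :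
    |∫ s in t..t + N * p, g s| ≤ c * (φ t - φ (t + N * p)) := by
  have hstep : ∀ n : ℕ, t + n * p ≥ t ∧ t + (n + 1 : ℕ) * p = t + n * p + p := fun n =>
    ⟨le_add_of_nonneg_right (by positivity), by push_cast; ring⟩
  have hsum := sum_integral_adjacent_intervals (a := fun n : ℕ => t + n * p) (n := N)
    fun n _ => by simpa only [(hstep n).2] using hg _ (hstep n).1
  simp only [Nat.cast_zero, zero_mul, add_zero] at hsum
  rw [← hsum]
  calc |∑ n ∈ Finset.range N, ∫ s in t + n * p..t + (n + 1 : ℕ) * p, g s|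
      ≤ ∑ n ∈ Finset.range N, |∫ s in t + n * p..t + (n + 1 : ℕ) * p, g s| :=
        Finset.abs_sum_le_sum_abs _ _
    _ ≤ ∑ n ∈ Finset.range N, c * (φ (t + n * p) - φ (t + (n + 1 : ℕ) * p)) :=
        Finset.sum_le_sum fun n _ => by simpa only [(hstep n).2] using h _ (hstep n).1
    _ = c * (φ t - φ (t + N * p)) := by
        rw [← Finset.mul_sum, Finset.sum_range_sub' (fun n : ℕ => φ (t + n * p))]
        simp

lemma isLittleO_tail_integral_deriv_mul_cos {k k' G : ℝ → ℝ}
    (hkpos : ∀ t > 0, 0 < k t) (hkd : ∀ t > 0, HasDerivAt k (k' t) t)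
    (hk'c : ContinuousOn k' (Ioi 0)) (hk0 : Tendsto k atTop (𝓝 0))
    (hunif' : TendstoUniformlyOn (fun t s => k' (t + s) / k' t) (fun _ => 1) atTop
      (Icc 0 (2 * π)))
    (hG : ∀ᶠ t in atTop, Tendsto (fun T => ∫ s in t..T, k' s * cos s) atTop (𝓝 (G t))) :
    G =o[atTop] k := by
  rw [isLittleO_iff]
  intro δ hδ
  set ε := δ / (1 + δ) with hε
  have hε₀ : 0 < ε := by positivity
  have hε₁ : ε < 1 := (div_lt_one (by linarith)).2 (by linarith)
  have hεδ : ε / (1 - ε) = δ := by rw [hε]; field_simp; ring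
  have hnear := hunif'.eventually_ne_zero_and_abs_sub_le ⟨le_rfl, two_pi_pos.le⟩ hε₀
  have hneg := eventually_neg_of_hasDerivAt_of_tendsto_zero
    ((eventually_gt_atTop 0).mono hkpos) ((eventually_gt_atTop 0).mono hkd)
    (hnear.mono fun _ h => h.1) hk0
  obtain ⟨t₀, ht₀⟩ := eventually_atTop.1 ((hneg.and hnear).and (eventually_gt_atTop 0))
  have hperiod : ∀ a ≥ t₀,
      |∫ s in a..a + 2 * π, k' s * cos s| ≤ δ * (k a - k (a + 2 * π)) := by
    intro a ha
    obtain ⟨⟨hka, -, hclose⟩, ha₀⟩ := ht₀ a ha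
    rw [← hεδ]
    refine abs_integral_deriv_mul_cos_le hε₀.le hε₁ hka
      (fun s hs => hkd s (by linarith [hs.1]))
      (hk'c.mono fun s hs => show (0 : ℝ) < s by linarith [hs.1]) fun s hs => ?_
    simpa using hclose (s - a) ⟨by linarith [hs.1], by linarith [hs.2]⟩
  filter_upwards [hG, eventually_ge_atTop t₀] with t hGt ht
  have ht₀' : 0 < t := (ht₀ t ht).2
  rw [Real.norm_eq_abs, Real.norm_eq_abs, abs_of_pos (hkpos t ht₀')]
  have hseq : Tendsto (fun N : ℕ => t + N * (2 * π)) atTop atTop :=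
    tendsto_atTop_add_const_left _ _ (tendsto_natCast_atTop_atTop.atTop_mul_const two_pi_pos)
  refine le_of_tendsto (hGt.comp hseq).abs (Eventually.of_forall fun N => ?_)
  have hpos : 0 < k (t + N * (2 * π)) := hkpos _ (by positivity)
  calc |∫ s in t..t + N * (2 * π), k' s * cos s| ≤ δ * (k t - k (t + N * (2 * π))) :=
        abs_integral_le_of_forall_abs_integral_period_le
          (fun a ha => (hk'c.mul continuous_cos.continuousOn |>.mono
            (uIcc_subset_Ioi (by linarith) (by linarith [two_pi_pos]))).intervalIntegrable)
          two_pi_pos.le (fun a ha => hperiod a (ht.trans ha)) N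
    _ ≤ δ * k t := by nlinarith

theorem stmt13_general (k k' : ℝ → ℝ) (L : ℝ)
    (hkpos : ∀ t > 0, 0 < k t)
    (hkd : ∀ t > 0, HasDerivAt k (k' t) t)
    (hk'c : ContinuousOn k' (Ioi 0))
    (hk0 : Tendsto k atTop (𝓝 0))
    (hunif' : ∀ T > 0, TendstoUniformlyOn (fun t s => k' (t + s) / k' t)
      (fun _ => 1) atTop (Icc 0 T))
    (hL : Tendsto (fun t => ∫ s in (1:ℝ)..t, k s * Real.sin s) atTop (𝓝 L)) :
    Tendsto (fun t => (L - ∫ s in (1:ℝ)..t, k s * Real.sin s) / k t - Real.cos t)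
      atTop (𝓝 0) ∧
    limsup (fun t => |L - ∫ s in (1:ℝ)..t, k s * Real.sin s| / k t) atTop = 1 ∧
    liminf (fun t => |L - ∫ s in (1:ℝ)..t, k s * Real.sin s| / k t) atTop = 0 := by
  set F := fun t => L - ∫ s in (1:ℝ)..t, k s * sin s
  have hk : ∀ᶠ t in atTop, 0 < k t := (eventually_gt_atTop 0).mono hkpos
  have hG : (fun t => F t - k t * cos t) =o[atTop] k :=
    isLittleO_tail_integral_deriv_mul_cos hkpos hkd hk'c hk0 (hunif' _ two_pi_pos)
      ((eventually_gt_atTop 0).mono fun _ ht =>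
        tendsto_integral_deriv_mul_cos hkd hk'c hk0 hL ht)
  have h₁ : Tendsto (fun t => F t / k t - cos t) atTop (𝓝 0) :=
    hG.tendsto_div_nhds_zero.congr' (hk.mono fun t ht => by field_simp)
  have h₂ : Tendsto (fun t => |F t| / k t - |cos t|) atTop (𝓝 0) := by
    refine squeeze_zero_norm' (a := fun t => |F t / k t - cos t|) (hk.mono fun t ht => ?_)
      (by simpa using h₁.abs)
    have h := abs_abs_sub_abs_le_abs_sub (F t / k t) (cos t)
    rwa [abs_div, abs_of_pos ht, ← Real.norm_eq_abs] at h
  exact ⟨h₁,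
    (limsup_eq_of_tendsto_sub isBoundedUnder_le_abs_cos isBoundedUnder_ge_abs_cos h₂).trans
      limsup_abs_cos_atTop,
    (liminf_eq_of_tendsto_sub isBoundedUnder_le_abs_cos isBoundedUnder_ge_abs_cos h₂).trans
      liminf_abs_cos_atTop⟩

/-- Under the hypotheses of the previous lemma, with
`k₀(t) = k(t) sin(t)` and `∫_1^t k₀ → L`, one has
`(∫_t^∞ k₀)/k(t) − cos(t) → 0`; in particular the limsup of `|∫_t^∞ k₀|/k(t)` is `1`
and the liminf is `0`. -/
theorem stmt13 (k k' : ℝ → ℝ) (L : ℝ)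
    (hkpos : ∀ t > 0, 0 < k t)
    (hkd : ∀ t > 0, HasDerivAt k (k' t) t)
    (hk'c : ContinuousOn k' (Ioi 0))
    (hnonint : Tendsto (fun t => ∫ s in (1:ℝ)..t, k s) atTop atTop)
    (hk0 : Tendsto k atTop (𝓝 0))
    (hunif : ∀ T > 0, TendstoUniformlyOn (fun t s => k (t + s) / k t)
      (fun _ => 1) atTop (Icc 0 T))
    (hunif' : ∀ T > 0, TendstoUniformlyOn (fun t s => k' (t + s) / k' t)
      (fun _ => 1) atTop (Icc 0 T))
    (hL : Tendsto (fun t => ∫ s in (1:ℝ)..t, k s * Real.sin s) atTop (𝓝 L)) :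
    Tendsto (fun t => (L - ∫ s in (1:ℝ)..t, k s * Real.sin s) / k t - Real.cos t)
      atTop (𝓝 0) ∧
    limsup (fun t => |L - ∫ s in (1:ℝ)..t, k s * Real.sin s| / k t) atTop = 1 ∧
    liminf (fun t => |L - ∫ s in (1:ℝ)..t, k s * Real.sin s| / k t) atTop = 0 :=
  stmt13_general k k' L hkpos hkd hk'c hk0 hunif' hL
end

section
/- Suppose f is continuous, asymptotic at 0 to an odd function, regularly varying at 0 with index β>1, f(x)/x→0 as x→0, f(0)=0. Let Γ be continuous and positive with Γ(t)→∞ as t→∞. Then there exists a continuous function g which changes sign infinitely often, satisfies limsup_{t→∞}|g(t)|/Γ(t)=1, lim_{t→∞}∫_0^t g(s)ds exists and is finite, and lim_{t→∞}(∫_t^∞ g(s)ds)/F⁻¹(t)=0. -/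
open Real Filter MeasureTheory Set Topology

noncomputable def psi (x : ℝ) : ℝ := max (1 - |x|) 0

lemma psi_cont : Continuous psi := (continuous_const.sub continuous_abs).max continuous_const

lemma psi_nonneg (x : ℝ) : 0 ≤ psi x := le_max_right _ _

lemma psi_le_one (x : ℝ) : psi x ≤ 1 := by
  unfold psi
  have := abs_nonneg x
  apply max_le <;> linarith

lemma psi_zero : psi 0 = 1 := by norm_num [psi]

lemma psi_eq_zero {x : ℝ} (h : 1 ≤ |x|) : psi x = 0 := max_eq_right (by linarith)

lemma psi_pos {x : ℝ} (h : |x| < 1) : 0 < psi x :=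
  lt_max_of_lt_left (by linarith)

lemma psi_ge_half {x : ℝ} (h : |x| ≤ 1/2) : 1/2 ≤ psi x :=
  le_max_of_le_left (by linarith)

lemma abs_psi (x : ℝ) : |psi x| = psi x := abs_of_nonneg (psi_nonneg x)

lemma aux_integral_pos {F : ℝ → ℝ} (hF : Continuous F) {a b c d : ℝ}
    (hac : a ≤ c) (hcd : c < d) (hdb : d ≤ b)
    (h0 : ∀ x ∈ Icc a b, 0 ≤ F x) (hpos : ∀ x ∈ Ioo c d, 0 < F x) :
    0 < ∫ x in a..b, F x := by
  have e1 := intervalIntegral.integral_add_adjacent_intervals (a := a) (b := c) (c := d)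
    (μ := volume) (f := F) (hF.intervalIntegrable _ _) (hF.intervalIntegrable _ _)
  have e2 := intervalIntegral.integral_add_adjacent_intervals (a := a) (b := d) (c := b)
    (μ := volume) (f := F) (hF.intervalIntegrable _ _) (hF.intervalIntegrable _ _)
  have n1 : 0 ≤ ∫ x in a..c, F x := by
    apply intervalIntegral.integral_nonneg hac
    intro u hu; exact h0 u ⟨hu.1, hu.2.trans (hcd.le.trans hdb)⟩
  have n2 : 0 ≤ ∫ x in d..b, F x := by
    apply intervalIntegral.integral_nonneg hdb
    intro u hu; exact h0 u ⟨(hac.trans hcd.le).trans hu.1, hu.2⟩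
  have n3 : 0 < ∫ x in c..d, F x :=
    intervalIntegral.intervalIntegral_pos_of_pos_on (hF.intervalIntegrable _ _) hpos hcd
  linarith

noncomputable def Mf (G : ℝ → ℝ) (n : ℕ) : ℝ := sSup (G '' Icc (n:ℝ) (n+1))
noncomputable def mf (G : ℝ → ℝ) (n : ℕ) : ℝ := sInf (G '' Icc (n:ℝ) (n+1))

variable {G F : ℝ → ℝ} {n : ℕ}

lemma icc_ne : (Icc (n:ℝ) (n+1)).Nonempty := ⟨n, by simp⟩

lemma Mf_ge (hG : Continuous G) {y : ℝ} (hy : y ∈ Icc (n:ℝ) (n+1)) : G y ≤ Mf G n :=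
  le_csSup (isCompact_Icc.image_of_continuousOn hG.continuousOn).bddAbove (mem_image_of_mem _ hy)

lemma mf_le (hG : Continuous G) {y : ℝ} (hy : y ∈ Icc (n:ℝ) (n+1)) : mf G n ≤ G y :=
  csInf_le (isCompact_Icc.image_of_continuousOn hG.continuousOn).bddBelow (mem_image_of_mem _ hy)

lemma mf_pos (hG : Continuous G) (hGpos : ∀ t ≥ (0:ℝ), 0 < G t) : 0 < mf G n := by
  have hc := isCompact_Icc.image_of_continuousOn (hG.continuousOn (s := Icc (n:ℝ) (n+1)))
  have hmem : mf G n ∈ G '' Icc (n:ℝ) (n+1) := hc.sInf_mem (icc_ne.image G)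
  obtain ⟨x, hx, hxe⟩ := hmem
  rw [← hxe]
  exact hGpos x (le_trans (Nat.cast_nonneg n) hx.1)

lemma Mf_pos (hG : Continuous G) (hGpos : ∀ t ≥ (0:ℝ), 0 < G t) : 0 < Mf G n :=
  lt_of_lt_of_le (hGpos n (Nat.cast_nonneg n)) (Mf_ge hG ⟨le_refl _, by linarith⟩)

noncomputable def rr (F G : ℝ → ℝ) (n : ℕ) : ℝ :=
  min 8⁻¹ (min (mf G n / (32*(Mf G n + 1))) (F ((n:ℝ)+1) / (8*((n:ℝ)+1)*(Mf G n + 1))))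

noncomputable def pp (n : ℕ) : ℝ := (n:ℝ) + 4⁻¹
noncomputable def qq (n : ℕ) : ℝ := (n:ℝ) + 3/4

noncomputable def PP (F G : ℝ → ℝ) (n : ℕ) : ℝ :=
  ∫ t in (n:ℝ)..((n:ℝ)+1), G t * psi ((t - pp n)/rr F G n)
noncomputable def NN (G : ℝ → ℝ) (n : ℕ) : ℝ :=
  ∫ t in (n:ℝ)..((n:ℝ)+1), G t * psi (8*(t - qq n))
noncomputable def dd (F G : ℝ → ℝ) (n : ℕ) : ℝ := PP F G n / NN G n

noncomputable def HH (F G : ℝ → ℝ) (n : ℕ) (t : ℝ) : ℝ :=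
  G t * (psi ((t - pp n)/rr F G n) - dd F G n * psi (8*(t - qq n)))

noncomputable def gg (F G : ℝ → ℝ) (N : ℕ) (t : ℝ) : ℝ :=
  if t < (N:ℝ) then 0 else HH F G ⌊t⌋₊ t

lemma rr_le_eighth : rr F G n ≤ 8⁻¹ := min_le_left _ _

lemma rr_le_two : rr F G n ≤ mf G n / (32*(Mf G n + 1)) :=
  le_trans (min_le_right _ _) (min_le_left _ _)

lemma rr_le_three : rr F G n ≤ F ((n:ℝ)+1) / (8*((n:ℝ)+1)*(Mf G n + 1)) :=
  le_trans (min_le_right _ _) (min_le_right _ _)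

lemma rr_pos (hG : Continuous G) (hGpos : ∀ t ≥ (0:ℝ), 0 < G t)
    (hF : 0 < F ((n:ℝ)+1)) : 0 < rr F G n := by
  have h1 := mf_pos (n := n) hG hGpos
  have h2 := Mf_pos (n := n) hG hGpos
  have h3 : (0:ℝ) < (n:ℝ) + 1 := by positivity
  refine lt_min (by norm_num) (lt_min (by positivity) (by positivity))

lemma contA (F G : ℝ → ℝ) (n : ℕ) (hG : Continuous G) :
    Continuous (fun t => G t * psi ((t - pp n)/rr F G n)) :=
  hG.mul (psi_cont.comp ((continuous_id.sub continuous_const).div_const _))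

lemma contB (G : ℝ → ℝ) (n : ℕ) (hG : Continuous G) :
    Continuous (fun t => G t * psi (8*(t - qq n))) :=
  hG.mul (psi_cont.comp (continuous_const.mul (continuous_id.sub continuous_const)))

lemma contH (F G : ℝ → ℝ) (n : ℕ) (hG : Continuous G) : Continuous (HH F G n) := by
  have h1 := contA F G n hG
  have h2 := contB G n hG
  have : HH F G n = fun t => (G t * psi ((t - pp n)/rr F G n))
      - dd F G n * (G t * psi (8*(t - qq n))) := by
    funext t; unfold HH; ring
  rw [this]
  exact h1.sub (continuous_const.mul h2)

lemma psiA_zero (hr : 0 < rr F G n) {t : ℝ} (h : rr F G n ≤ |t - pp n|) :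
    psi ((t - pp n)/rr F G n) = 0 := by
  apply psi_eq_zero
  rw [abs_div, abs_of_pos hr, le_div_iff₀ hr]
  linarith

lemma psiB_zero {t : ℝ} (h : 8⁻¹ ≤ |t - qq n|) : psi (8*(t - qq n)) = 0 := by
  apply psi_eq_zero
  rw [abs_mul]
  rw [show |(8:ℝ)| = 8 by norm_num]
  linarith

lemma HH_zero (hr : 0 < rr F G n) {t : ℝ}
    (h : t ≤ (n:ℝ) + 8⁻¹ ∨ (n:ℝ) + 7/8 ≤ t) : HH F G n t = 0 := by
  have hr8 : rr F G n ≤ 8⁻¹ := rr_le_eighth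
  have hA : psi ((t - pp n)/rr F G n) = 0 := by
    apply psiA_zero hr
    rcases h with h | h
    · rw [abs_of_nonpos (by unfold pp; linarith)]; unfold pp; linarith
    · rw [abs_of_nonneg (by unfold pp; linarith)]; unfold pp; linarith
  have hB : psi (8*(t - qq n)) = 0 := by
    apply psiB_zero
    rcases h with h | h
    · rw [abs_of_nonpos (by unfold qq; linarith)]; unfold qq; linarith
    · rw [abs_of_nonneg (by unfold qq; linarith)]; unfold qq; linarith
  unfold HH
  rw [hA, hB]; ring

lemma NN_pos (hG : Continuous G) (hGpos : ∀ t ≥ (0:ℝ), 0 < G t) : 0 < NN G n := by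
  apply aux_integral_pos (contB G n hG) (a := (n:ℝ)) (c := qq n - 8⁻¹) (d := qq n + 8⁻¹)
    (b := (n:ℝ)+1)
  · unfold qq; linarith
  · linarith
  · unfold qq; linarith
  · intro x hx
    exact mul_nonneg (hGpos x (le_trans (Nat.cast_nonneg n) hx.1)).le (psi_nonneg _)
  · intro x hx
    apply mul_pos (hGpos x (by unfold qq at hx; nlinarith [Nat.cast_nonneg (α := ℝ) n, hx.1]))
    apply psi_pos
    rw [abs_mul, show |(8:ℝ)| = 8 by norm_num]
    have : |x - qq n| < 8⁻¹ := abs_lt.2 ⟨by linarith [hx.1], by linarith [hx.2]⟩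
    linarith

lemma PP_pos (hG : Continuous G) (hGpos : ∀ t ≥ (0:ℝ), 0 < G t)
    (hr : 0 < rr F G n) : 0 < PP F G n := by
  have hr8 : rr F G n ≤ 8⁻¹ := rr_le_eighth
  apply aux_integral_pos (contA F G n hG) (a := (n:ℝ)) (c := pp n - rr F G n)
    (d := pp n + rr F G n) (b := (n:ℝ)+1)
  · unfold pp; linarith
  · linarith
  · unfold pp; linarith
  · intro x hx
    exact mul_nonneg (hGpos x (le_trans (Nat.cast_nonneg n) hx.1)).le (psi_nonneg _)
  · intro x hx
    apply mul_pos (hGpos x (by unfold pp at hx; nlinarith [Nat.cast_nonneg (α := ℝ) n, hx.1]))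
    apply psi_pos
    rw [abs_div, abs_of_pos hr, div_lt_one hr, abs_lt]
    obtain ⟨h1, h2⟩ := hx
    constructor <;> linarith

lemma dd_pos (hG : Continuous G) (hGpos : ∀ t ≥ (0:ℝ), 0 < G t)
    (hr : 0 < rr F G n) : 0 < dd F G n :=
  div_pos (PP_pos hG hGpos hr) (NN_pos hG hGpos)

lemma NN_ge (hG : Continuous G) (hGpos : ∀ t ≥ (0:ℝ), 0 < G t) :
    mf G n / 16 ≤ NN G n := by
  have hB := contB G n hG
  have hnn : ∀ a b : ℝ, (n:ℝ) ≤ a → b ≤ (n:ℝ)+1 → a ≤ b →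
      0 ≤ ∫ t in a..b, G t * psi (8*(t - qq n)) := by
    intro a b ha hb hab
    apply intervalIntegral.integral_nonneg hab
    intro u hu
    exact mul_nonneg (hGpos u (le_trans (Nat.cast_nonneg n) (ha.trans hu.1))).le (psi_nonneg _)
  have e1 := intervalIntegral.integral_add_adjacent_intervals (a := (n:ℝ)) (b := qq n - 16⁻¹)
    (c := qq n + 16⁻¹) (μ := volume) (f := fun t => G t * psi (8*(t - qq n)))
    (hB.intervalIntegrable _ _) (hB.intervalIntegrable _ _)
  have e2 := intervalIntegral.integral_add_adjacent_intervals (a := (n:ℝ)) (b := qq n + 16⁻¹)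
    (c := (n:ℝ)+1) (μ := volume) (f := fun t => G t * psi (8*(t - qq n)))
    (hB.intervalIntegrable _ _) (hB.intervalIntegrable _ _)
  have hq1 : (n:ℝ) ≤ qq n - 16⁻¹ := by unfold qq; linarith
  have hq2 : qq n + 16⁻¹ ≤ (n:ℝ)+1 := by unfold qq; linarith
  have n1 : 0 ≤ ∫ t in (n:ℝ)..(qq n - 16⁻¹), G t * psi (8*(t - qq n)) :=
    hnn _ _ le_rfl (by linarith) hq1
  have n2 : 0 ≤ ∫ t in (qq n + 16⁻¹)..((n:ℝ)+1), G t * psi (8*(t - qq n)) :=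
    hnn _ _ (by linarith) le_rfl hq2
  have mid : mf G n / 16 ≤ ∫ t in (qq n - 16⁻¹)..(qq n + 16⁻¹), G t * psi (8*(t - qq n)) := by
    have hmono := intervalIntegral.integral_mono_on (a := qq n - 16⁻¹) (b := qq n + 16⁻¹)
      (μ := volume) (f := fun _ => mf G n * (1/2)) (g := fun t => G t * psi (8*(t - qq n)))
      (by linarith) (intervalIntegrable_const) (hB.intervalIntegrable _ _) ?_
    · rw [intervalIntegral.integral_const] at hmono
      have : (qq n + 16⁻¹ - (qq n - 16⁻¹)) • (mf G n * (1/2)) = mf G n / 16 := by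
        rw [smul_eq_mul]; ring
      rw [this] at hmono
      exact hmono
    · intro x hx
      have hx1 : x ∈ Icc (n:ℝ) ((n:ℝ)+1) := ⟨hq1.trans hx.1, hx.2.trans hq2⟩
      apply mul_le_mul (mf_le hG hx1) ?_ (by norm_num) (hGpos x (le_trans (Nat.cast_nonneg n) hx1.1)).le
      apply psi_ge_half
      rw [abs_mul, show |(8:ℝ)| = 8 by norm_num]
      have : |x - qq n| ≤ 16⁻¹ := abs_le.2 ⟨by linarith [hx.1], by linarith [hx.2]⟩
      linarith
  unfold NN
  linarith

lemma PP_le (hG : Continuous G) (hGpos : ∀ t ≥ (0:ℝ), 0 < G t)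
    (hr : 0 < rr F G n) : PP F G n ≤ 2 * rr F G n * Mf G n := by
  have hA := contA F G n hG
  have hr8 : rr F G n ≤ 8⁻¹ := rr_le_eighth
  have e1 := intervalIntegral.integral_add_adjacent_intervals (a := (n:ℝ)) (b := pp n - rr F G n)
    (c := pp n + rr F G n) (μ := volume) (f := fun t => G t * psi ((t - pp n)/rr F G n))
    (hA.intervalIntegrable _ _) (hA.intervalIntegrable _ _)
  have e2 := intervalIntegral.integral_add_adjacent_intervals (a := (n:ℝ)) (b := pp n + rr F G n)
    (c := (n:ℝ)+1) (μ := volume) (f := fun t => G t * psi ((t - pp n)/rr F G n))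
    (hA.intervalIntegrable _ _) (hA.intervalIntegrable _ _)
  have hq1 : (n:ℝ) ≤ pp n - rr F G n := by unfold pp; linarith
  have hq2 : pp n + rr F G n ≤ (n:ℝ)+1 := by unfold pp; linarith
  have z1 : (∫ t in (n:ℝ)..(pp n - rr F G n), G t * psi ((t - pp n)/rr F G n)) = 0 := by
    rw [intervalIntegral.integral_congr (g := fun _ => (0:ℝ)), intervalIntegral.integral_zero]
    intro x hx
    rw [uIcc_of_le hq1] at hx
    have : psi ((x - pp n)/rr F G n) = 0 := by
      apply psiA_zero hr
      rw [abs_of_nonpos (by linarith [hx.2])]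
      linarith [hx.2]
    simp [this]
  have z2 : (∫ t in (pp n + rr F G n)..((n:ℝ)+1), G t * psi ((t - pp n)/rr F G n)) = 0 := by
    rw [intervalIntegral.integral_congr (g := fun _ => (0:ℝ)), intervalIntegral.integral_zero]
    intro x hx
    rw [uIcc_of_le hq2] at hx
    have : psi ((x - pp n)/rr F G n) = 0 := by
      apply psiA_zero hr
      rw [abs_of_nonneg (by linarith [hx.1])]
      linarith [hx.1]
    simp [this]
  have mid : (∫ t in (pp n - rr F G n)..(pp n + rr F G n), G t * psi ((t - pp n)/rr F G n))
      ≤ 2 * rr F G n * Mf G n := by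
    have hmono := intervalIntegral.integral_mono_on (a := pp n - rr F G n) (b := pp n + rr F G n)
      (μ := volume) (f := fun t => G t * psi ((t - pp n)/rr F G n)) (g := fun _ => Mf G n)
      (by linarith) (hA.intervalIntegrable _ _) intervalIntegrable_const ?_
    · rw [intervalIntegral.integral_const, smul_eq_mul] at hmono
      calc (∫ t in (pp n - rr F G n)..(pp n + rr F G n), G t * psi ((t - pp n)/rr F G n))
          ≤ (pp n + rr F G n - (pp n - rr F G n)) * Mf G n := hmono
        _ = 2 * rr F G n * Mf G n := by ring
    · intro x hx
      have hx1 : x ∈ Icc (n:ℝ) ((n:ℝ)+1) := ⟨hq1.trans hx.1, hx.2.trans hq2⟩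
      calc G x * psi ((x - pp n)/rr F G n) ≤ G x * 1 :=
            mul_le_mul_of_nonneg_left (psi_le_one _)
              (hGpos x (le_trans (Nat.cast_nonneg n) hx1.1)).le
        _ = G x := mul_one _
        _ ≤ Mf G n := Mf_ge hG hx1
  unfold PP
  linarith

lemma dd_le_one (hG : Continuous G) (hGpos : ∀ t ≥ (0:ℝ), 0 < G t)
    (hr : 0 < rr F G n) : dd F G n ≤ 1 := by
  rw [dd, div_le_one (NN_pos hG hGpos)]
  have h1 := PP_le hG hGpos hr
  have h2 := NN_ge (n := n) hG hGpos
  have h3 := rr_le_two (F := F) (G := G) (n := n)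
  have hM := Mf_pos (n := n) hG hGpos
  have hm := mf_pos (n := n) hG hGpos
  have key : 2 * rr F G n * Mf G n ≤ mf G n / 16 := by
    have hMp : (0:ℝ) < 32*(Mf G n + 1) := by linarith
    rw [le_div_iff₀ hMp] at h3
    nlinarith
  linarith

lemma bump_abs_le (hG : Continuous G) (hGpos : ∀ t ≥ (0:ℝ), 0 < G t)
    (hr : 0 < rr F G n) (t : ℝ) :
    |psi ((t - pp n)/rr F G n) - dd F G n * psi (8*(t - qq n))| ≤ 1 := by
  have hd0 := (dd_pos hG hGpos hr).le
  have hd1 := dd_le_one hG hGpos hr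
  have hr8 : rr F G n ≤ 8⁻¹ := rr_le_eighth
  rcases le_or_gt t ((n:ℝ) + 2⁻¹) with h | h
  · have hB : psi (8*(t - qq n)) = 0 := by
      apply psiB_zero
      rw [abs_of_nonpos (by unfold qq; linarith)]
      unfold qq; linarith
    rw [hB, mul_zero, sub_zero, abs_psi]
    exact psi_le_one _
  · have hA : psi ((t - pp n)/rr F G n) = 0 := by
      apply psiA_zero hr
      rw [abs_of_nonneg (by unfold pp; linarith)]
      unfold pp; linarith
    rw [hA, zero_sub, abs_neg, abs_mul, abs_of_nonneg hd0, abs_psi]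
    calc dd F G n * psi (8*(t - qq n)) ≤ 1 * 1 :=
      mul_le_mul hd1 (psi_le_one _) (psi_nonneg _) (by norm_num)
    _ = 1 := mul_one 1

lemma HH_int_eq (hG : Continuous G) (hGpos : ∀ t ≥ (0:ℝ), 0 < G t) :
    (∫ t in (n:ℝ)..((n:ℝ)+1), HH F G n t) = 0 := by
  have hA := contA F G n hG
  have hB := contB G n hG
  have e : (∫ t in (n:ℝ)..((n:ℝ)+1), HH F G n t)
      = (∫ t in (n:ℝ)..((n:ℝ)+1), (G t * psi ((t - pp n)/rr F G n))
        - dd F G n * (G t * psi (8*(t - qq n)))) := by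
    apply intervalIntegral.integral_congr
    intro x _; unfold HH; ring
  rw [e, intervalIntegral.integral_sub (hA.intervalIntegrable _ _)
    ((hB.intervalIntegrable _ _).const_mul _), intervalIntegral.integral_const_mul]
  have : dd F G n * NN G n = PP F G n := by
    rw [dd, div_mul_cancel₀]
    exact (NN_pos hG hGpos).ne'
  unfold PP NN at *
  rw [this]; ring

lemma HH_abs_int_le (hG : Continuous G) (hGpos : ∀ t ≥ (0:ℝ), 0 < G t)
    (hr : 0 < rr F G n) :
    (∫ t in (n:ℝ)..((n:ℝ)+1), |HH F G n t|) ≤ 2 * PP F G n := by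
  have hA := contA F G n hG
  have hB := contB G n hG
  have hd0 := (dd_pos hG hGpos hr).le
  have step1 : (∫ t in (n:ℝ)..((n:ℝ)+1), |HH F G n t|)
      ≤ ∫ t in (n:ℝ)..((n:ℝ)+1), (G t * psi ((t - pp n)/rr F G n))
        + dd F G n * (G t * psi (8*(t - qq n))) := by
    apply intervalIntegral.integral_mono_on (by linarith)
      ((contH F G n hG).abs.intervalIntegrable _ _)
      ((hA.add ((continuous_const.mul hB))).intervalIntegrable _ _)
    intro x hx
    have hGx : 0 ≤ G x := (hGpos x (le_trans (Nat.cast_nonneg n) hx.1)).le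
    unfold HH
    rw [abs_mul, abs_of_nonneg hGx]
    have habs : |psi ((x - pp n)/rr F G n) - dd F G n * psi (8*(x - qq n))|
        ≤ psi ((x - pp n)/rr F G n) + dd F G n * psi (8*(x - qq n)) := by
      calc |psi ((x - pp n)/rr F G n) - dd F G n * psi (8*(x - qq n))|
          ≤ |psi ((x - pp n)/rr F G n)| + |dd F G n * psi (8*(x - qq n))| := abs_sub _ _
        _ = psi ((x - pp n)/rr F G n) + dd F G n * psi (8*(x - qq n)) := by
            rw [abs_psi, abs_mul, abs_of_nonneg hd0, abs_psi]
    calc G x * |psi ((x - pp n)/rr F G n) - dd F G n * psi (8*(x - qq n))|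
        ≤ G x * (psi ((x - pp n)/rr F G n) + dd F G n * psi (8*(x - qq n))) :=
          mul_le_mul_of_nonneg_left habs hGx
      _ = G x * psi ((x - pp n)/rr F G n) + dd F G n * (G x * psi (8*(x - qq n))) := by ring
  have step2 : (∫ t in (n:ℝ)..((n:ℝ)+1), (G t * psi ((t - pp n)/rr F G n))
      + dd F G n * (G t * psi (8*(t - qq n)))) = 2 * PP F G n := by
    rw [intervalIntegral.integral_add (hA.intervalIntegrable _ _)
      ((hB.intervalIntegrable _ _).const_mul _), intervalIntegral.integral_const_mul]
    have : dd F G n * NN G n = PP F G n := by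
      rw [dd, div_mul_cancel₀]
      exact (NN_pos hG hGpos).ne'
    unfold PP NN at *
    rw [this]; ring
  linarith

variable {N : ℕ}

lemma rr_posN (hG : Continuous G) (hGpos : ∀ t ≥ (0:ℝ), 0 < G t)
    (hFpos : ∀ t : ℝ, (N:ℝ) ≤ t → 0 < F t) (hn : N ≤ n) : 0 < rr F G n := by
  apply rr_pos hG hGpos
  apply hFpos
  have : (N:ℝ) ≤ (n:ℝ) := Nat.cast_le.2 hn
  linarith

lemma floor_eq {t : ℝ} (h1 : (n:ℝ) ≤ t) (h2 : t < (n:ℝ)+1) : ⌊t⌋₊ = n :=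
  (Nat.floor_eq_iff (le_trans (Nat.cast_nonneg n) h1)).2 ⟨h1, h2⟩

lemma gg_eq (hG : Continuous G) (hGpos : ∀ t ≥ (0:ℝ), 0 < G t)
    (hFpos : ∀ t : ℝ, (N:ℝ) ≤ t → 0 < F t) (hn : N ≤ n) {t : ℝ}
    (ht : t ∈ Icc (n:ℝ) ((n:ℝ)+1)) : gg F G N t = HH F G n t := by
  have hNn : (N:ℝ) ≤ (n:ℝ) := Nat.cast_le.2 hn
  have hnotlt : ¬ (t < (N:ℝ)) := not_lt.2 (hNn.trans ht.1)
  rcases lt_or_eq_of_le ht.2 with h | h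
  · unfold gg
    rw [if_neg hnotlt, floor_eq ht.1 h]
  · have hr1 : 0 < rr F G (n+1) := rr_posN hG hGpos hFpos (le_trans hn (Nat.le_succ n))
    have hrn : 0 < rr F G n := rr_posN hG hGpos hFpos hn
    have hcast : t = ((n+1:ℕ):ℝ) := by push_cast; linarith
    have hfl : ⌊t⌋₊ = n + 1 := by rw [hcast, Nat.floor_natCast]
    unfold gg
    rw [if_neg hnotlt, hfl]
    rw [HH_zero hr1 (Or.inl (by push_cast; linarith)),
      HH_zero hrn (Or.inr (by push_cast; linarith))]

lemma gg_zero_near (hG : Continuous G) (hGpos : ∀ t ≥ (0:ℝ), 0 < G t)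
    (hFpos : ∀ t : ℝ, (N:ℝ) ≤ t → 0 < F t) (m : ℕ) {t : ℝ}
    (h1 : (m:ℝ) - 8⁻¹ < t) (h2 : t < (m:ℝ) + 8⁻¹) : gg F G N t = 0 := by
  by_cases ht : t < (N:ℝ)
  · unfold gg; rw [if_pos ht]
  · have htN : (N:ℝ) ≤ t := not_lt.1 ht
    have ht0 : (0:ℝ) ≤ t := le_trans (Nat.cast_nonneg N) htN
    unfold gg
    rw [if_neg ht]
    rcases le_or_gt (m:ℝ) t with hc | hc
    · have hfl : ⌊t⌋₊ = m := floor_eq hc (by linarith)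
      have hNm : N ≤ m := by
        have : (N:ℝ) < (m:ℝ) + 1 := lt_of_le_of_lt htN (by linarith)
        exact_mod_cast Nat.lt_add_one_iff.1 (by exact_mod_cast this)
      rw [hfl]
      exact HH_zero (rr_posN hG hGpos hFpos hNm) (Or.inl (by linarith))
    · rcases m with _ | k
      · simp only [Nat.cast_zero] at hc; linarith
      · have hk : ((k+1:ℕ):ℝ) = (k:ℝ) + 1 := by push_cast; ring
        rw [hk] at h1 h2 hc
        have hfl : ⌊t⌋₊ = k := floor_eq (by linarith) (by linarith)
        have hNk : N ≤ k := by
          have : (N:ℝ) < (k:ℝ) + 1 := lt_of_le_of_lt htN hc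
          exact_mod_cast Nat.lt_add_one_iff.1 (by exact_mod_cast this)
        rw [hfl]
        exact HH_zero (rr_posN hG hGpos hFpos hNk) (Or.inr (by linarith))

lemma gg_cont (hG : Continuous G) (hGpos : ∀ t ≥ (0:ℝ), 0 < G t)
    (hFpos : ∀ t : ℝ, (N:ℝ) ≤ t → 0 < F t) : Continuous (gg F G N) := by
  rw [continuous_iff_continuousAt]
  intro t₀
  rcases lt_or_ge t₀ (N:ℝ) with h | h
  · have hev : gg F G N =ᶠ[𝓝 t₀] fun _ => 0 := by
      filter_upwards [Iio_mem_nhds h] with s hs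
      unfold gg; rw [if_pos (mem_Iio.1 hs)]
    exact ContinuousAt.congr continuousAt_const hev.symm
  · have ht0 : (0:ℝ) ≤ t₀ := le_trans (Nat.cast_nonneg N) h
    set m := ⌊t₀⌋₊ with hm
    have hm1 : (m:ℝ) ≤ t₀ := Nat.floor_le ht0
    have hm2 : t₀ < (m:ℝ) + 1 := Nat.lt_floor_add_one t₀
    have hNm : N ≤ m := by
      rw [hm]
      calc N = ⌊(N:ℝ)⌋₊ := (Nat.floor_natCast N).symm
        _ ≤ ⌊t₀⌋₊ := Nat.floor_le_floor h
    rcases eq_or_lt_of_le hm1 with he | hlt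
    · have hev : gg F G N =ᶠ[𝓝 t₀] fun _ => 0 := by
        filter_upwards [Ioo_mem_nhds (by linarith : (m:ℝ) - 8⁻¹ < t₀)
          (by linarith : t₀ < (m:ℝ) + 8⁻¹)] with s hs
        exact gg_zero_near hG hGpos hFpos m hs.1 hs.2
      exact ContinuousAt.congr continuousAt_const hev.symm
    · have hev : gg F G N =ᶠ[𝓝 t₀] HH F G m := by
        filter_upwards [Ioo_mem_nhds hlt hm2] with s hs
        have hsN : ¬ (s < (N:ℝ)) := by
          push_neg
          calc (N:ℝ) ≤ (m:ℝ) := Nat.cast_le.2 hNm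
            _ ≤ s := hs.1.le
        unfold gg
        rw [if_neg hsN, floor_eq hs.1.le hs.2]
      exact ContinuousAt.congr ((contH F G m hG).continuousAt) hev.symm

lemma gg_peak (hG : Continuous G) (hGpos : ∀ t ≥ (0:ℝ), 0 < G t)
    (hFpos : ∀ t : ℝ, (N:ℝ) ≤ t → 0 < F t) (hn : N ≤ n) :
    gg F G N (pp n) = G (pp n) := by
  have hmem : pp n ∈ Icc (n:ℝ) ((n:ℝ)+1) := ⟨by unfold pp; linarith, by unfold pp; linarith⟩
  rw [gg_eq hG hGpos hFpos hn hmem]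
  unfold HH
  have h1 : (pp n - pp n)/rr F G n = 0 := by rw [sub_self, zero_div]
  have h2 : psi (8*(pp n - qq n)) = 0 := by
    apply psi_eq_zero
    rw [show 8*(pp n - qq n) = -4 by unfold pp qq; ring]
    norm_num
  rw [h1, psi_zero, h2]
  ring

lemma gg_trough (hG : Continuous G) (hGpos : ∀ t ≥ (0:ℝ), 0 < G t)
    (hFpos : ∀ t : ℝ, (N:ℝ) ≤ t → 0 < F t) (hn : N ≤ n) :
    gg F G N (qq n) = -(dd F G n * G (qq n)) := by
  have hr : 0 < rr F G n := rr_posN hG hGpos hFpos hn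
  have hmem : qq n ∈ Icc (n:ℝ) ((n:ℝ)+1) := ⟨by unfold qq; linarith, by unfold qq; linarith⟩
  rw [gg_eq hG hGpos hFpos hn hmem]
  unfold HH
  have h1 : psi ((qq n - pp n)/rr F G n) = 0 := by
    apply psiA_zero hr
    rw [show qq n - pp n = 2⁻¹ by unfold pp qq; ring, abs_of_pos (by norm_num)]
    linarith [rr_le_eighth (F := F) (G := G) (n := n)]
  have h2 : (8:ℝ)*(qq n - qq n) = 0 := by ring
  rw [h1, h2, psi_zero]
  ring

lemma gg_int_unit (hG : Continuous G) (hGpos : ∀ t ≥ (0:ℝ), 0 < G t)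
    (hFpos : ∀ t : ℝ, (N:ℝ) ≤ t → 0 < F t) (n : ℕ) :
    (∫ t in (n:ℝ)..((n:ℝ)+1), gg F G N t) = 0 := by
  rcases le_or_gt N n with hn | hn
  · rw [intervalIntegral.integral_congr (g := HH F G n)]
    · exact HH_int_eq hG hGpos
    · intro x hx
      rw [uIcc_of_le (by linarith)] at hx
      exact gg_eq hG hGpos hFpos hn hx
  · rw [intervalIntegral.integral_congr (g := fun _ => (0:ℝ)), intervalIntegral.integral_zero]
    intro x hx
    rw [uIcc_of_le (by linarith)] at hx
    have hxN : x ≤ (N:ℝ) := by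
      have : (n:ℝ) + 1 ≤ (N:ℝ) := by exact_mod_cast Nat.succ_le_of_lt hn
      linarith [hx.2]
    rcases lt_or_eq_of_le hxN with h | h
    · unfold gg; rw [if_pos h]
    · rw [h]
      exact gg_zero_near hG hGpos hFpos N (by norm_num) (by norm_num)

lemma gg_int_nat (hG : Continuous G) (hGpos : ∀ t ≥ (0:ℝ), 0 < G t)
    (hFpos : ∀ t : ℝ, (N:ℝ) ≤ t → 0 < F t) (n : ℕ) :
    (∫ t in (0:ℝ)..(n:ℝ), gg F G N t) = 0 := by
  induction n with
  | zero => simp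
  | succ k ih =>
    have hadd := intervalIntegral.integral_add_adjacent_intervals (a := (0:ℝ)) (b := (k:ℝ))
      (c := (k:ℝ)+1) (μ := volume) (f := gg F G N)
      ((gg_cont hG hGpos hFpos).intervalIntegrable _ _)
      ((gg_cont hG hGpos hFpos).intervalIntegrable _ _)
    have : ((k+1:ℕ):ℝ) = (k:ℝ)+1 := by push_cast; ring
    rw [this, ← hadd, ih, gg_int_unit hG hGpos hFpos k, add_zero]

lemma twoPP_le (hG : Continuous G) (hGpos : ∀ t ≥ (0:ℝ), 0 < G t)
    (hFpos : ∀ t : ℝ, (N:ℝ) ≤ t → 0 < F t) (hn : N ≤ n) :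
    2 * PP F G n ≤ F ((n:ℝ)+1) / (2*((n:ℝ)+1)) := by
  have hr := rr_posN hG hGpos hFpos hn
  have h1 := PP_le hG hGpos hr
  have h3 := rr_le_three (F := F) (G := G) (n := n)
  have hM := Mf_pos (n := n) hG hGpos
  have hn1 : (0:ℝ) < (n:ℝ) + 1 := by positivity
  have hpos : (0:ℝ) < 8*((n:ℝ)+1)*(Mf G n + 1) := by positivity
  rw [le_div_iff₀ hpos] at h3
  rw [le_div_iff₀ (by positivity : (0:ℝ) < 2*((n:ℝ)+1))]
  nlinarith [hr, hM]

lemma gg_part_bound (hG : Continuous G) (hGpos : ∀ t ≥ (0:ℝ), 0 < G t)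
    (hFpos : ∀ t : ℝ, (N:ℝ) ≤ t → 0 < F t) (hn : N ≤ n) {t : ℝ}
    (ht : t ∈ Icc (n:ℝ) ((n:ℝ)+1)) :
    |∫ s in (0:ℝ)..t, gg F G N s| ≤ 2 * PP F G n := by
  have hc := gg_cont hG hGpos hFpos
  have hr := rr_posN hG hGpos hFpos hn
  have hsplit := intervalIntegral.integral_add_adjacent_intervals (a := (0:ℝ)) (b := (n:ℝ))
    (c := t) (μ := volume) (f := gg F G N) (hc.intervalIntegrable _ _) (hc.intervalIntegrable _ _)
  rw [← hsplit, gg_int_nat hG hGpos hFpos n, zero_add]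
  calc |∫ s in (n:ℝ)..t, gg F G N s| ≤ ∫ s in (n:ℝ)..t, |gg F G N s| :=
        intervalIntegral.abs_integral_le_integral_abs ht.1
    _ ≤ ∫ s in (n:ℝ)..((n:ℝ)+1), |gg F G N s| := by
        apply intervalIntegral.integral_mono_interval le_rfl ht.1 ht.2
        · filter_upwards with s
          exact abs_nonneg _
        · exact hc.abs.intervalIntegrable _ _
    _ = ∫ s in (n:ℝ)..((n:ℝ)+1), |HH F G n s| := by
        apply intervalIntegral.integral_congr
        intro x hx
        rw [uIcc_of_le (by linarith)] at hx
        show |gg F G N x| = |HH F G n x|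
        rw [gg_eq hG hGpos hFpos hn hx]
    _ ≤ 2 * PP F G n := HH_abs_int_le hG hGpos hr

lemma construction (F G : ℝ → ℝ) (N : ℕ) (hG : Continuous G)
    (hGpos : ∀ t ≥ (0:ℝ), 0 < G t) (hFpos : ∀ t : ℝ, (N:ℝ) ≤ t → 0 < F t)
    (hanti : ∀ s t : ℝ, (N:ℝ) ≤ s → s ≤ t → F t ≤ F s) :
    ∃ g : ℝ → ℝ, Continuous g ∧ (∀ T : ℝ, ∃ t₁ > T, 0 < g t₁) ∧
      (∀ T : ℝ, ∃ t₂ > T, g t₂ < 0) ∧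
      limsup (fun t => |g t| / G t) atTop = 1 ∧
      ∃ L, Tendsto (fun t => ∫ s in (0:ℝ)..t, g s) atTop (𝓝 L) ∧
        Tendsto (fun t => (L - ∫ s in (0:ℝ)..t, g s) / F t) atTop (𝓝 0) := by
  have hcont := gg_cont hG hGpos hFpos
  -- for each T, a good index n with N ≤ n and T < n
  have hidx : ∀ T : ℝ, ∃ n : ℕ, N ≤ n ∧ T < (n:ℝ) := by
    intro T
    refine ⟨max N (⌈T⌉₊ + 1), le_max_left _ _, ?_⟩
    have h2 : T ≤ (⌈T⌉₊:ℝ) := Nat.le_ceil T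
    push_cast [Nat.cast_max]
    have h1 : ((⌈T⌉₊:ℝ) + 1) ≤ max (N:ℝ) ((⌈T⌉₊:ℝ) + 1) := le_max_right _ _
    linarith
  -- eventual bound on floor
  have hfloor : ∀ t : ℝ, (N:ℝ) ≤ t → N ≤ ⌊t⌋₊ ∧ (⌊t⌋₊:ℝ) ≤ t ∧ t < (⌊t⌋₊:ℝ) + 1 := by
    intro t ht
    have ht0 : (0:ℝ) ≤ t := le_trans (Nat.cast_nonneg N) ht
    refine ⟨?_, Nat.floor_le ht0, Nat.lt_floor_add_one t⟩
    calc N = ⌊(N:ℝ)⌋₊ := (Nat.floor_natCast N).symm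
      _ ≤ ⌊t⌋₊ := Nat.floor_le_floor ht
  have hFN : 0 < F (N:ℝ) := hFpos _ le_rfl
  -- key eventual bound on partial integrals
  have hkey : ∀ t : ℝ, (N:ℝ) ≤ t →
      |∫ s in (0:ℝ)..t, gg F G N s| ≤ F ((⌊t⌋₊:ℝ)+1) / (2*((⌊t⌋₊:ℝ)+1)) := by
    intro t ht
    obtain ⟨hn, h1, h2⟩ := hfloor t ht
    calc |∫ s in (0:ℝ)..t, gg F G N s| ≤ 2 * PP F G ⌊t⌋₊ :=
          gg_part_bound hG hGpos hFpos hn ⟨h1, h2.le⟩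
      _ ≤ F ((⌊t⌋₊:ℝ)+1) / (2*((⌊t⌋₊:ℝ)+1)) := twoPP_le hG hGpos hFpos hn
  refine ⟨gg F G N, hcont, ?_, ?_, ?_, 0, ?_, ?_⟩
  · intro T
    obtain ⟨n, hn, hT⟩ := hidx T
    refine ⟨pp n, by unfold pp; linarith, ?_⟩
    rw [gg_peak hG hGpos hFpos hn]
    exact hGpos _ (by unfold pp; positivity)
  · intro T
    obtain ⟨n, hn, hT⟩ := hidx T
    refine ⟨qq n, by unfold qq; linarith, ?_⟩
    rw [gg_trough hG hGpos hFpos hn]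
    have hr := rr_posN hG hGpos hFpos hn
    exact neg_lt_zero.2 (mul_pos (dd_pos hG hGpos hr) (hGpos _ (by unfold qq; positivity)))
  · -- limsup
    have upper : ∀ᶠ t in atTop, |gg F G N t| / G t ≤ 1 := by
      filter_upwards [eventually_ge_atTop (N:ℝ)] with t ht
      obtain ⟨hn, h1, h2⟩ := hfloor t ht
      have hGt := hGpos t (le_trans (Nat.cast_nonneg N) ht)
      rw [div_le_one hGt, gg_eq hG hGpos hFpos hn ⟨h1, h2.le⟩]
      unfold HH
      rw [abs_mul, abs_of_pos hGt]
      calc G t * |psi ((t - pp ⌊t⌋₊)/rr F G ⌊t⌋₊) - dd F G ⌊t⌋₊ * psi (8*(t - qq ⌊t⌋₊))|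
          ≤ G t * 1 := mul_le_mul_of_nonneg_left
            (bump_abs_le hG hGpos (rr_posN hG hGpos hFpos hn) t) hGt.le
        _ = G t := mul_one _
    have lower : ∃ᶠ t in atTop, 1 ≤ |gg F G N t| / G t := by
      rw [frequently_atTop]
      intro a
      obtain ⟨n, hn, hT⟩ := hidx a
      refine ⟨pp n, by unfold pp; linarith, ?_⟩
      have hGp := hGpos (pp n) (by unfold pp; positivity)
      rw [gg_peak hG hGpos hFpos hn, abs_of_pos hGp, div_self hGp.ne']
    exact le_antisymm (limsup_le_of_le (Filter.IsCoboundedUnder.of_frequently_ge lower) upper)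
      (le_limsup_of_frequently_le lower (isBoundedUnder_of_eventually_le upper))
  · -- convergence of the integral to 0
    apply squeeze_zero_norm' (a := fun t => (F (N:ℝ) / 2) * t⁻¹)
    · filter_upwards [eventually_ge_atTop (N:ℝ), eventually_ge_atTop (1:ℝ)] with t ht ht1
      obtain ⟨hn, h1, h2⟩ := hfloor t ht
      have hNfl : (N:ℝ) ≤ (⌊t⌋₊:ℝ) := Nat.cast_le.mpr hn
      have hFle : F ((⌊t⌋₊:ℝ)+1) ≤ F (N:ℝ) := hanti _ _ le_rfl (by linarith)
      have hn1 : (0:ℝ) < (⌊t⌋₊:ℝ)+1 := by positivity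
      rw [Real.norm_eq_abs]
      calc |∫ s in (0:ℝ)..t, gg F G N s| ≤ F ((⌊t⌋₊:ℝ)+1) / (2*((⌊t⌋₊:ℝ)+1)) := hkey t ht
        _ ≤ F (N:ℝ) / (2*((⌊t⌋₊:ℝ)+1)) := by
            gcongr
        _ ≤ F (N:ℝ) / (2*t) := by gcongr <;> linarith
        _ = (F (N:ℝ) / 2) * t⁻¹ := by
            rw [div_eq_mul_inv, mul_inv, div_eq_mul_inv]; ring
    · have h0 := (tendsto_inv_atTop_zero (𝕜 := ℝ)).const_mul (F (N:ℝ) / 2)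
      rw [mul_zero] at h0
      exact h0
  · -- ratio tendsto 0
    apply squeeze_zero_norm' (a := fun t => t⁻¹)
    · filter_upwards [eventually_ge_atTop (N:ℝ), eventually_ge_atTop (1:ℝ)] with t ht ht1
      obtain ⟨hn, h1, h2⟩ := hfloor t ht
      have hFt : 0 < F t := hFpos t ht
      have hn1 : (0:ℝ) < (⌊t⌋₊:ℝ)+1 := by positivity
      have hFle : F ((⌊t⌋₊:ℝ)+1) ≤ F t := hanti _ _ ht h2.le
      have hIle : |∫ s in (0:ℝ)..t, gg F G N s| ≤ F t / (2*((⌊t⌋₊:ℝ)+1)) := by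
        calc |∫ s in (0:ℝ)..t, gg F G N s| ≤ F ((⌊t⌋₊:ℝ)+1) / (2*((⌊t⌋₊:ℝ)+1)) := hkey t ht
          _ ≤ F t / (2*((⌊t⌋₊:ℝ)+1)) := by gcongr
      rw [Real.norm_eq_abs, zero_sub, abs_div, abs_neg, abs_of_pos hFt]
      calc |∫ s in (0:ℝ)..t, gg F G N s| / F t ≤ (F t / (2*((⌊t⌋₊:ℝ)+1))) / F t := by
            gcongr
          _ = (2*((⌊t⌋₊:ℝ)+1))⁻¹ := by
            rw [div_div, mul_comm, ← div_div, div_self hFt.ne', one_div]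
          _ ≤ t⁻¹ := inv_anti₀ (by linarith) (by linarith)
    · exact tendsto_inv_atTop_zero

/-- For any continuous positive `Γ` tending to `∞`, there is a continuous
`g` changing sign infinitely often with `limsup |g|/Γ = 1`, such that `∫_0^t g`
converges and `(∫_t^∞ g)/F⁻¹(t) → 0`. -/
theorem stmt14 (f Finv Γ : ℝ → ℝ) (β : ℝ) (hβ : 1 < β)
    (hfc : Continuous f)
    (hodd : ∃ φ : ℝ → ℝ, (∀ y, φ (-y) = -φ y) ∧
      Tendsto (fun y => f y / φ y) (𝓝[≠] 0) (𝓝 1))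
    (hrv : ∀ l : ℝ, 0 < l →
      Tendsto (fun y => f (l * y) / f y) (𝓝[>] 0) (𝓝 (l ^ β)))
    (hsl : Tendsto (fun y => f y / y) (𝓝[≠] 0) (𝓝 0)) (hf0 : f 0 = 0)
    (hFinv_pos : ∀ᶠ t in atTop, 0 < Finv t)
    (hFinv : ∀ᶠ t in atTop, (∫ u in Finv t..1, 1 / f u) = t)
    (hFinv0 : Tendsto Finv atTop (𝓝 0))
    (hΓ : Continuous Γ) (hΓpos : ∀ t ≥ 0, 0 < Γ t)
    (hGamma_top : Tendsto Γ atTop atTop) :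
    ∃ g : ℝ → ℝ, Continuous g ∧
      (∀ T : ℝ, ∃ t₁ > T, 0 < g t₁) ∧ (∀ T : ℝ, ∃ t₂ > T, g t₂ < 0) ∧
      limsup (fun t => |g t| / Γ t) atTop = 1 ∧
      ∃ L, Tendsto (fun t => ∫ s in (0:ℝ)..t, g s) atTop (𝓝 L) ∧
        Tendsto (fun t => (L - ∫ s in (0:ℝ)..t, g s) / Finv t) atTop (𝓝 0) := by
  -- Step 1: f is nonvanishing on a right neighborhood of 0
  obtain ⟨η', hη', hne'⟩ : ∃ η > (0:ℝ), ∀ y ∈ Ioo (0:ℝ) η, f y ≠ 0 := by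
    have h := hrv 1 one_pos
    rw [Real.one_rpow] at h
    have h2 := h.eventually (lt_mem_nhds (show (1:ℝ)/2 < 1 by norm_num))
    obtain ⟨u, hu, hsub⟩ := mem_nhdsGT_iff_exists_Ioo_subset.1 h2
    refine ⟨u, hu, ?_⟩
    intro y hy hy0
    have hmem := hsub hy
    simp only [mem_setOf_eq, one_mul, hy0, div_zero] at hmem
    norm_num at hmem
  set η : ℝ := min η' 1 with hηdef
  have hη : 0 < η := lt_min hη' one_pos
  have hηle : η ≤ 1 := min_le_right _ _
  have hne : ∀ y ∈ Ioo (0:ℝ) η, f y ≠ 0 := fun y hy =>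
    hne' y ⟨hy.1, lt_of_lt_of_le hy.2 (min_le_left _ _)⟩
  -- Step 2: eventual properties of Finv
  have hevsmall : ∀ᶠ t in atTop, Finv t < η := hFinv0.eventually_lt_const hη
  obtain ⟨T₁, hT₁⟩ := eventually_atTop.1 (hFinv_pos.and (hFinv.and hevsmall))
  set N : ℕ := ⌈max T₁ 1⌉₊ + 1 with hNdef
  have hNge : ∀ t : ℝ, (N:ℝ) ≤ t → T₁ ≤ t ∧ 1 ≤ t := by
    intro t ht
    have h1 : max T₁ 1 ≤ (⌈max T₁ 1⌉₊:ℝ) := Nat.le_ceil _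
    have h2 : ((⌈max T₁ 1⌉₊:ℝ)) ≤ (N:ℝ) := by rw [hNdef]; push_cast; linarith
    constructor
    · linarith [le_max_left T₁ 1]
    · linarith [le_max_right T₁ 1]
  have props : ∀ t : ℝ, (N:ℝ) ≤ t →
      0 < Finv t ∧ (∫ u in Finv t..1, 1 / f u) = t ∧ Finv t < η := by
    intro t ht
    exact hT₁ t (hNge t ht).1
  have hmemIoo : ∀ t : ℝ, (N:ℝ) ≤ t → Finv t ∈ Ioo (0:ℝ) η :=
    fun t ht => ⟨(props t ht).1, (props t ht).2.2⟩
  have hII : ∀ t : ℝ, (N:ℝ) ≤ t →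
      IntervalIntegrable (fun u => 1 / f u) volume (Finv t) 1 := by
    intro t ht
    by_contra hcon
    have h0 := intervalIntegral.integral_undef hcon
    rw [(props t ht).2.1] at h0
    linarith [(hNge t ht).2]
  have hIccsub : ∀ a b : ℝ, a ∈ Ioo (0:ℝ) η → b ∈ Ioo (0:ℝ) η →
      uIcc a b ⊆ Ioo (0:ℝ) η := by
    intro a b ha hb x hx
    rw [uIcc, Icc] at hx
    obtain ⟨h1, h2⟩ := hx
    exact ⟨lt_of_lt_of_le (lt_min ha.1 hb.1) h1, lt_of_le_of_lt h2 (max_lt ha.2 hb.2)⟩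
  have hIIab : ∀ a b : ℝ, a ∈ Ioo (0:ℝ) η → b ∈ Ioo (0:ℝ) η →
      IntervalIntegrable (fun u => 1 / f u) volume a b := by
    intro a b ha hb
    apply ContinuousOn.intervalIntegrable
    apply ContinuousOn.div continuousOn_const hfc.continuousOn
    intro x hx
    exact hne x (hIccsub a b ha hb hx)
  have key : ∀ s t : ℝ, (N:ℝ) ≤ s → (N:ℝ) ≤ t →
      (∫ u in Finv s..Finv t, 1 / f u) = s - t := by
    intro s t hs ht
    have h1 := hIIab _ _ (hmemIoo s hs) (hmemIoo t ht)
    have h2 := hII t ht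
    have h3 := intervalIntegral.integral_add_adjacent_intervals h1 h2
    rw [(props s hs).2.1, (props t ht).2.1] at h3
    linarith
  -- Step 3: f is positive on (0, η)
  have hfpos : ∀ y ∈ Ioo (0:ℝ) η, 0 < f y := by
    by_contra hcon
    push_neg at hcon
    obtain ⟨y0, hy0, hy0'⟩ := hcon
    have hy0neg : f y0 < 0 := lt_of_le_of_ne hy0' (hne y0 hy0)
    have hallneg : ∀ z ∈ Ioo (0:ℝ) η, f z < 0 := by
      intro z hz
      rcases lt_trichotomy (f z) 0 with h | h | h
      · exact h
      · exact absurd h (hne z hz)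
      · exfalso
        rcases lt_trichotomy z y0 with hzy | hzy | hzy
        · have hsub := intermediate_value_Ioo' hzy.le (hfc.continuousOn (s := Icc z y0))
          obtain ⟨w, hw, hw0⟩ := hsub (⟨hy0neg, h⟩ : (0:ℝ) ∈ Ioo (f y0) (f z))
          exact hne w ⟨hz.1.trans hw.1, hw.2.trans hy0.2⟩ hw0
        · rw [hzy] at h; linarith
        · have hsub := intermediate_value_Ioo hzy.le (hfc.continuousOn (s := Icc y0 z))
          obtain ⟨w, hw, hw0⟩ := hsub (⟨hy0neg, h⟩ : (0:ℝ) ∈ Ioo (f y0) (f z))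
          exact hne w ⟨hy0.1.trans hw.1, hw.2.trans hz.2⟩ hw0
    have hgrow : ∀ t : ℝ, (N:ℝ) < t → Finv (N:ℝ) < Finv t := by
      intro t ht
      have hk := key (N:ℝ) t le_rfl ht.le
      by_contra hle
      push_neg at hle
      rcases eq_or_lt_of_le hle with he | hlt
      · rw [he, intervalIntegral.integral_same] at hk; linarith
      · have hint := hIIab _ _ (hmemIoo t ht.le) (hmemIoo (N:ℝ) le_rfl)
        have hpos2 : 0 < ∫ u in Finv t..Finv (N:ℝ), -(1 / f u) := by
          apply intervalIntegral.intervalIntegral_pos_of_pos_on hint.neg _ hlt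
          intro x hx
          have hxm : x ∈ Ioo (0:ℝ) η :=
            ⟨(hmemIoo t ht.le).1.trans hx.1, hx.2.trans (hmemIoo (N:ℝ) le_rfl).2⟩
          have hx0 := hallneg x hxm
          show 0 < -(1 / f x)
          have : 1 / f x < 0 := div_neg_of_pos_of_neg one_pos hx0
          linarith
        rw [intervalIntegral.integral_neg, lt_neg, neg_zero] at hpos2
        rw [intervalIntegral.integral_symm] at hk
        linarith
    have h1 : 0 < Finv (N:ℝ) := (props _ le_rfl).1
    have h2 := hFinv0.eventually_lt_const h1
    obtain ⟨t, hlt', hgt'⟩ := (h2.and (eventually_gt_atTop (N:ℝ))).exists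
    linarith [hgrow t hgt']
  -- Step 4: Finv is antitone on [N, ∞)
  have hanti : ∀ s t : ℝ, (N:ℝ) ≤ s → s ≤ t → Finv t ≤ Finv s := by
    intro s t hs hst
    rcases eq_or_lt_of_le hst with he | hlt
    · rw [he]
    · by_contra hcon
      push_neg at hcon
      have hk := key s t hs (hs.trans hst)
      have hpos2 : 0 < ∫ u in Finv s..Finv t, 1 / f u := by
        apply intervalIntegral.intervalIntegral_pos_of_pos_on
          (hIIab _ _ (hmemIoo s hs) (hmemIoo t (hs.trans hst))) _ hcon
        intro x hx
        have hxm : x ∈ Ioo (0:ℝ) η :=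
          ⟨(hmemIoo s hs).1.trans hx.1, hx.2.trans (hmemIoo t (hs.trans hst)).2⟩
        exact div_pos one_pos (hfpos x hxm)
      linarith
  exact construction Finv Γ N hΓ hΓpos (fun t ht => (props t ht).1) hanti
end

section
/- Let a>0, β>1, β₁,β₂∈ℝ, and suppose f(x) ~ a|x|^β (log(1/|x|))^{β₁} (log log(1/|x|))^{β₂} sgn(x) as x→0. Then with ℓ(x)=(f(x)/x^β)^{-1/(β-1)} for small x>0, one has lim_{x→0⁺} ℓ(xℓ(x))/ℓ(x)=1, and consequently F⁻¹(t) ~ (1/(a(β-1)))^{1/(β-1)} t^{-1/(β-1)} ((1/(β-1))log t)^{-β₁/(β-1)} (log log t)^{-β₂/(β-1)} as t→∞. -/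
/-!
Write `s = log x⁻¹` and `φ(s) = s ^ β₁ * (log s) ^ β₂`, so that `f x ~ a x^β φ(s)` as `x → 0⁺`.

Then `ℓ x ~ (a φ(s)) ^ (-1/(β-1))`, and since `log φ(s) = o(s)` also `log ℓ x = o(s)`. Hence
`x ℓ(x) → 0⁺` with `log (x ℓ(x))⁻¹ ~ s`; `φ` only sees `s` and `log s`, so it does not notice
the change `x ↦ x ℓ(x)`, and neither does `ℓ`.

For the inverse, `G x = (a (β-1) x^(β-1) φ(s))⁻¹` tends to `∞` with `-G' ~ 1/f`, so comparing
the integrals on `(x, δ)` with `(1 ± ε)` times `G` gives `F ~ G`. Taking logarithms in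
`t = F(F⁻¹ t) ~ G(F⁻¹ t)` yields `log (F⁻¹ t)⁻¹ ~ log t / (β-1)`, hence the asymptotics of `φ`
at `F⁻¹ t`, and solving `G(F⁻¹ t) ~ t` for `F⁻¹ t` gives the claim.
-/

open Real Filter MeasureTheory Set Topology Asymptotics intervalIntegral

section Equivalent

variable {α : Type*} {l : Filter α} {u v w : α → ℝ}

theorem Asymptotics.IsEquivalent.rpow_of_eventually_nonneg (huv : u ~[l] v)
    (hv : ∀ᶠ x in l, 0 ≤ v x) (r : ℝ) : (fun x => u x ^ r) ~[l] fun x => v x ^ r := by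
  have habs : v =ᶠ[l] fun x => |v x| := hv.mono fun x hx => (abs_of_nonneg hx).symm
  refine ((huv.congr_right habs).rpow (fun x => abs_nonneg (v x)) (r := r)).congr_right ?_
  filter_upwards [habs] with x hx
  simp only [Pi.pow_apply, ← hx]

theorem Asymptotics.IsEquivalent.isLittleO_log (huv : u ~[l] v) (hv : ∀ᶠ x in l, 0 < v x)
    (hvw : (fun x => Real.log (v x)) =o[l] w) (hw : Tendsto w l atTop) :
    (fun x => Real.log (u x)) =o[l] w := by
  have hu : ∀ᶠ x in l, 0 < u x := huv.eventually_pos hv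
  have hratio : Tendsto (fun x => Real.log (u x / v x)) l (𝓝 0) := by
    simpa using
      ((isEquivalent_iff_tendsto_one (hv.mono fun x hx => hx.ne')).1 huv).log one_ne_zero
  have hsmall : (fun x => Real.log (u x / v x)) =o[l] w :=
    hratio.isBigO_one ℝ |>.trans_isLittleO <|
      (isLittleO_one_left_iff ℝ).2 (tendsto_norm_atTop_atTop.comp hw)
  refine (hsmall.add hvw).congr' ?_ EventuallyEq.rfl
  filter_upwards [hu, hv] with x hux hvx
  rw [log_div hux.ne' hvx.ne', sub_add_cancel]

end Equivalent

/-- `powLogPow β₁ β₂ (log x⁻¹)` is the factor `(log 1/x)^β₁ (log log 1/x)^β₂` of `f`. -/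
noncomputable def powLogPow (p q s : ℝ) : ℝ := s ^ p * log s ^ q

theorem powLogPow_pos {p q s : ℝ} (hs : 1 < s) : 0 < powLogPow p q s :=
  mul_pos (rpow_pos_of_pos (by linarith) p) (rpow_pos_of_pos (log_pos hs) q)

theorem isLittleO_log_powLogPow (p q : ℝ) :
    (fun s => log (powLogPow p q s)) =o[atTop] id := by
  have hloglog : (fun s => log (log s)) =o[atTop] id :=
    (isLittleO_log_id_atTop.comp_tendsto tendsto_log_atTop).trans isLittleO_log_id_atTop
  refine ((isLittleO_log_id_atTop.const_mul_left p).add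
    (hloglog.const_mul_left q)).congr' ?_ EventuallyEq.rfl
  filter_upwards [eventually_gt_atTop 1] with s hs
  have hlog : 0 < log s := log_pos hs
  rw [powLogPow, log_mul (rpow_pos_of_pos (by linarith) p).ne' (rpow_pos_of_pos hlog q).ne',
    log_rpow (by linarith), log_rpow hlog]

theorem Asymptotics.IsEquivalent.powLogPow {α : Type*} {l : Filter α} {s s' : α → ℝ}
    (h : s' ~[l] s) (hs : Tendsto s l atTop) (p q : ℝ) :
    (fun x => powLogPow p q (s' x)) ~[l] fun x => powLogPow p q (s x) :=
  (h.rpow_of_eventually_nonneg (hs.eventually_ge_atTop 0) p).mul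
    ((h.log hs).rpow_of_eventually_nonneg
      ((tendsto_log_atTop.comp hs).eventually_ge_atTop 0) q)

theorem hasDerivAt_powLogPow (p q : ℝ) {s : ℝ} (hs : 1 < s) :
    HasDerivAt (powLogPow p q) (powLogPow p q s * (p / s + q / (s * log s))) s := by
  have hs0 : s ≠ 0 := by positivity
  have hlog : log s ≠ 0 := (log_pos hs).ne'
  refine ((hasDerivAt_rpow_const (p := p) (Or.inl hs0)).mul
    ((hasDerivAt_log hs0).rpow_const (p := q) (Or.inl hlog))).congr_deriv ?_
  rw [powLogPow, rpow_sub_one hs0, rpow_sub_one hlog]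
  field_simp

theorem tendsto_log_inv_nhdsGT_zero : Tendsto (fun x : ℝ => log x⁻¹) (𝓝[>] 0) atTop :=
  tendsto_log_atTop.comp tendsto_inv_nhdsGT_zero

theorem isLittleO_log_const_mul_powLogPow {C : ℝ} (hC : C ≠ 0) (p q : ℝ) :
    (fun x => log (C * powLogPow p q (log x⁻¹))) =o[𝓝[>] 0] fun x => log x⁻¹ := by
  have hs := tendsto_log_inv_nhdsGT_zero
  refine ((isLittleO_const_left (c := log C).2
    (Or.inr (tendsto_norm_atTop_atTop.comp hs))).add
    ((isLittleO_log_powLogPow p q).comp_tendsto hs)).congr' ?_ EventuallyEq.rfl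
  filter_upwards [hs.eventually_gt_atTop 1] with x hx
  exact (log_mul hC (powLogPow_pos hx).ne').symm

theorem isEquivalent_log_inv_mul_of_isLittleO {ℓ : ℝ → ℝ} (hℓ : ∀ᶠ x in 𝓝[>] 0, 0 < ℓ x)
    (hlog : (fun x => log (ℓ x)) =o[𝓝[>] 0] fun x => log x⁻¹) :
    (fun x => log (x * ℓ x)⁻¹) ~[𝓝[>] 0] fun x => log x⁻¹ := by
  refine hlog.neg_left.congr' ?_ EventuallyEq.rfl
  filter_upwards [self_mem_nhdsWithin, hℓ] with x (hx : 0 < x) hℓx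
  rw [Pi.sub_apply, mul_inv, log_mul (inv_ne_zero hx.ne') (inv_ne_zero hℓx.ne'), log_inv (ℓ x)]
  ring

theorem tendsto_mul_nhdsGT_zero_of_isLittleO {ℓ : ℝ → ℝ} (hℓ : ∀ᶠ x in 𝓝[>] 0, 0 < ℓ x)
    (hlog : (fun x => log (ℓ x)) =o[𝓝[>] 0] fun x => log x⁻¹) :
    Tendsto (fun x => x * ℓ x) (𝓝[>] 0) (𝓝[>] 0) := by
  have h := (isEquivalent_log_inv_mul_of_isLittleO hℓ hlog).symm.tendsto_atTop
    tendsto_log_inv_nhdsGT_zero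
  refine (tendsto_exp_atBot_nhdsGT.comp (tendsto_neg_atTop_atBot.comp h)).congr' ?_
  filter_upwards [self_mem_nhdsWithin, hℓ] with x (hx : 0 < x) hℓx
  simp only [Function.comp_apply, log_inv, neg_neg]
  exact exp_log (mul_pos hx hℓx)

theorem tendsto_comp_mul_self_div_self {ℓ : ℝ → ℝ} {C p q r : ℝ} (hC : 0 < C)
    (hℓ : ℓ ~[𝓝[>] 0] fun x => (C * powLogPow p q (log x⁻¹)) ^ r) :
    Tendsto (fun x => ℓ (x * ℓ x) / ℓ x) (𝓝[>] 0) (𝓝 1) := by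
  have hs := tendsto_log_inv_nhdsGT_zero
  have hbase : ∀ᶠ x in 𝓝[>] 0, 0 < C * powLogPow p q (log x⁻¹) :=
    (hs.eventually_gt_atTop 1).mono fun x hx => mul_pos hC (powLogPow_pos hx)
  have hℓpos : ∀ᶠ x in 𝓝[>] 0, 0 < ℓ x :=
    hℓ.eventually_pos (hbase.mono fun x hx => rpow_pos_of_pos hx r)
  have hlogℓ : (fun x => log (ℓ x)) =o[𝓝[>] 0] fun x => log x⁻¹ := by
    refine hℓ.isLittleO_log (hbase.mono fun x hx => rpow_pos_of_pos hx r) ?_ hs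
    refine ((isLittleO_log_const_mul_powLogPow hC.ne' p q).const_mul_left r).congr' ?_
      EventuallyEq.rfl
    filter_upwards [hbase] with x hx
    rw [log_rpow hx]
  have hlogmul := isEquivalent_log_inv_mul_of_isLittleO hℓpos hlogℓ
  have hΦ : (fun x => (C * powLogPow p q (log (x * ℓ x)⁻¹)) ^ r) ~[𝓝[>] 0]
      fun x => (C * powLogPow p q (log x⁻¹)) ^ r :=
    (IsEquivalent.refl.mul (hlogmul.powLogPow hs p q)).rpow_of_eventually_nonneg
      (hbase.mono fun x hx => hx.le) r
  have hcomp : (fun x => ℓ (x * ℓ x)) ~[𝓝[>] 0] ℓ :=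
    ((hℓ.comp_tendsto (tendsto_mul_nhdsGT_zero_of_isLittleO hℓpos hlogℓ)).trans hΦ).trans
      hℓ.symm
  exact (isEquivalent_iff_tendsto_one (hℓpos.mono fun x hx => hx.ne')).1 hcomp

/-- The one-sided fundamental theorem of calculus applied to `-(1 ± ε) * G` needs no
integrability of `g`. -/
theorem abs_intervalIntegral_sub_le_of_hasDerivAt {ψ g G : ℝ → ℝ} {x δ ε : ℝ} (hxδ : x ≤ δ)
    (hψ : IntervalIntegrable ψ volume x δ) (hG : ∀ y ∈ Icc x δ, HasDerivAt G (-g y) y)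
    (hψg : ∀ y ∈ Icc x δ, |ψ y - g y| ≤ ε * g y) :
    |(∫ y in x..δ, ψ y) - (G x - G δ)| ≤ ε * (G x - G δ) := by
  have hcont : ContinuousOn G (Icc x δ) := fun y hy => (hG y hy).continuousAt.continuousWithinAt
  have hint : IntegrableOn ψ (Icc x δ) := (intervalIntegrable_iff_integrableOn_Icc_of_le hxδ).1 hψ
  have hderiv (k : ℝ) :
      ∀ y ∈ Ioo x δ, HasDerivWithinAt (fun z => -(k * G z)) (k * g y) (Ioi y) y :=
    fun y hy => ((hG y (Ioo_subset_Icc_self hy)).const_mul k).neg.hasDerivWithinAt.congr_deriv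
      (by ring)
  have hlow := sub_le_integral_of_hasDeriv_right_of_le hxδ (hcont.const_mul (1 - ε)).neg
    (hderiv (1 - ε)) hint fun y hy => by
      linarith [(abs_le.1 (hψg y (Ioo_subset_Icc_self hy))).1]
  have hup := integral_le_sub_of_hasDeriv_right_of_le hxδ (hcont.const_mul (1 + ε)).neg
    (hderiv (1 + ε)) hint fun y hy => by
      linarith [(abs_le.1 (hψg y (Ioo_subset_Icc_self hy))).2]
  simp only [Pi.neg_apply] at hlow hup
  rw [abs_le]
  constructor <;> linarith

theorem isEquivalent_intervalIntegral_of_hasDerivAt {a b : ℝ} {ψ g G : ℝ → ℝ}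
    (hψ : ∀ᶠ x in 𝓝[>] a, IntervalIntegrable ψ volume x b)
    (hG : ∀ᶠ x in 𝓝[>] a, HasDerivAt G (-g x) x) (hg : ∀ᶠ x in 𝓝[>] a, 0 ≤ g x)
    (hψg : ψ ~[𝓝[>] a] g) (hGtop : Tendsto G (𝓝[>] a) atTop) :
    (fun x => ∫ u in x..b, ψ u) ~[𝓝[>] a] G := by
  refine IsLittleO.of_bound fun ε hε => ?_
  obtain ⟨δ₀, hδ₀, hsub⟩ := mem_nhdsGT_iff_exists_Ioo_subset.1
    (hψ.and (hG.and (hg.and (hψg.isLittleO.bound (half_pos hε)))))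
  obtain ⟨δ, hδ⟩ := nonempty_Ioo.2 (show a < δ₀ from hδ₀)
  set C := (∫ u in δ..b, ψ u) - G δ with hC
  filter_upwards [Ioo_mem_nhdsGT hδ.1, hGtop.eventually_ge_atTop (2 * |C| / ε + |G δ|)]
    with x hx hGx
  have hIcc (y) (hy : y ∈ Icc x δ) := hsub ⟨hx.1.trans_le hy.1, hy.2.trans_lt hδ.2⟩
  have hloc := abs_intervalIntegral_sub_le_of_hasDerivAt hx.2.le
    ((hsub ⟨hx.1, hx.2.trans hδ.2⟩).1.trans (hsub hδ).1.symm) (fun y hy => (hIcc y hy).2.1)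
    fun y hy => by
      obtain ⟨-, -, hgy, hbound⟩ := hIcc y hy
      simpa [norm_eq_abs, abs_of_nonneg hgy] using hbound
  have hsplit : (∫ u in x..b, ψ u) = (∫ u in x..δ, ψ u) + ∫ u in δ..b, ψ u :=
    (integral_add_adjacent_intervals
      ((hsub ⟨hx.1, hx.2.trans hδ.2⟩).1.trans (hsub hδ).1.symm) (hsub hδ).1).symm
  have hGδ : ε / 2 * (2 * |C| / ε + |G δ|) = |C| + ε / 2 * |G δ| := by
    field_simp
  have hGx' := mul_le_mul_of_nonneg_left hGx (half_pos hε).le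
  rw [hGδ] at hGx'
  rw [Pi.sub_apply, norm_eq_abs, norm_eq_abs,
    abs_of_nonneg ((by positivity : (0 : ℝ) ≤ _).trans hGx), hsplit]
  calc |(∫ u in x..δ, ψ u) + (∫ u in δ..b, ψ u) - G x|
      = |((∫ u in x..δ, ψ u) - (G x - G δ)) + C| := by rw [hC]; ring_nf
    _ ≤ |(∫ u in x..δ, ψ u) - (G x - G δ)| + |C| := abs_add_le _ _
    _ ≤ ε / 2 * (G x - G δ) + |C| := by gcongr
    _ ≤ ε * G x := by nlinarith [neg_abs_le (G δ)]

section RegularVariation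

variable {K γ : ℝ} (p q : ℝ)

theorem isEquivalent_log_rpow_mul_powLogPow (hK : 0 < K) (hγ : γ ≠ 0) :
    (fun x => log (K * x ^ γ * powLogPow p q (log x⁻¹))) ~[𝓝[>] 0]
      fun x => -γ * log x⁻¹ := by
  have hs := tendsto_log_inv_nhdsGT_zero
  refine ((isLittleO_log_const_mul_powLogPow hK.ne' p q).trans_isBigO
    (isBigO_self_const_mul (neg_ne_zero.2 hγ) _ _)).congr' ?_ EventuallyEq.rfl
  filter_upwards [self_mem_nhdsWithin, hs.eventually_gt_atTop 1] with x (hx : 0 < x) hs1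
  rw [Pi.sub_apply, mul_right_comm,
    log_mul (mul_pos hK (powLogPow_pos hs1)).ne' (rpow_pos_of_pos hx γ).ne', log_rpow hx, log_inv]
  ring

theorem tendsto_rpow_mul_powLogPow_nhdsGT_zero (hK : 0 < K) (hγ : 0 < γ) :
    Tendsto (fun x => K * x ^ γ * powLogPow p q (log x⁻¹)) (𝓝[>] 0) (𝓝[>] 0) := by
  have hs := tendsto_log_inv_nhdsGT_zero
  have hlog := (isEquivalent_log_rpow_mul_powLogPow p q hK hγ.ne').symm.tendsto_atBot
    (hs.const_mul_atTop_of_neg (neg_neg_of_pos hγ))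
  refine (tendsto_exp_atBot_nhdsGT.comp hlog).congr' ?_
  filter_upwards [self_mem_nhdsWithin, hs.eventually_gt_atTop 1] with x (hx : 0 < x) hs1
  exact exp_log (by have := powLogPow_pos (p := p) (q := q) hs1; positivity)

theorem hasDerivAt_rpow_mul_powLogPow {x : ℝ} (hx : 0 < x) (hs : 1 < log x⁻¹) :
    HasDerivAt (fun y => K * y ^ γ * powLogPow p q (log y⁻¹))
      (K * x ^ γ * powLogPow p q (log x⁻¹) / x *
        (γ - p / log x⁻¹ - q / (log x⁻¹ * log (log x⁻¹)))) x := by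
  have hlogInv : HasDerivAt (fun y => log y⁻¹) (-x⁻¹) x :=
    (hasDerivAt_log hx.ne').neg.congr_of_eventuallyEq (.of_forall fun y => log_inv y)
  refine (((hasDerivAt_rpow_const (p := γ) (Or.inl hx.ne')).const_mul K).mul
    ((hasDerivAt_powLogPow p q hs).comp x hlogInv)).congr_deriv ?_
  rw [rpow_sub_one hx.ne', Function.comp_apply]
  field_simp
  ring

end RegularVariation

theorem isEquivalent_intervalIntegral_rpow_mul_powLogPow {ψ : ℝ → ℝ} {b C γ p q : ℝ}
    (hC : 0 < C) (hγ : 0 < γ) (hψ : ∀ᶠ x in 𝓝[>] 0, IntervalIntegrable ψ volume x b)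
    (hψeq : ψ ~[𝓝[>] 0] fun x => (C * x ^ (γ + 1) * powLogPow p q (log x⁻¹))⁻¹) :
    (fun x => ∫ u in x..b, ψ u) ~[𝓝[>] 0]
      fun x => (C * γ * x ^ γ * powLogPow p q (log x⁻¹))⁻¹ := by
  set R : ℝ → ℝ := fun x => C * γ * x ^ γ * powLogPow p q (log x⁻¹)
  set e : ℝ → ℝ := fun x => γ - p / log x⁻¹ - q / (log x⁻¹ * log (log x⁻¹))
  have hs := tendsto_log_inv_nhdsGT_zero
  have hnear : ∀ᶠ x in 𝓝[>] (0 : ℝ), 0 < x ∧ 1 < log x⁻¹ :=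
    eventually_mem_nhdsWithin.and (hs.eventually_gt_atTop 1)
  have hRpos : ∀ᶠ x in 𝓝[>] (0 : ℝ), 0 < R x := hnear.mono fun x ⟨hx, hs1⟩ => by
    have := powLogPow_pos (p := p) (q := q) hs1
    positivity
  have he : Tendsto e (𝓝[>] 0) (𝓝 γ) := by
    have h₁ : Tendsto (fun x => p / log x⁻¹) (𝓝[>] 0) (𝓝 0) := tendsto_const_nhds.div_atTop hs
    have h₂ : Tendsto (fun x => q / (log x⁻¹ * log (log x⁻¹))) (𝓝[>] 0) (𝓝 0) :=
      tendsto_const_nhds.div_atTop (hs.atTop_mul_atTop₀ (tendsto_log_atTop.comp hs))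
    simpa only [sub_zero] using (tendsto_const_nhds (x := γ)).sub h₁ |>.sub h₂
  refine isEquivalent_intervalIntegral_of_hasDerivAt (g := fun x => e x * (x * R x)⁻¹) hψ ?_ ?_
    ?_ (tendsto_inv_nhdsGT_zero.comp
      (tendsto_rpow_mul_powLogPow_nhdsGT_zero p q (mul_pos hC hγ) hγ))
  · filter_upwards [hnear, hRpos] with x ⟨hx, hs1⟩ hRx
    refine ((hasDerivAt_rpow_mul_powLogPow p q hx hs1).inv hRx.ne').congr_deriv ?_
    show -(R x / x * e x) / R x ^ 2 = -(e x * (x * R x)⁻¹)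
    field_simp
  · filter_upwards [hnear, hRpos, he.eventually (lt_mem_nhds hγ)] with x ⟨hx, _⟩ hRx hex
    positivity
  · refine hψeq.trans (IsEquivalent.congr_left (u := fun x => γ * (x * R x)⁻¹) ?_ ?_)
    · exact ((isEquivalent_const_iff_tendsto hγ.ne').2 he).symm.mul IsEquivalent.refl
    · filter_upwards [hnear] with x ⟨hx, hs1⟩
      have := powLogPow_pos (p := p) (q := q) hs1
      simp only [R]
      rw [rpow_add hx, rpow_one]
      field_simp

theorem mul_mul_rpow_mul_rpow_inv_rpow {K t A B γ p q : ℝ} (hK : 0 < K) (ht : 0 < t) (hA : 0 < A)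
    (hB : 0 < B) :
    ((K * t * (A ^ p * B ^ q))⁻¹) ^ (1 / γ) =
      (1 / K) ^ (1 / γ) * t ^ (-(1 / γ)) * A ^ (-(p / γ)) * B ^ (-(q / γ)) := by
  rw [inv_rpow (by positivity), mul_rpow (by positivity) (by positivity),
    mul_rpow hK.le ht.le, mul_rpow (by positivity) (by positivity), ← rpow_mul hA.le,
    ← rpow_mul hB.le, one_div K, inv_rpow hK.le, rpow_neg ht.le, rpow_neg hA.le, rpow_neg hB.le,
    mul_one_div, mul_one_div]
  simp only [mul_inv]
  ring

theorem isEquivalent_of_isEquivalent_inv_rpow_mul_powLogPow {x : ℝ → ℝ} {K γ p q : ℝ}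
    (hK : 0 < K) (hγ : 0 < γ) (hx : Tendsto x atTop (𝓝[>] 0))
    (ht : (fun t => t) ~[atTop] fun t => (K * x t ^ γ * powLogPow p q (log (x t)⁻¹))⁻¹) :
    x ~[atTop] fun t => (1 / K) ^ (1 / γ) * t ^ (-(1 / γ)) * ((1 / γ) * log t) ^ (-(p / γ)) *
      log (log t) ^ (-(q / γ)) := by
  have hs : Tendsto (fun t => log (x t)⁻¹) atTop atTop := tendsto_log_inv_nhdsGT_zero.comp hx
  have hlogt : Tendsto (fun t => (1 / γ) * log t) atTop atTop :=
    tendsto_log_atTop.const_mul_atTop (by positivity)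
  have hloglogt : Tendsto (fun t => log (log t)) atTop atTop :=
    tendsto_log_atTop.comp tendsto_log_atTop
  have hxpos : ∀ᶠ t in atTop, 0 < x t ∧ 1 < log (x t)⁻¹ :=
    (hx.eventually eventually_mem_nhdsWithin).and (hs.eventually_gt_atTop 1)
  have hlog : (fun t => log t) ~[atTop] fun t => γ * log (x t)⁻¹ := by
    refine ((ht.log (ht.tendsto_atTop tendsto_id)).trans ?_)
    refine (((isEquivalent_log_rpow_mul_powLogPow p q hK hγ.ne').comp_tendsto hx).neg.congr_left
      ?_).congr_right ?_
    · exact .of_forall fun t => (log_inv _).symm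
    · exact .of_forall fun t => by simp
  have hslog : (fun t => log (x t)⁻¹) ~[atTop] fun t => (1 / γ) * log t :=
    ((IsEquivalent.refl (u := fun _ => 1 / γ)).mul hlog).symm.congr_left
      (.of_forall fun t => by simp [hγ.ne'])
  have hloglog : (fun t => log (log (x t)⁻¹)) ~[atTop] fun t => log (log t) := by
    refine (hslog.log hlogt).trans ?_
    refine (IsEquivalent.refl.const_add_of_norm_tendsto_atTop (c := log (1 / γ))
      (tendsto_norm_atTop_atTop.comp hloglogt)).congr_left ?_
    filter_upwards [tendsto_log_atTop.eventually_gt_atTop 0] with t ht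
    rw [log_mul (by positivity) ht.ne']
  have hφ : (fun t => powLogPow p q (log (x t)⁻¹)) ~[atTop]
      fun t => ((1 / γ) * log t) ^ p * log (log t) ^ q :=
    (hslog.rpow_of_eventually_nonneg (hlogt.eventually_ge_atTop 0) p).mul
      (hloglog.rpow_of_eventually_nonneg (hloglogt.eventually_ge_atTop 0) q)
  have hxγ : (fun t => x t ^ γ) ~[atTop]
      fun t => (K * t * (((1 / γ) * log t) ^ p * log (log t) ^ q))⁻¹ := by
    refine ((IsEquivalent.refl.mul ht.symm).mul hφ).inv.congr_left ?_
    filter_upwards [hxpos] with t ⟨_, hst⟩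
    have hφpos := powLogPow_pos (p := p) (q := q) hst
    simp only [Pi.inv_apply, Pi.mul_apply]
    generalize powLogPow p q (log (x t)⁻¹) = φ at hφpos ⊢
    field_simp
  refine (hxγ.rpow_of_eventually_nonneg ?_ (1 / γ)).congr_left ?_ |>.congr_right ?_
  · filter_upwards [eventually_gt_atTop 0, hlogt.eventually_gt_atTop 0,
      hloglogt.eventually_gt_atTop 0] with t ht hA hB
    positivity
  · filter_upwards [hxpos] with t ⟨hxt, _⟩
    rw [← rpow_mul hxt.le, mul_one_div_cancel hγ.ne', rpow_one]
  · filter_upwards [eventually_gt_atTop 0, hlogt.eventually_gt_atTop 0,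
      hloglogt.eventually_gt_atTop 0] with t ht hA hB
    exact mul_mul_rpow_mul_rpow_inv_rpow hK ht hA hB

theorem isEquivalent_nhdsGT_of_tendsto_div_nhdsNE {f : ℝ → ℝ} {a β β₁ β₂ : ℝ}
    (h : Tendsto (fun x => f x / (a * |x| ^ β * log (1 / |x|) ^ β₁ *
      log (log (1 / |x|)) ^ β₂ * sign x)) (𝓝[≠] 0) (𝓝 1)) :
    f ~[𝓝[>] 0] fun x => a * x ^ β * powLogPow β₁ β₂ (log x⁻¹) := by
  refine isEquivalent_of_tendsto_one ((h.mono_left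
    (nhdsWithin_mono _ fun x hx => ne_of_gt hx)).congr' ?_)
  filter_upwards [self_mem_nhdsWithin] with x (hx : 0 < x)
  simp [abs_of_pos hx, sign_of_pos hx, powLogPow, mul_assoc]

theorem isEquivalent_div_rpow_rpow {f : ℝ → ℝ} {a β p q : ℝ} (ha : 0 < a)
    (hf : f ~[𝓝[>] 0] fun x => a * x ^ β * powLogPow p q (log x⁻¹)) (r : ℝ) :
    (fun x => (f x / x ^ β) ^ r) ~[𝓝[>] 0] fun x => (a * powLogPow p q (log x⁻¹)) ^ r := by
  have hratio : (fun x => f x / x ^ β) ~[𝓝[>] 0] fun x => a * powLogPow p q (log x⁻¹) := by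
    refine (hf.div IsEquivalent.refl).congr_right ?_
    filter_upwards [self_mem_nhdsWithin] with x (hx : 0 < x)
    simp only [Pi.div_apply]
    field_simp [(rpow_pos_of_pos hx β).ne']
  refine hratio.rpow_of_eventually_nonneg ?_ r
  filter_upwards [tendsto_log_inv_nhdsGT_zero.eventually_gt_atTop 1] with x hx
  exact (mul_pos ha (powLogPow_pos hx)).le

/-- For `f(x) ~ a|x|^β (log(1/|x|))^{β₁} (loglog(1/|x|))^{β₂} sgn(x)`
as `x → 0`, the function `ℓ(x) = (f(x)/x^β)^{-1/(β-1)}` satisfies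
`ℓ(xℓ(x))/ℓ(x) → 1` as `x → 0⁺`, and consequently
`F⁻¹(t) ~ (1/(a(β-1)))^{1/(β-1)} t^{-1/(β-1)} ((1/(β-1)) log t)^{-β₁/(β-1)}
(loglog t)^{-β₂/(β-1)}` as `t → ∞`. -/
theorem stmt16 (f Finv ℓ : ℝ → ℝ) (a β β₁ β₂ : ℝ) (ha : 0 < a) (hβ : 1 < β)
    (hfc : ContinuousOn f (Ioi 0)) (hfpos : ∀ x > 0, 0 < f x)
    (hasym : Tendsto (fun x => f x /
        (a * |x| ^ β * (Real.log (1 / |x|)) ^ β₁ *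
          (Real.log (Real.log (1 / |x|))) ^ β₂ * Real.sign x))
      (𝓝[≠] 0) (𝓝 1))
    (hℓ : ∀ x > 0, ℓ x = (f x / x ^ β) ^ (-(1 / (β - 1))))
    (hFinv_pos : ∀ᶠ t in atTop, 0 < Finv t)
    (hFinv : ∀ᶠ t in atTop, (∫ u in Finv t..1, 1 / f u) = t)
    (hFinv0 : Tendsto Finv atTop (𝓝 0)) :
    Tendsto (fun x => ℓ (x * ℓ x) / ℓ x) (𝓝[>] 0) (𝓝 1) ∧
    Tendsto (fun t => Finv t /
        ((1 / (a * (β - 1))) ^ (1 / (β - 1)) * t ^ (-(1 / (β - 1))) *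
          ((1 / (β - 1)) * Real.log t) ^ (-(β₁ / (β - 1))) *
          (Real.log (Real.log t)) ^ (-(β₂ / (β - 1))))) atTop (𝓝 1) := by
  have hβ1 : 0 < β - 1 := sub_pos.2 hβ
  have hf := isEquivalent_nhdsGT_of_tendsto_div_nhdsNE hasym
  refine ⟨tendsto_comp_mul_self_div_self ha ((isEquivalent_div_rpow_rpow ha hf _).congr_left
    (eventually_mem_nhdsWithin.mono fun x hx => (hℓ x hx).symm)), ?_⟩
  have hFinv_lim : Tendsto Finv atTop (𝓝[>] 0) := tendsto_nhdsWithin_iff.2 ⟨hFinv0, hFinv_pos⟩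
  have hψ : ∀ᶠ x in 𝓝[>] 0, IntervalIntegrable (fun u => 1 / f u) volume x 1 := by
    filter_upwards [self_mem_nhdsWithin] with x (hx : 0 < x)
    exact ((continuousOn_const.div hfc fun y hy => (hfpos y hy).ne').mono
      fun y hy => lt_of_lt_of_le (lt_min hx one_pos) hy.1).intervalIntegrable
  have hψequiv : (fun u => 1 / f u) ~[𝓝[>] 0]
      fun x => (a * x ^ (β - 1 + 1) * powLogPow β₁ β₂ (log x⁻¹))⁻¹ := by
    rw [sub_add_cancel]
    exact hf.inv.congr_left (.of_forall fun x => (one_div (f x)).symm)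
  have hFinv_equiv := isEquivalent_of_isEquivalent_inv_rpow_mul_powLogPow (mul_pos ha hβ1) hβ1
    hFinv_lim (((isEquivalent_intervalIntegral_rpow_mul_powLogPow ha hβ1 hψ hψequiv).comp_tendsto
      hFinv_lim).congr_left hFinv)
  exact (isEquivalent_iff_tendsto_one
    (hFinv_equiv.symm.eventually_pos hFinv_pos |>.mono fun t ht => ht.ne')).1 hFinv_equiv
end
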